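/- arXiv:2101.02918 — 6 statements merged into one kernel-verified Lean document; each statement's English description precedes it below -/
import Mathlib

section
/- Let K be a field equipped with an additive ultrametric valuation v, let d ≥ 1, and let α, β : Fin d → K be injective families (the roots of two monic separable degree-d polynomials that split over K). Suppose that for every weight function k : Fin d → Fin d → ℕ and every n ∈ ℕ, the valuations of the n-th coefficients of the symmetrized generating polynomials F_{α,k} and F_{β,k} agree: v((F_{α,k}).coeff n) = v((F_{β,k}).coeff n). Then there exists a permutation σ of Fin d such that v(α i − α j) = v(β (σ i) − β (σ j)) for all i, j; that is, the tropical invariants determine the marked tree filtration of the roots up to isomorphism. -/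
open Polynomial Finset

namespace TropNP

variable {K : Type*} [Field K] {v : K → WithTop ℝ}

section VLemmas
variable (hv0 : ∀ x : K, v x = ⊤ ↔ x = 0)
  (hvmul : ∀ x y : K, v (x * y) = v x + v y)
  (hvadd : ∀ x y : K, min (v x) (v y) ≤ v (x + y))

include hv0 hvmul in
lemma v_one : v 1 = 0 := by
  have h := hvmul 1 1
  rw [one_mul] at h
  cases hv1 : v (1 : K) with
  | top => exact absurd ((hv0 1).mp hv1) one_ne_zero
  | coe r =>
    rw [hv1, ← WithTop.coe_add, WithTop.coe_eq_coe] at h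
    have : r = 0 := by linarith
    simp [this]

include hv0 hvmul in
lemma v_neg (x : K) : v (-x) = v x := by
  have hm1 : v (-1 : K) = 0 := by
    have h := hvmul (-1) (-1)
    rw [neg_mul_neg, one_mul, v_one hv0 hvmul] at h
    cases hv1 : v (-1 : K) with
    | top => rw [hv1] at h; simp at h
    | coe r =>
      rw [hv1, ← WithTop.coe_add] at h
      have h2 : (0:ℝ) = r + r := by exact_mod_cast h
      have : r = 0 := by linarith
      simp [this]
  calc v (-x) = v ((-1) * x) := by ring_nf
    _ = 0 + v x := by rw [hvmul, hm1]
    _ = v x := by rw [zero_add]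

include hv0 hvmul hvadd in
lemma v_add_eq_left {x y : K} (hxy : v x < v y) : v (x + y) = v x := by
  refine le_antisymm ?_ ?_
  · have h2 : v x = v ((x + y) + (-y)) := by ring_nf
    have h3 := hvadd (x + y) (-y)
    rw [← h2, v_neg hv0 hvmul] at h3
    by_contra hlt
    push_neg at hlt
    have : v x < min (v (x + y)) (v y) := lt_min hlt hxy
    exact absurd h3 (not_le.mpr this)
  · have := hvadd x y
    rwa [min_eq_left hxy.le] at this

include hv0 hvadd in
lemma v_sum_le {ι : Type*} (s : Finset ι) (f : ι → K) (t : WithTop ℝ)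
    (H : ∀ i ∈ s, t ≤ v (f i)) : t ≤ v (∑ i ∈ s, f i) := by
  classical
  induction s using Finset.cons_induction with
  | empty => simp [(hv0 0).mpr rfl]
  | cons i s hi ih =>
    rw [Finset.sum_cons]
    refine le_trans (le_min (H i (Finset.mem_cons_self i s)) ?_) (hvadd _ _)
    exact ih fun j hj => H j (Finset.mem_cons_of_mem hj)

include hv0 hvadd in
lemma v_sum_lt {ι : Type*} (s : Finset ι) (f : ι → K) (t : WithTop ℝ) (ht : t ≠ ⊤)
    (H : ∀ i ∈ s, t < v (f i)) : t < v (∑ i ∈ s, f i) := by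
  classical
  induction s using Finset.cons_induction with
  | empty => simpa [(hv0 0).mpr rfl] using lt_top_iff_ne_top.mpr ht
  | cons i s hi ih =>
    rw [Finset.sum_cons]
    refine lt_of_lt_of_le (lt_min (H i (Finset.mem_cons_self i s)) ?_) (hvadd _ _)
    exact ih fun j hj => H j (Finset.mem_cons_of_mem hj)

include hv0 hvmul hvadd in
lemma v_sum_eq {ι : Type*} [DecidableEq ι] (s : Finset ι) (f : ι → K) (i₀ : ι) (hi₀ : i₀ ∈ s)
    (t : WithTop ℝ) (ht : t ≠ ⊤) (h₀ : v (f i₀) = t)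
    (H : ∀ i ∈ s, i ≠ i₀ → t < v (f i)) : v (∑ i ∈ s, f i) = t := by
  rw [← Finset.add_sum_erase _ f hi₀]
  have hrest : v (f i₀) < v (∑ i ∈ s.erase i₀, f i) := by
    rw [h₀]
    exact v_sum_lt hv0 hvadd _ _ _ ht fun j hj =>
      H j (Finset.mem_of_mem_erase hj) (Finset.ne_of_mem_erase hj)
  rw [v_add_eq_left hv0 hvmul hvadd hrest, h₀]

include hv0 hvmul in
lemma v_prod_coe {ι : Type*} (s : Finset ι) (f : ι → K) (g : ι → ℝ)
    (H : ∀ i ∈ s, v (f i) = ↑(g i)) : v (∏ i ∈ s, f i) = ↑(∑ i ∈ s, g i) := by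
  classical
  induction s using Finset.cons_induction with
  | empty => simpa using v_one hv0 hvmul
  | cons i s hi ih =>
    rw [Finset.prod_cons, Finset.sum_cons, hvmul,
      H i (Finset.mem_cons_self i s), ih (fun j hj => H j (Finset.mem_cons_of_mem hj)),
      ← WithTop.coe_add]

include hv0 hvmul in
lemma v_pow_coe (x : K) (a : ℝ) (hx : v x = ↑a) (n : ℕ) : v (x ^ n) = ↑(n * a) := by
  induction n with
  | zero => simpa using v_one hv0 hvmul
  | succ n ih =>
    rw [pow_succ, hvmul, ih, hx, ← WithTop.coe_add, WithTop.coe_eq_coe]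
    push_cast
    ring

end VLemmas


lemma strictMono_fin_le {m : ℕ} {f : Fin m → ℕ} (hf : StrictMono f) (j : Fin m) :
    (j : ℕ) ≤ f j := by
  suffices h : ∀ n : ℕ, ∀ j : Fin m, (j : ℕ) = n → n ≤ f j from h _ j rfl
  intro n
  induction n with
  | zero => intro j _; exact Nat.zero_le _
  | succ n ih =>
    intro j hj
    have hjm : n < m := by have := j.isLt; omega
    have hpred : (⟨n, hjm⟩ : Fin m) < j := by
      rw [Fin.lt_iff_val_lt_val]; simp; omega
    have h1 := ih ⟨n, hjm⟩ rfl
    have h2 := hf hpred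
    omega

lemma sum_over_subset {N : ℕ} (w : ℕ → ℝ) {m : ℕ} (t : Finset (Fin N)) (ht : t.card = m) :
    ∑ i ∈ t, w (i : ℕ) = ∑ j : Fin m, w (((t.orderIsoOfFin ht j : {x // x ∈ t}) : Fin N) : ℕ) := by
  rw [← Finset.sum_coe_sort t (fun i => w (i:ℕ))]
  exact (Equiv.sum_comp (t.orderIsoOfFin ht).toEquiv
    (fun x : {x // x ∈ t} => w ((x : Fin N) : ℕ))).symm

lemma orderIso_strictMono {N m : ℕ} (t : Finset (Fin N)) (ht : t.card = m) :
    StrictMono (fun j : Fin m => (((t.orderIsoOfFin ht j : {x // x ∈ t}) : Fin N) : ℕ)) := by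
  intro a b hab
  have h := (t.orderIsoOfFin ht).strictMono hab
  exact Fin.lt_iff_val_lt_val.mp (Subtype.coe_lt_coe.mpr h)

lemma sum_subset_ge {N : ℕ} (w : ℕ → ℝ) (hw : Monotone w) {m : ℕ}
    (t : Finset (Fin N)) (ht : t.card = m) :
    ∑ n ∈ range m, w n ≤ ∑ i ∈ t, w (i : ℕ) := by
  rw [sum_over_subset w t ht, ← Fin.sum_univ_eq_sum_range]
  refine Finset.sum_le_sum fun j _ => hw ?_
  exact strictMono_fin_le (orderIso_strictMono t ht) j

lemma sum_subset_gt {N : ℕ} (w : ℕ → ℝ) (hw : Monotone w) {m : ℕ} (hm0 : 0 < m)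
    (t : Finset (Fin N)) (ht : t.card = m) (x : Fin N) (hx : x ∈ t) (hxm : m ≤ (x : ℕ))
    (hbr : w (m - 1) < w m) :
    ∑ n ∈ range m, w n < ∑ i ∈ t, w (i : ℕ) := by
  rw [sum_over_subset w t ht, ← Fin.sum_univ_eq_sum_range]
  set f := fun j : Fin m => (((t.orderIsoOfFin ht j : {x // x ∈ t}) : Fin N) : ℕ) with hf
  have hsm : StrictMono f := orderIso_strictMono t ht
  set j₀ := (t.orderIsoOfFin ht).symm ⟨x, hx⟩ with hj₀
  refine Finset.sum_lt_sum (fun j _ => hw (strictMono_fin_le hsm j)) ⟨j₀, Finset.mem_univ _, ?_⟩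
  have hfj₀ : f j₀ = (x : ℕ) := by
    simp only [hf, hj₀, OrderIso.apply_symm_apply]
  show w (j₀ : ℕ) < w (f j₀)
  rw [hfj₀]
  calc w (j₀ : ℕ) ≤ w (m - 1) := hw (by have := j₀.isLt; omega)
    _ < w m := hbr
    _ ≤ w (x : ℕ) := hw hxm


section NP
variable (hv0 : ∀ x : K, v x = ⊤ ↔ x = 0)
  (hvmul : ∀ x y : K, v (x * y) = v x + v y)
  (hvadd : ∀ x y : K, min (v x) (v y) ≤ v (x + y))

lemma coeff_eq_esymm {N : ℕ} (r : Fin N → K) {m : ℕ} (hm : m ≤ N) :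
    (∏ i, (X - C (r i))).coeff (N - m)
      = ∑ t ∈ Finset.powersetCard m (univ : Finset (Fin N)), ∏ i ∈ t, (-(r i)) := by
  have h1 : (∏ i, (X - C (r i))) = ∏ i, (X + C (-(r i))) := by
    refine Finset.prod_congr rfl fun i _ => ?_
    rw [sub_eq_add_neg, ← C_neg]
  rw [h1]
  have hcard : (univ : Finset (Fin N)).card = N := by simp
  have h2 := Finset.prod_X_add_C_coeff (univ : Finset (Fin N)) (fun i => -(r i))
    (k := N - m) (by rw [hcard]; omega)
  rw [h2]
  have h3 : #(univ : Finset (Fin N)) - (N - m) = m := by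
    simp only [Finset.card_univ, Fintype.card_fin]
    omega
  rw [h3]

include hv0 hvmul in
lemma v_term_eq {N : ℕ} (r : Fin N → K) (w : ℕ → ℝ)
    (hr : ∀ i : Fin N, v (r i) = ↑(w (i : ℕ))) (t : Finset (Fin N)) :
    v (∏ i ∈ t, (-(r i))) = ↑(∑ i ∈ t, w (i : ℕ)) :=
  v_prod_coe hv0 hvmul _ _ _ fun i _ => by rw [v_neg hv0 hvmul, hr i]

include hv0 hvmul hvadd in
lemma coeff_val_ge {N : ℕ} (r : Fin N → K) (w : ℕ → ℝ) (hw : Monotone w)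
    (hr : ∀ i : Fin N, v (r i) = ↑(w (i : ℕ))) {m : ℕ} (hm : m ≤ N) :
    ↑(∑ n ∈ range m, w n) ≤ v ((∏ i, (X - C (r i))).coeff (N - m)) := by
  rw [coeff_eq_esymm r hm]
  refine v_sum_le hv0 hvadd _ _ _ fun t ht => ?_
  rw [v_term_eq hv0 hvmul r w hr t, WithTop.coe_le_coe]
  exact sum_subset_ge w hw t (Finset.mem_powersetCard.mp ht).2

include hv0 hvmul hvadd in
lemma coeff_val_eq {N : ℕ} (r : Fin N → K) (w : ℕ → ℝ) (hw : Monotone w)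
    (hr : ∀ i : Fin N, v (r i) = ↑(w (i : ℕ))) {m : ℕ} (hm : m ≤ N)
    (hbp : m = 0 ∨ m = N ∨ w (m - 1) < w m) :
    v ((∏ i, (X - C (r i))).coeff (N - m)) = ↑(∑ n ∈ range m, w n) := by
  classical
  rw [coeff_eq_esymm r hm]
  have hlt : ∀ x : ℕ, x ∈ range m → x < N := fun x hx => by
    have := Finset.mem_range.mp hx; omega
  set t₀ : Finset (Fin N) := Finset.attachFin (range m) hlt with ht₀def
  have ht₀card : t₀.card = m := by rw [ht₀def, Finset.card_attachFin, Finset.card_range]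
  have ht₀mem : t₀ ∈ Finset.powersetCard m (univ : Finset (Fin N)) :=
    Finset.mem_powersetCard.mpr ⟨Finset.subset_univ _, ht₀card⟩
  have ht₀sum : ∑ i ∈ t₀, w (i : ℕ) = ∑ n ∈ range m, w n := by
    refine Finset.sum_bij (fun (i : Fin N) (_ : i ∈ t₀) => (i : ℕ)) ?_ ?_ ?_ ?_
    · intro a ha
      rw [ht₀def, Finset.mem_attachFin] at ha
      exact ha
    · intro a _ b _ hab
      exact Fin.val_injective hab
    · intro n hn
      exact ⟨⟨n, hlt n hn⟩, by rw [ht₀def, Finset.mem_attachFin]; exact hn, rfl⟩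
    · intro a _; rfl
  refine v_sum_eq hv0 hvmul hvadd _ _ t₀ ht₀mem _ (WithTop.coe_ne_top) ?_ ?_
  · rw [v_term_eq hv0 hvmul r w hr t₀, ht₀sum]
  · intro t htmem htne
    have htcard := (Finset.mem_powersetCard.mp htmem).2
    rw [v_term_eq hv0 hvmul r w hr t, WithTop.coe_lt_coe]
    -- find an element of t with value ≥ m
    have hx : ∃ x ∈ t, m ≤ (x : ℕ) := by
      by_contra hno
      push_neg at hno
      have hsub : t ⊆ t₀ := fun x hx => by
        rw [ht₀def, Finset.mem_attachFin, Finset.mem_range]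
        exact hno x hx
      exact htne (Finset.eq_of_subset_of_card_le hsub (by omega))
    obtain ⟨x, hxt, hxm⟩ := hx
    rcases hbp with h0 | hN | hbr
    · exfalso
      apply htne
      rw [Finset.card_eq_zero.mp (by omega : t.card = 0)]
      exact (Finset.card_eq_zero.mp (by omega : t₀.card = 0)).symm
    · exfalso
      apply htne
      have h1 : t = univ := Finset.eq_univ_of_card t (by simp [htcard, hN])
      have h2 : t₀ = univ := Finset.eq_univ_of_card t₀ (by simp [ht₀card, hN])
      rw [h1, h2]
    · have hm0 : 0 < m := by
        rcases Nat.eq_zero_or_pos m with h | h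
        · exfalso; rw [h] at hbr; simp at hbr
        · exact h
      exact sum_subset_gt w hw hm0 t htcard x hxt hxm hbr

end NP

end TropNP

namespace TropD

/-- partial sums -/
noncomputable def S (w : ℕ → ℝ) (m : ℕ) : ℝ := ∑ n ∈ Finset.range m, w n

lemma S_Ico {w : ℕ → ℝ} {p q : ℕ} (h : p ≤ q) :
    S w q - S w p = ∑ i ∈ Finset.Ico p q, w i := by
  rw [S, S, ← Finset.sum_Ico_eq_sub _ h]

lemma S_const {w : ℕ → ℝ} {p q : ℕ} (h : p ≤ q) (lam : ℝ)
    (hc : ∀ i, p ≤ i → i < q → w i = lam) :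
    S w q - S w p = ((q : ℝ) - p) * lam := by
  rw [S_Ico h]
  calc ∑ i ∈ Finset.Ico p q, w i = ∑ _i ∈ Finset.Ico p q, lam :=
        Finset.sum_congr rfl (fun i hi => by
          rw [Finset.mem_Ico] at hi; exact hc i hi.1 hi.2)
    _ = ((q : ℝ) - p) * lam := by
        rw [Finset.sum_const, Nat.card_Ico, nsmul_eq_mul, Nat.cast_sub h]

lemma chord {w : ℕ → ℝ} (hw : Monotone w) {p m q : ℕ} (hpm : p ≤ m) (hmq : m ≤ q) :
    ((q : ℝ) - m) * (S w m - S w p) ≤ ((m : ℝ) - p) * (S w q - S w m) := by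
  rw [S_Ico hpm, S_Ico hmq]
  have key : ∀ j ∈ Finset.Ico m q, ∑ i ∈ Finset.Ico p m, w i ≤ ((m : ℝ) - p) * w j := by
    intro j hj
    rw [Finset.mem_Ico] at hj
    calc ∑ i ∈ Finset.Ico p m, w i ≤ ∑ i ∈ Finset.Ico p m, w j := by
          refine Finset.sum_le_sum fun i hi => ?_
          rw [Finset.mem_Ico] at hi
          exact hw (le_trans (Nat.le_of_lt_succ (Nat.lt_succ_of_lt hi.2)) hj.1)
      _ = ((m : ℝ) - p) * w j := by
          rw [Finset.sum_const, Nat.card_Ico, nsmul_eq_mul, Nat.cast_sub hpm]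
  calc ((q : ℝ) - m) * ∑ i ∈ Finset.Ico p m, w i
      = ∑ j ∈ Finset.Ico m q, ∑ i ∈ Finset.Ico p m, w i := by
        rw [Finset.sum_const, Nat.card_Ico, nsmul_eq_mul, Nat.cast_sub hmq]
    _ ≤ ∑ j ∈ Finset.Ico m q, ((m : ℝ) - p) * w j := Finset.sum_le_sum key
    _ = ((m : ℝ) - p) * ∑ j ∈ Finset.Ico m q, w j := by rw [Finset.mul_sum]

/-- One-sided comparison of partial sums via Newton polygon data. -/
lemma S_le_S (N : ℕ) (c : ℕ → WithTop ℝ) (w w' : ℕ → ℝ)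
    (hw : Monotone w) (hw' : Monotone w')
    (H1 : ∀ m, m ≤ N → (↑(S w m) : WithTop ℝ) ≤ c m)
    (H2' : ∀ m, m ≤ N → (m = 0 ∨ m = N ∨ w' (m - 1) < w' m) → c m = ↑(S w' m))
    (m : ℕ) (hm : m ≤ N) : S w m ≤ S w' m := by
  classical
  set B : ℕ → Prop := fun i => i = 0 ∨ i = N ∨ w' (i - 1) < w' i with hB
  by_cases hBm : B m
  · have h1 := H1 m hm
    rw [H2' m hm hBm] at h1
    exact_mod_cast h1
  -- p : largest breakpoint ≤ m
  have : DecidablePred B := Classical.decPred B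
  set p := Nat.findGreatest B m with hp
  have hBp : B p := by
    rcases Nat.eq_zero_or_pos p with h0 | hpos
    · rw [h0]; left; rfl
    · exact Nat.findGreatest_of_ne_zero hp.symm (by omega)
  have hpm : p ≤ m := Nat.findGreatest_le m
  have hpm' : p < m := lt_of_le_of_ne hpm (fun h => hBm (h ▸ hBp))
  -- q : smallest breakpoint ≥ m
  have hex : ∃ t, B (m + t) := ⟨N - m, by right; left; omega⟩
  set q := m + Nat.find hex with hq
  have hBq : B q := Nat.find_spec hex
  have hmq : m ≤ q := Nat.le_add_right m _
  have hqN : q ≤ N := by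
    have := Nat.find_min' hex (m := N - m) (by right; left; omega)
    omega
  have hmq' : m < q := lt_of_le_of_ne hmq (fun h => hBm (h ▸ hBq))
  -- no breakpoints strictly between p and q
  have hno : ∀ j, p < j → j < q → ¬ B j := by
    intro j h1 h2 hBj
    rcases le_or_gt j m with hjm | hjm
    · exact Nat.findGreatest_is_greatest h1 hjm hBj
    · have h3 : j - m < Nat.find hex := by omega
      exact Nat.find_min hex h3 (by rw [show m + (j - m) = j by omega]; exact hBj)
  -- w' is constant on [p, q)
  have hconst : ∀ j, p ≤ j → j < q → w' j = w' p := by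
    intro j hpj
    induction j, hpj using Nat.le_induction with
    | base => intro _; rfl
    | succ j hpj ih =>
        intro hjq
        have hnb := hno (j + 1) (by omega) hjq
        have h5 : w' (j + 1) ≤ w' j := by
          by_contra hcon
          exact hnb (Or.inr (Or.inr (by simpa using not_le.mp hcon)))
        have h6 : w' j ≤ w' (j + 1) := hw' (by omega)
        rw [le_antisymm h5 h6]
        exact ih (by omega)
  -- final algebra
  have hSp : S w p ≤ S w' p := by
    have h1 := H1 p (by omega)
    rw [H2' p (by omega) hBp] at h1
    exact_mod_cast h1
  have hSq : S w q ≤ S w' q := by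
    have h1 := H1 q hqN
    rw [H2' q hqN hBq] at h1
    exact_mod_cast h1
  have hch := chord hw (le_of_lt hpm') (le_of_lt hmq')
  have hc1 : S w' q - S w' p = ((q : ℝ) - p) * w' p :=
    S_const (by omega) (w' p) fun i h1 h2 => hconst i h1 h2
  have hc2 : S w' m - S w' p = ((m : ℝ) - p) * w' p :=
    S_const (by omega) (w' p) fun i h1 h2 => hconst i h1 (by omega)
  have hPM : (p : ℝ) < (m : ℝ) := by exact_mod_cast hpm'
  have hMQ : (m : ℝ) < (q : ℝ) := by exact_mod_cast hmq'
  have h7 : ((q : ℝ) - p) * S w m ≤ ((q : ℝ) - p) * S w' m := by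
    nlinarith [hch, hSp, hSq, hc1, hc2,
      mul_le_mul_of_nonneg_left hSp (by linarith : (0:ℝ) ≤ (q : ℝ) - m),
      mul_le_mul_of_nonneg_left hSq (by linarith : (0:ℝ) ≤ (m : ℝ) - p)]
  exact le_of_mul_le_mul_left h7 (by linarith)

/-- The Newton-polygon uniqueness lemma. -/
lemma values_eq (N : ℕ) (c : ℕ → WithTop ℝ) (w w' : ℕ → ℝ)
    (hw : Monotone w) (hw' : Monotone w')
    (H1 : ∀ m, m ≤ N → (↑(S w m) : WithTop ℝ) ≤ c m)
    (H2 : ∀ m, m ≤ N → (m = 0 ∨ m = N ∨ w (m - 1) < w m) → c m = ↑(S w m))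
    (H1' : ∀ m, m ≤ N → (↑(S w' m) : WithTop ℝ) ≤ c m)
    (H2' : ∀ m, m ≤ N → (m = 0 ∨ m = N ∨ w' (m - 1) < w' m) → c m = ↑(S w' m)) :
    ∀ i, i < N → w i = w' i := by
  have hS : ∀ m, m ≤ N → S w m = S w' m := fun m hm =>
    le_antisymm (S_le_S N c w w' hw hw' H1 H2' m hm) (S_le_S N c w' w hw' hw H1' H2 m hm)
  intro i hi
  have h1 := hS i (by omega)
  have h2 := hS (i + 1) (by omega)
  have e1 : S w (i + 1) = S w i + w i := by rw [S, S, Finset.sum_range_succ]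
  have e2 : S w' (i + 1) = S w' i + w' i := by rw [S, S, Finset.sum_range_succ]
  linarith

end TropD

namespace TropNP
section Main
variable {K : Type*} [Field K] {v : K → WithTop ℝ}
variable (hv0 : ∀ x : K, v x = ⊤ ↔ x = 0)
  (hvmul : ∀ x y : K, v (x * y) = v x + v y)
  (hvadd : ∀ x y : K, min (v x) (v y) ≤ v (x + y))

include hv0 hvmul hvadd in
/-- Newton polygon: coefficient valuations determine the sorted root valuations. -/
lemma np_main {N : ℕ} (r r' : Fin N → K) (w w' : ℕ → ℝ) (hw : Monotone w) (hw' : Monotone w')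
    (hr : ∀ i : Fin N, v (r i) = ↑(w (i : ℕ))) (hr' : ∀ i : Fin N, v (r' i) = ↑(w' (i : ℕ)))
    (hc : ∀ n, v ((∏ i, (X - C (r i))).coeff n) = v ((∏ i, (X - C (r' i))).coeff n)) :
    ∀ i, i < N → w i = w' i := by
  refine TropD.values_eq N (fun m => v ((∏ i, (X - C (r i))).coeff (N - m))) w w' hw hw'
    ?_ ?_ ?_ ?_
  · intro m hm
    exact coeff_val_ge hv0 hvmul hvadd r w hw hr hm
  · intro m hm hbp
    exact coeff_val_eq hv0 hvmul hvadd r w hw hr hm hbp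
  · intro m hm
    rw [hc (N - m)]
    exact coeff_val_ge hv0 hvmul hvadd r' w' hw' hr' hm
  · intro m hm hbp
    rw [hc (N - m)]
    exact coeff_val_eq hv0 hvmul hvadd r' w' hw' hr' hm hbp

end Main
end TropNP

namespace TropSep

/-- A natural-valued linear functional avoiding finitely many hyperplanes. -/
lemma exists_sep {ι : Type*} [Fintype ι] (D : Finset (ι → ℝ)) (hD : ∀ x ∈ D, x ≠ 0) :
    ∃ k : ι → ℕ, ∀ x ∈ D, (∑ p, (k p : ℝ) * x p) ≠ 0 := by
  classical
  induction D using Finset.induction_on with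
  | empty => exact ⟨0, by simp⟩
  | @insert x D hx ih =>
    obtain ⟨k, hk⟩ := ih (fun y hy => hD y (Finset.mem_insert_of_mem hy))
    have hxne : x ≠ 0 := hD x (Finset.mem_insert_self x D)
    obtain ⟨e₀, he₀⟩ := Function.ne_iff.mp hxne
    have he₀' : x e₀ ≠ 0 := by simpa using he₀
    -- choose t large
    set g : (ι → ℝ) → ℝ := fun y => |∑ p, (k p : ℝ) * y p| / |y e₀| with hg
    obtain ⟨t, ht⟩ := exists_nat_gt (((insert x D).image g).max' (by
      refine Finset.Nonempty.image ?_ g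
      exact ⟨x, Finset.mem_insert_self x D⟩))
    have htg : ∀ y ∈ insert x D, g y < (t : ℝ) := fun y hy =>
      lt_of_le_of_lt (Finset.le_max' _ _ (Finset.mem_image_of_mem g hy)) ht
    refine ⟨fun p => k p + (if p = e₀ then t else 0), fun y hy => ?_⟩
    have hsplit : (∑ p, ((k p + (if p = e₀ then t else 0) : ℕ) : ℝ) * y p)
        = (∑ p, (k p : ℝ) * y p) + (t : ℝ) * y e₀ := by
      have hterm : ∀ p, ((k p + (if p = e₀ then t else 0) : ℕ) : ℝ) * y p
          = (k p : ℝ) * y p + (if p = e₀ then (t : ℝ) * y p else 0) := by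
        intro p
        by_cases hp : p = e₀ <;> simp [hp] <;> push_cast <;> ring
      rw [Finset.sum_congr rfl fun p _ => hterm p, Finset.sum_add_distrib,
        Finset.sum_ite_eq' Finset.univ e₀ (fun p => (t : ℝ) * y p)]
      simp
    rw [hsplit]
    by_cases hye : y e₀ = 0
    · rw [hye, mul_zero, add_zero]
      have hyD : y ∈ D := by
        rcases Finset.mem_insert.mp hy with h | h
        · exact absurd (h ▸ hye) he₀'
        · exact h
      exact hk y hyD
    · intro hzero
      have h1 : |∑ p, (k p : ℝ) * y p| = (t : ℝ) * |y e₀| := by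
        have : (∑ p, (k p : ℝ) * y p) = -((t : ℝ) * y e₀) := by linarith
        rw [this, abs_neg, abs_mul, abs_of_nonneg (by positivity : (0:ℝ) ≤ (t:ℝ))]
      have h2 := htg y hy
      rw [hg] at h2
      have h3 : (0:ℝ) < |y e₀| := abs_pos.mpr hye
      rw [div_lt_iff₀ h3] at h2
      rw [h1] at h2
      exact lt_irrefl _ h2

end TropSep

/-- Let `K` be a field with an additive ultrametric valuation `v`, `d ≥ 1`,
and `α, β : Fin d → K` injective root families. If for every weight function
`k : Fin d → Fin d → ℕ` and every `n`, the valuations of the `n`-th coefficients of the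
symmetrized generating polynomials `F_{α,k}` and `F_{β,k}` agree, then there is a permutation
`σ` of `Fin d` with `v (α i - α j) = v (β (σ i) - β (σ j))` for all `i, j`; i.e. the tropical
invariants determine the marked tree filtration of the roots up to isomorphism. -/
theorem tropical_invariants_determine_tree
    {K : Type*} [Field K] (v : K → WithTop ℝ)
    (hv0 : ∀ x : K, v x = ⊤ ↔ x = 0)
    (hvmul : ∀ x y : K, v (x * y) = v x + v y)
    (hvadd : ∀ x y : K, min (v x) (v y) ≤ v (x + y))
    (d : ℕ) (hd : 1 ≤ d)
    (α β : Fin d → K)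
    (hα : Function.Injective α) (hβ : Function.Injective β)
    (h : ∀ (k : Fin d → Fin d → ℕ) (n : ℕ),
      v ((∏ σ : Equiv.Perm (Fin d),
            (X - C (∏ p ∈ univ.filter (fun p : Fin d × Fin d => p.1 < p.2),
              (α (σ p.1) - α (σ p.2)) ^ (2 * k p.1 p.2)))).coeff n)
        = v ((∏ σ : Equiv.Perm (Fin d),
            (X - C (∏ p ∈ univ.filter (fun p : Fin d × Fin d => p.1 < p.2),
              (β (σ p.1) - β (σ p.2)) ^ (2 * k p.1 p.2)))).coeff n)) :
    ∃ σ : Equiv.Perm (Fin d), ∀ i j : Fin d,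
      v (α i - α j) = v (β (σ i) - β (σ j)) := by
  classical
  set N := Fintype.card (Equiv.Perm (Fin d)) with hNdef
  have hNpos : 0 < N := Fintype.card_pos
  set e : Fin N ≃ Equiv.Perm (Fin d) := (Fintype.equivFin (Equiv.Perm (Fin d))).symm with he
  set a : Fin d → Fin d → ℝ := fun i j => (v (α i - α j)).untopD 0 with ha
  set b : Fin d → Fin d → ℝ := fun i j => (v (β i - β j)).untopD 0 with hb
  have hva : ∀ i j, i ≠ j → v (α i - α j) = ↑(a i j) := by
    intro i j hij
    have hne : α i - α j ≠ 0 := sub_ne_zero.mpr fun hh => hij (hα hh)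
    have htop : v (α i - α j) ≠ ⊤ := fun hh => hne ((hv0 _).mp hh)
    obtain ⟨r, hr⟩ := WithTop.ne_top_iff_exists.mp htop
    rw [← hr]
    show (↑r : WithTop ℝ) = ↑(WithTop.untopD 0 (v (α i - α j)))
    rw [← hr, WithTop.untopD_coe]
  have hvb : ∀ i j, i ≠ j → v (β i - β j) = ↑(b i j) := by
    intro i j hij
    have hne : β i - β j ≠ 0 := sub_ne_zero.mpr fun hh => hij (hβ hh)
    have htop : v (β i - β j) ≠ ⊤ := fun hh => hne ((hv0 _).mp hh)
    obtain ⟨r, hr⟩ := WithTop.ne_top_iff_exists.mp htop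
    rw [← hr]
    show (↑r : WithTop ℝ) = ↑(WithTop.untopD 0 (v (β i - β j)))
    rw [← hr, WithTop.untopD_coe]
  -- vectors of valuations
  set A : Equiv.Perm (Fin d) → (Fin d × Fin d → ℝ) :=
    fun σ p => if p.1 < p.2 then a (σ p.1) (σ p.2) else 0 with hA
  set B : Equiv.Perm (Fin d) → (Fin d × Fin d → ℝ) :=
    fun σ p => if p.1 < p.2 then b (σ p.1) (σ p.2) else 0 with hB
  -- separating functional
  set D : Finset (Fin d × Fin d → ℝ) :=
    ((univ : Finset (Equiv.Perm (Fin d) × Equiv.Perm (Fin d))).image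
      (fun q => A q.1 - B q.2)).erase 0 with hD
  obtain ⟨k, hk⟩ := TropSep.exists_sep D (fun x hx => Finset.ne_of_mem_erase hx)
  set kk : Fin d → Fin d → ℕ := fun i j => k (i, j) with hkk
  -- the scalar linear functionals
  set L1 : Equiv.Perm (Fin d) → ℝ := fun σ =>
    ∑ p ∈ univ.filter (fun p : Fin d × Fin d => p.1 < p.2),
      ((2 * kk p.1 p.2 : ℕ) : ℝ) * a (σ p.1) (σ p.2) with hL1
  set L2 : Equiv.Perm (Fin d) → ℝ := fun σ =>
    ∑ p ∈ univ.filter (fun p : Fin d × Fin d => p.1 < p.2),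
      ((2 * kk p.1 p.2 : ℕ) : ℝ) * b (σ p.1) (σ p.2) with hL2
  set I1 : Equiv.Perm (Fin d) → K := fun σ =>
    ∏ p ∈ univ.filter (fun p : Fin d × Fin d => p.1 < p.2),
      (α (σ p.1) - α (σ p.2)) ^ (2 * kk p.1 p.2) with hI1
  set I2 : Equiv.Perm (Fin d) → K := fun σ =>
    ∏ p ∈ univ.filter (fun p : Fin d × Fin d => p.1 < p.2),
      (β (σ p.1) - β (σ p.2)) ^ (2 * kk p.1 p.2) with hI2
  have hvI1 : ∀ σ, v (I1 σ) = ↑(L1 σ) := by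
    intro σ
    refine TropNP.v_prod_coe hv0 hvmul _ _ _ fun p hp => ?_
    have hp' : p.1 < p.2 := (Finset.mem_filter.mp hp).2
    have hne : σ p.1 ≠ σ p.2 := fun hh => absurd (σ.injective hh) (ne_of_lt hp')
    exact TropNP.v_pow_coe hv0 hvmul _ _ (hva _ _ hne) _
  have hvI2 : ∀ σ, v (I2 σ) = ↑(L2 σ) := by
    intro σ
    refine TropNP.v_prod_coe hv0 hvmul _ _ _ fun p hp => ?_
    have hp' : p.1 < p.2 := (Finset.mem_filter.mp hp).2
    have hne : σ p.1 ≠ σ p.2 := fun hh => absurd (σ.injective hh) (ne_of_lt hp')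
    exact TropNP.v_pow_coe hv0 hvmul _ _ (hvb _ _ hne) _
  -- sorted root sequences
  set τ1 : Equiv.Perm (Fin N) := Tuple.sort (L1 ∘ e) with hτ1
  set τ2 : Equiv.Perm (Fin N) := Tuple.sort (L2 ∘ e) with hτ2
  have hmono1 : Monotone ((L1 ∘ e) ∘ τ1) := Tuple.monotone_sort (L1 ∘ e)
  have hmono2 : Monotone ((L2 ∘ e) ∘ τ2) := Tuple.monotone_sort (L2 ∘ e)
  have hN1 : N - 1 < N := by omega
  set w1 : ℕ → ℝ := fun n => if hn : n < N then ((L1 ∘ e) ∘ τ1) ⟨n, hn⟩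
    else ((L1 ∘ e) ∘ τ1) ⟨N - 1, hN1⟩ with hw1
  set w2 : ℕ → ℝ := fun n => if hn : n < N then ((L2 ∘ e) ∘ τ2) ⟨n, hn⟩
    else ((L2 ∘ e) ∘ τ2) ⟨N - 1, hN1⟩ with hw2
  have hwmono : ∀ (f : Fin N → ℝ), Monotone f → Monotone
      (fun n => if hn : n < N then f ⟨n, hn⟩ else f ⟨N - 1, hN1⟩) := by
    intro f hf n₁ n₂ hle
    dsimp only
    by_cases h1 : n₁ < N
    · by_cases h2 : n₂ < N
      · rw [dif_pos h1, dif_pos h2]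
        exact hf (Fin.mk_le_mk.mpr hle)
      · rw [dif_pos h1, dif_neg h2]
        exact hf (Fin.mk_le_mk.mpr (by omega))
    · have h2 : ¬ n₂ < N := by omega
      rw [dif_neg h1, dif_neg h2]
  have hw1mono : Monotone w1 := hwmono _ hmono1
  have hw2mono : Monotone w2 := hwmono _ hmono2
  set r1 : Fin N → K := fun i => I1 (e (τ1 i)) with hr1
  set r2 : Fin N → K := fun i => I2 (e (τ2 i)) with hr2
  have hvr1 : ∀ i : Fin N, v (r1 i) = ↑(w1 (i : ℕ)) := by
    intro i
    rw [hr1, hvI1, hw1]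
    simp only [dif_pos i.isLt]
    rfl
  have hvr2 : ∀ i : Fin N, v (r2 i) = ↑(w2 (i : ℕ)) := by
    intro i
    rw [hr2, hvI2, hw2]
    simp only [dif_pos i.isLt]
    rfl
  -- products agree with the hypothesis products
  have hprod1 : (∏ i, (X - C (r1 i))) = ∏ σ : Equiv.Perm (Fin d), (X - C (I1 σ)) := by
    have s1 : (∏ i, (X - C (r1 i))) = ∏ i, (X - C (I1 (e i))) :=
      Fintype.prod_equiv τ1 _ _ (fun i => rfl)
    rw [s1]
    exact Fintype.prod_equiv e _ _ (fun i => rfl)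
  have hprod2 : (∏ i, (X - C (r2 i))) = ∏ σ : Equiv.Perm (Fin d), (X - C (I2 σ)) := by
    have s1 : (∏ i, (X - C (r2 i))) = ∏ i, (X - C (I2 (e i))) :=
      Fintype.prod_equiv τ2 _ _ (fun i => rfl)
    rw [s1]
    exact Fintype.prod_equiv e _ _ (fun i => rfl)
  have hcoeff : ∀ n, v ((∏ i, (X - C (r1 i))).coeff n) = v ((∏ i, (X - C (r2 i))).coeff n) := by
    intro n
    rw [hprod1, hprod2]
    exact h kk n
  -- Newton polygon: sorted sequences agree
  have hweq : ∀ i, i < N → w1 i = w2 i :=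
    TropNP.np_main hv0 hvmul hvadd r1 r2 w1 w2 hw1mono hw2mono hvr1 hvr2 hcoeff
  -- locate the identity permutation
  set i₁ : Fin N := τ1⁻¹ (e.symm 1) with hi₁
  have hL1id : L1 1 = w1 (i₁ : ℕ) := by
    rw [hw1]
    simp only [dif_pos i₁.isLt]
    show L1 1 = L1 (e (τ1 i₁))
    rw [hi₁]
    simp
  set τ : Equiv.Perm (Fin d) := e (τ2 i₁) with hτ
  have hL2τ : L2 τ = w2 (i₁ : ℕ) := by
    rw [hw2]
    simp only [dif_pos i₁.isLt]
    rfl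
  have hLeq : L1 1 = L2 τ := by
    rw [hL1id, hL2τ, hweq _ i₁.isLt]
  -- from scalar equality to vector equality
  have hφ : ∀ (x : Fin d × Fin d → ℝ) (σ : Equiv.Perm (Fin d)),
      (∑ p ∈ univ.filter (fun p : Fin d × Fin d => p.1 < p.2),
        ((2 * kk p.1 p.2 : ℕ) : ℝ) * (if p.1 < p.2 then x p else 0))
      = ∑ p ∈ univ.filter (fun p : Fin d × Fin d => p.1 < p.2),
        ((2 * kk p.1 p.2 : ℕ) : ℝ) * x p := by
    intro x σ
    refine Finset.sum_congr rfl fun p hp => ?_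
    rw [if_pos (Finset.mem_filter.mp hp).2]
  have hsum : ∑ p, (k p : ℝ) * (A 1 - B τ) p = 0 := by
    have hL1' : L1 1 = ∑ p, ((2 * k p : ℕ) : ℝ) * A 1 p := by
      simp only [hL1]
      rw [Finset.sum_filter]
      refine Finset.sum_congr rfl fun p _ => ?_
      by_cases hp : p.1 < p.2 <;> simp [hA, hp, hkk]
    have hL2' : L2 τ = ∑ p, ((2 * k p : ℕ) : ℝ) * B τ p := by
      simp only [hL2]
      rw [Finset.sum_filter]
      refine Finset.sum_congr rfl fun p _ => ?_
      by_cases hp : p.1 < p.2 <;> simp [hB, hp, hkk]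
    have h0 : ∑ p, ((2 * k p : ℕ) : ℝ) * (A 1 - B τ) p = 0 := by
      have : ∑ p, ((2 * k p : ℕ) : ℝ) * (A 1 - B τ) p
          = (∑ p, ((2 * k p : ℕ) : ℝ) * A 1 p) - ∑ p, ((2 * k p : ℕ) : ℝ) * B τ p := by
        rw [← Finset.sum_sub_distrib]
        refine Finset.sum_congr rfl fun p _ => ?_
        simp [Pi.sub_apply]
        ring
      rw [this, ← hL1', ← hL2', hLeq, sub_self]
    have h2 : ∑ p, ((2 * k p : ℕ) : ℝ) * (A 1 - B τ) p
        = 2 * ∑ p, (k p : ℝ) * (A 1 - B τ) p := by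
      rw [Finset.mul_sum]
      refine Finset.sum_congr rfl fun p _ => ?_
      push_cast
      ring
    rw [h2] at h0
    linarith
  have hAB : A 1 = B τ := by
    by_contra hne
    have hmem : A 1 - B τ ∈ D := by
      rw [hD]
      refine Finset.mem_erase.mpr ⟨sub_ne_zero.mpr hne, ?_⟩
      exact Finset.mem_image.mpr ⟨(1, τ), Finset.mem_univ _, rfl⟩
    exact hk _ hmem hsum
  -- conclude
  refine ⟨τ, fun i j => ?_⟩
  rcases lt_trichotomy i j with hij | hij | hij
  · have hcon := congrFun hAB (i, j)
    rw [hA, hB] at hcon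
    simp only [if_pos hij] at hcon
    have hne : i ≠ j := ne_of_lt hij
    have hne' : τ i ≠ τ j := fun hh => hne (τ.injective hh)
    rw [hva i j hne, hvb _ _ hne']
    exact_mod_cast hcon
  · rw [hij]
    rw [sub_self, sub_self]
  · have hcon := congrFun hAB (j, i)
    rw [hA, hB] at hcon
    simp only [if_pos hij] at hcon
    have hne : j ≠ i := ne_of_lt hij
    have hne' : τ j ≠ τ i := fun hh => hne (τ.injective hh)
    rw [show α i - α j = -(α j - α i) by ring, TropNP.v_neg hv0 hvmul,
      show β (τ i) - β (τ j) = -(β (τ j) - β (τ i)) by ring, TropNP.v_neg hv0 hvmul,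
      hva j i hne, hvb _ _ hne']
    exact_mod_cast hcon
end

section
/- Let K be a field equipped with an additive ultrametric valuation v and fix d ≥ 1. There exists a FINITE set W of weight functions k : Fin d → Fin d → ℕ with the following property: for all injective families α, β : Fin d → K, if for every k ∈ W and every n ∈ ℕ one has v((F_{α,k}).coeff n) = v((F_{β,k}).coeff n), then there exists a permutation σ of Fin d with v(α i − α j) = v(β (σ i) − β (σ j)) for all i, j. That is, finitely many edge-weighted graphs suffice to determine the tree of a degree-d polynomial. -/
open Polynomial Finset

namespace TropNewton

noncomputable def w (v : K → WithTop ℝ) (x : K) : ℝ := WithTop.untopD 0 (v x)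

section Val

variable {K : Type*} [Field K] {v : K → WithTop ℝ}
  (hv0 : ∀ x : K, v x = ⊤ ↔ x = 0)
  (hvmul : ∀ x y : K, v (x * y) = v x + v y)
  (hvadd : ∀ x y : K, min (v x) (v y) ≤ v (x + y))

include hv0

lemma v_ne_top {x : K} (hx : x ≠ 0) : v x ≠ ⊤ := fun h => hx ((hv0 x).1 h)

lemma v_zero : v (0 : K) = ⊤ := (hv0 0).2 rfl

lemma v_coe_w {x : K} (hx : x ≠ 0) : ((w v x : ℝ) : WithTop ℝ) = v x := by
  obtain ⟨r, hr⟩ := WithTop.ne_top_iff_exists.mp (v_ne_top hv0 hx)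
  rw [w, ← hr, WithTop.untopD_coe]

include hvmul

lemma v_one : v (1 : K) = 0 := by
  have h1 : v (1 : K) = v 1 + v 1 := by simpa using hvmul 1 1
  obtain ⟨r, hr⟩ := WithTop.ne_top_iff_exists.mp (v_ne_top hv0 (one_ne_zero (α := K)))
  rw [← hr] at h1 ⊢
  rw [← WithTop.coe_add, WithTop.coe_eq_coe] at h1
  norm_num [show r = 0 by linarith]

lemma v_neg (x : K) : v (-x) = v x := by
  have hm1 : v (-1 : K) = 0 := by
    have h1 : (0 : WithTop ℝ) = v (-1 : K) + v (-1 : K) := by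
      have := hvmul (-1 : K) (-1)
      rw [show ((-1 : K) * (-1)) = 1 by ring, v_one hv0 hvmul] at this
      exact this
    obtain ⟨r, hr⟩ := WithTop.ne_top_iff_exists.mp (v_ne_top hv0 (by norm_num : (-1 : K) ≠ 0))
    rw [← hr] at h1 ⊢
    rw [← WithTop.coe_add, ← WithTop.coe_zero, WithTop.coe_eq_coe] at h1
    norm_num [show r = 0 by linarith]
  rw [show -x = (-1) * x by ring, hvmul, hm1, zero_add]

lemma v_pow_coe {x : K} (hx : x ≠ 0) (n : ℕ) : v (x ^ n) = ((n : ℝ) * w v x : ℝ) := by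
  induction n with
  | zero => simpa using v_one hv0 hvmul
  | succ n ih =>
      rw [pow_succ, hvmul, ih, ← v_coe_w hv0 hx, ← WithTop.coe_add, WithTop.coe_eq_coe]
      push_cast
      ring

lemma v_multiset_prod {T : Multiset K} (hT : ∀ x ∈ T, x ≠ 0) :
    v T.prod = ((T.map (w v)).sum : ℝ) := by
  induction T using Multiset.induction with
  | empty => simpa using v_one hv0 hvmul
  | cons a s ih =>
      have ha : a ≠ 0 := hT a (Multiset.mem_cons_self a s)
      rw [Multiset.prod_cons, hvmul, ih (fun x hx => hT x (Multiset.mem_cons_of_mem hx)),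
        ← v_coe_w hv0 ha, ← WithTop.coe_add, Multiset.map_cons, Multiset.sum_cons]

include hvadd

lemma v_add_eq_left {x y : K} (h : v x < v y) : v (x + y) = v x := by
  refine le_antisymm ?_ (by simpa [min_eq_left h.le] using hvadd x y)
  have h2 := hvadd (x + y) (-y)
  rw [v_neg hv0 hvmul, add_neg_cancel_right] at h2
  rcases le_or_gt (v (x + y)) (v y) with hc | hc
  · simpa [min_eq_left hc] using h2
  · exact absurd (le_trans (by simp [min_eq_right hc.le]) h2) (not_le.mpr h)

lemma v_multiset_sum_le {T : Multiset K} {c : WithTop ℝ} (h : ∀ x ∈ T, c ≤ v x) :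
    c ≤ v T.sum := by
  induction T using Multiset.induction with
  | empty => simp [v_zero hv0]
  | cons a s ih =>
      rw [Multiset.sum_cons]
      refine le_trans ?_ (hvadd a s.sum)
      exact le_min (h a (Multiset.mem_cons_self a s))
        (ih fun x hx => h x (Multiset.mem_cons_of_mem hx))

lemma v_finset_sum_le {ι : Type*} {s : Finset ι} {f : ι → K} {c : WithTop ℝ}
    (h : ∀ i ∈ s, c ≤ v (f i)) : c ≤ v (∑ i ∈ s, f i) := by
  rw [Finset.sum_eq_multiset_sum]
  refine v_multiset_sum_le hv0 hvmul hvadd fun x hx => ?_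
  obtain ⟨i, hi, rfl⟩ := Multiset.mem_map.mp hx
  exact h i hi

end Val



/-- partial sums of a list -/
noncomputable def SS (l : List ℝ) (n : ℕ) : ℝ := (l.take n).sum

lemma SS_succ {l : List ℝ} {n : ℕ} (hn : n < l.length) :
    SS l (n + 1) = SS l n + l.getD n 0 := by
  rw [SS, SS, List.sum_take_succ _ _ hn, List.getD_eq_getElem l 0 hn]

lemma getD_mono {l : List ℝ} (hl : l.Pairwise (· ≤ ·)) {i j : ℕ} (hij : i ≤ j)
    (hj : j < l.length) : l.getD i 0 ≤ l.getD j 0 := by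
  rcases eq_or_lt_of_le hij with rfl | hij
  · exact le_rfl
  · rw [List.getD_eq_getElem l 0 (lt_of_le_of_lt hij.le hj), List.getD_eq_getElem l 0 hj]
    exact List.pairwise_iff_get.mp hl ⟨i, lt_of_le_of_lt hij.le hj⟩ ⟨j, hj⟩ (by simpa using hij)

lemma take_sum_le_sublist : ∀ {l l' : List ℝ}, List.Sublist l' l → l.Pairwise (· ≤ ·) →
    SS l l'.length ≤ l'.sum := by
  intro l l' h
  induction h with
  | slnil => intro _; simp [SS]
  | @cons l₁ l₂ a h ih =>
      intro hs
      have hs' : l₂.Pairwise (· ≤ ·) := hs.of_cons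
      rcases Nat.eq_zero_or_pos l₁.length with h0 | hpos
      · rw [List.length_eq_zero_iff.mp h0]; simp [SS]
      · obtain ⟨k, hk⟩ : ∃ k, l₁.length = k + 1 := ⟨l₁.length - 1, by omega⟩
        have hkl : k < l₂.length := by have := h.length_le; omega
        have h1 : SS (a :: l₂) l₁.length = a + SS l₂ k := by
          rw [hk, SS, List.take_succ_cons, List.sum_cons, SS]
        have h2 : a ≤ l₂.getD k 0 := by
          rw [List.getD_eq_getElem l₂ 0 hkl]
          exact (List.pairwise_cons.mp hs).1 _ (List.getElem_mem hkl)
        have h3 : SS l₂ (k + 1) = SS l₂ k + l₂.getD k 0 := SS_succ hkl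
        have := ih hs'
        rw [hk] at this
        rw [h1]
        linarith
  | @cons_cons l₁ l₂ a h ih =>
      intro hs
      have := ih hs.of_cons
      have h1 : SS (a :: l₂) (a :: l₁).length = a + SS l₂ l₁.length := by
        rw [List.length_cons, SS, List.take_succ_cons, List.sum_cons, SS]
      rw [h1, List.sum_cons]
      linarith


lemma slice_upper {l : List ℝ} (hl : l.Pairwise (· ≤ ·)) (a j : ℕ) (hj : a + j ≤ l.length) :
    SS l (a + j) ≤ SS l a + (j : ℝ) * l.getD (a + j - 1) 0 := by
  induction j with
  | zero => simp
  | succ j ih =>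
      have hlt : a + j < l.length := by omega
      have h1 : SS l (a + (j + 1)) = SS l (a + j) + l.getD (a + j) 0 := by
        rw [← SS_succ hlt]; ring_nf
      have h2 : l.getD (a + j - 1) 0 ≤ l.getD (a + j) 0 := getD_mono hl (by omega) hlt
      have := ih (by omega)
      rw [h1]
      have : SS l (a + j) ≤ SS l a + (j : ℝ) * l.getD (a + j) 0 := by nlinarith
      have hidx : a + (j + 1) - 1 = a + j := by omega
      rw [hidx]
      push_cast
      nlinarith

lemma slice_lower {l : List ℝ} (hl : l.Pairwise (· ≤ ·)) (a j : ℕ) (hj : a + j ≤ l.length) :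
    SS l a + (j : ℝ) * l.getD a 0 ≤ SS l (a + j) := by
  induction j with
  | zero => simp
  | succ j ih =>
      have hlt : a + j < l.length := by omega
      have h1 : SS l (a + (j + 1)) = SS l (a + j) + l.getD (a + j) 0 := by
        rw [← SS_succ hlt]; ring_nf
      have h2 : l.getD a 0 ≤ l.getD (a + j) 0 := getD_mono hl (by omega) hlt
      have := ih (by omega)
      rw [h1]
      push_cast
      nlinarith

/-- discrete convexity of partial sums of a sorted list -/
lemma SS_convex {l : List ℝ} (hl : l.Pairwise (· ≤ ·)) {a n b : ℕ} (han : a ≤ n) (hnb : n ≤ b)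
    (hb : b ≤ l.length) :
    ((b : ℝ) - a) * SS l n ≤ ((b : ℝ) - n) * SS l a + ((n : ℝ) - a) * SS l b := by
  rcases eq_or_lt_of_le han with rfl | han
  · have : ((b : ℝ) - a) = ((b : ℝ) - a) := rfl
    ring_nf
    nlinarith [sub_nonneg.mpr (show (a : ℝ) ≤ b by exact_mod_cast hnb)]
  rcases eq_or_lt_of_le hnb with rfl | hnb
  · ring_nf
    nlinarith [sub_nonneg.mpr (show (a : ℝ) ≤ n by exact_mod_cast han.le)]
  · -- a < n < b
    have h1 : SS l n ≤ SS l a + ((n - a : ℕ) : ℝ) * l.getD (n - 1) 0 := by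
      have := slice_upper hl a (n - a) (by omega)
      rwa [show a + (n - a) = n by omega] at this
    have h2 : SS l n + ((b - n : ℕ) : ℝ) * l.getD n 0 ≤ SS l b := by
      have := slice_lower hl n (b - n) (by omega)
      rwa [show n + (b - n) = b by omega] at this
    have h3 : l.getD (n - 1) 0 ≤ l.getD n 0 := getD_mono hl (by omega) (by omega)
    have ha' : ((n - a : ℕ) : ℝ) = (n : ℝ) - a := by
      push_cast [Nat.cast_sub han.le]; ring
    have hb' : ((b - n : ℕ) : ℝ) = (b : ℝ) - n := by
      push_cast [Nat.cast_sub hnb.le]; ring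
    rw [ha'] at h1; rw [hb'] at h2
    have hna : (0 : ℝ) < (n : ℝ) - a := by
      have : (a : ℝ) < n := by exact_mod_cast han
      linarith
    have hbn : (0 : ℝ) < (b : ℝ) - n := by
      have : (n : ℝ) < b := by exact_mod_cast hnb
      linarith
    nlinarith [mul_le_mul_of_nonneg_left h3 (le_of_lt hbn)]

/-- linearity of partial sums on an interval with constant entries -/
lemma SS_linear {l : List ℝ} (hl : l.Pairwise (· ≤ ·)) {a b : ℕ} (hab : a < b) (hb : b ≤ l.length)
    (hconst : ∀ j, a < j → j < b → l.getD (j - 1) 0 = l.getD j 0) :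
    ∀ n, a ≤ n → n ≤ b → SS l n = SS l a + ((n : ℝ) - a) * l.getD a 0 := by
  have hstep : ∀ i, a + i < b → l.getD (a + i) 0 = l.getD a 0 := by
    intro i
    induction i with
    | zero => intro _; rfl
    | succ i ih =>
        intro hib
        have := hconst (a + i + 1) (by omega) (by omega)
        rw [show a + i + 1 - 1 = a + i by omega] at this
        rw [show a + (i + 1) = a + i + 1 by omega, ← this, ih (by omega)]
  intro n han hnb
  obtain ⟨i, rfl⟩ : ∃ i, n = a + i := ⟨n - a, by omega⟩
  induction i with
  | zero => simp
  | succ i ih =>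
      have hlt : a + i < l.length := by omega
      have h1 : SS l (a + (i + 1)) = SS l (a + i) + l.getD (a + i) 0 := by
        rw [← SS_succ hlt]; ring_nf
      rw [h1, ih (by omega) (by omega), hstep i (by omega)]
      push_cast
      ring


/-- interpolation formula recovering Newton-polygon values from coefficient valuations -/
noncomputable def TT (V : ℕ → WithTop ℝ) (m n : ℕ) : WithTop ℝ := by
  classical
  exact (((Finset.range (n + 1)) ×ˢ (Finset.Icc n m)).filter
      (fun p : ℕ × ℕ => V p.1 ≠ ⊤ ∧ V p.2 ≠ ⊤)).inf
    (fun p => if p.1 = p.2 then V n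
      else (((((p.2 : ℝ) - n) * WithTop.untopD 0 (V p.1) + ((n : ℝ) - p.1) * WithTop.untopD 0 (V p.2))
        / ((p.2 : ℝ) - p.1) : ℝ) : WithTop ℝ))

lemma TT_congr {V1 V2 : ℕ → WithTop ℝ} {m n : ℕ} (hn : n ≤ m)
    (h : ∀ j, j ≤ m → V1 j = V2 j) : TT V1 m n = TT V2 m n := by
  classical
  unfold TT
  have hmemle : ∀ p : ℕ × ℕ, p ∈ (Finset.range (n + 1)) ×ˢ (Finset.Icc n m) →
      p.1 ≤ m ∧ p.2 ≤ m := by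
    intro p hp
    simp only [Finset.mem_product, Finset.mem_range, Finset.mem_Icc] at hp
    omega
  have hset : ((Finset.range (n + 1)) ×ˢ (Finset.Icc n m)).filter
        (fun p : ℕ × ℕ => V1 p.1 ≠ ⊤ ∧ V1 p.2 ≠ ⊤)
      = ((Finset.range (n + 1)) ×ˢ (Finset.Icc n m)).filter
        (fun p : ℕ × ℕ => V2 p.1 ≠ ⊤ ∧ V2 p.2 ≠ ⊤) := by
    refine Finset.filter_congr ?_
    intro p hp
    obtain ⟨h1, h2⟩ := hmemle p hp
    rw [h p.1 h1, h p.2 h2]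
  rw [hset]
  refine Finset.inf_congr rfl ?_
  intro p hp
  obtain ⟨hp', -⟩ := Finset.mem_filter.mp hp
  obtain ⟨h1, h2⟩ := hmemle p hp'
  rw [h p.1 h1, h p.2 h2, h n hn]

lemma recon (l : List ℝ) (hl : l.Pairwise (· ≤ ·)) (V : ℕ → WithTop ℝ)
    (hLB : ∀ n, n ≤ l.length → ((SS l n : ℝ) : WithTop ℝ) ≤ V n)
    (hV0 : V 0 = ((SS l 0 : ℝ) : WithTop ℝ))
    (hVm : V l.length = ((SS l l.length : ℝ) : WithTop ℝ))
    (hVert : ∀ n, 0 < n → n < l.length → l.getD (n - 1) 0 < l.getD n 0 →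
      V n = ((SS l n : ℝ) : WithTop ℝ)) :
    ∀ n, n ≤ l.length → TT V l.length n = ((SS l n : ℝ) : WithTop ℝ) := by
  classical
  set m := l.length with hm
  set P : ℕ → Prop := fun j => j = 0 ∨ j = m ∨ (0 < j ∧ j < m ∧ l.getD (j - 1) 0 < l.getD j 0)
    with hP
  have hVP : ∀ j, P j → V j = ((SS l j : ℝ) : WithTop ℝ) := by
    intro j hj
    rcases hj with rfl | rfl | ⟨h1, h2, h3⟩
    · exact hV0
    · exact hVm
    · exact hVert j h1 h2 h3
  intro n hn
  refine le_antisymm ?_ ?_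
  · -- inf ≤ SS n : exhibit a good pair of vertices
    have hg0 : P 0 := Or.inl rfl
    set a := Nat.findGreatest P n with ha
    have haP : P a := Nat.findGreatest_spec (Nat.zero_le n) hg0
    have han : a ≤ n := Nat.findGreatest_le n
    have hbex : ∃ i, P (n + i) := ⟨m - n, Or.inr (Or.inl (by omega))⟩
    set b := n + Nat.find hbex with hb
    have hbP : P b := Nat.find_spec hbex
    have hnb : n ≤ b := Nat.le_add_right n _
    have hbm : b ≤ m := by
      rcases hbP with h | h | h <;> omega
    have hnovert : ∀ j, a < j → j < b → ¬ P j := by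
      intro j hja hjb hPj
      rcases le_or_gt j n with hjn | hjn
      · exact Nat.findGreatest_is_greatest hja hjn hPj
      · have : j - n < Nat.find hbex := by omega
        exact Nat.find_min hbex this (by rwa [show n + (j - n) = j by omega])
    rcases eq_or_lt_of_le (le_trans han hnb : a ≤ b) with hab | hab
    · -- a = b, so n is itself a vertex
      have hna : n = a := by omega
      have hVn : V n = ((SS l n : ℝ) : WithTop ℝ) := by rw [hna]; exact hVP a haP
      have hmem : ((n, n) : ℕ × ℕ) ∈ ((Finset.range (n + 1)) ×ˢ (Finset.Icc n m)).filter
          (fun p : ℕ × ℕ => V p.1 ≠ ⊤ ∧ V p.2 ≠ ⊤) := by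
        simp only [Finset.mem_filter, Finset.mem_product, Finset.mem_range, Finset.mem_Icc]
        refine ⟨⟨by omega, by omega, hn⟩, ?_, ?_⟩ <;> simp [hVn]
      refine le_trans (Finset.inf_le hmem) ?_
      simp [hVn]
    · -- a < b, interpolate
      have hVa : V a = ((SS l a : ℝ) : WithTop ℝ) := hVP a haP
      have hVb : V b = ((SS l b : ℝ) : WithTop ℝ) := hVP b hbP
      have hmem : ((a, b) : ℕ × ℕ) ∈ ((Finset.range (n + 1)) ×ˢ (Finset.Icc n m)).filter
          (fun p : ℕ × ℕ => V p.1 ≠ ⊤ ∧ V p.2 ≠ ⊤) := by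
        simp only [Finset.mem_filter, Finset.mem_product, Finset.mem_range, Finset.mem_Icc]
        refine ⟨⟨by omega, by omega, hbm⟩, ?_, ?_⟩ <;> simp [hVa, hVb]
      refine le_trans (Finset.inf_le hmem) ?_
      · have hne : a ≠ b := by omega
        simp only [hne, if_false, hVa, hVb, WithTop.untopD_coe]
        rw [WithTop.coe_le_coe]
        -- real computation via SS_linear
        have hconst : ∀ j, a < j → j < b → l.getD (j - 1) 0 = l.getD j 0 := by
          intro j hja hjb
          have hj0 : 0 < j := by omega
          have hjm : j < m := by omega
          have hnl : ¬ l.getD (j - 1) 0 < l.getD j 0 := fun hlt =>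
            hnovert j hja hjb (Or.inr (Or.inr ⟨hj0, hjm, hlt⟩))
          exact le_antisymm (getD_mono hl (by omega) (by omega)) (le_of_not_gt hnl)
        have hlin := SS_linear hl hab hbm hconst
        have h1 := hlin n han hnb
        have h2 := hlin b (by omega) le_rfl
        have hba : (0 : ℝ) < (b : ℝ) - a := by
          have : (a : ℝ) < b := by exact_mod_cast hab
          linarith
        rw [h1, h2]
        refine le_of_eq ?_
        field_simp
        ring
  · -- SS n ≤ inf
    refine Finset.le_inf fun p hp => ?_
    simp only [Finset.mem_filter, Finset.mem_product, Finset.mem_range, Finset.mem_Icc] at hp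
    obtain ⟨⟨hp1, hp2, hp3⟩, hVt1, hVt2⟩ := hp
    by_cases hpe : p.1 = p.2
    · rw [if_pos hpe]
      exact hLB n hn
    · rw [if_neg hpe]
      have hab : p.1 < p.2 := by omega
      obtain ⟨ra, hra⟩ := WithTop.ne_top_iff_exists.mp hVt1
      obtain ⟨rb, hrb⟩ := WithTop.ne_top_iff_exists.mp hVt2
      have hSa : SS l p.1 ≤ ra := by
        have := hLB p.1 (by omega)
        rw [← hra, WithTop.coe_le_coe] at this
        exact this
      have hSb : SS l p.2 ≤ rb := by
        have := hLB p.2 (by omega)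
        rw [← hrb, WithTop.coe_le_coe] at this
        exact this
      rw [← hra, ← hrb]
      simp only [WithTop.untopD_coe]
      rw [WithTop.coe_le_coe]
      have hba : (0 : ℝ) < (p.2 : ℝ) - p.1 := by
        have : (p.1 : ℝ) < p.2 := by exact_mod_cast hab
        linarith
      rw [le_div_iff₀ hba]
      have hconv := SS_convex hl (show p.1 ≤ n by omega) (show n ≤ p.2 by omega) hp3
      have c1 : (0 : ℝ) ≤ (p.2 : ℝ) - n := by
        have : (n : ℝ) ≤ p.2 := by exact_mod_cast hp2
        linarith
      have c2 : (0 : ℝ) ≤ (n : ℝ) - p.1 := by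
        have : (p.1 : ℝ) ≤ n := by exact_mod_cast (by omega : p.1 ≤ n)
        linarith
      nlinarith [mul_le_mul_of_nonneg_left hSa c1, mul_le_mul_of_nonneg_left hSb c2]



section Newton

variable {K : Type*} [Field K] {v : K → WithTop ℝ}
  (hv0 : ∀ x : K, v x = ⊤ ↔ x = 0)
  (hvmul : ∀ x y : K, v (x * y) = v x + v y)
  (hvadd : ∀ x y : K, min (v x) (v y) ≤ v (x + y))

include hv0 hvmul hvadd

lemma v_esymm_lb (A : Multiset K) (hA : ∀ x ∈ A, x ≠ 0) (i : ℕ) (c : ℝ)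
    (hc : ∀ T : Multiset K, T ≤ A → Multiset.card T = i → c ≤ ((T.map (w v)).sum)) :
    (c : WithTop ℝ) ≤ v (A.esymm i) := by
  rw [Multiset.esymm]
  refine v_multiset_sum_le hv0 hvmul hvadd ?_
  intro x hx
  obtain ⟨T, hT, rfl⟩ := Multiset.mem_map.mp hx
  obtain ⟨hTle, hTcard⟩ := Multiset.mem_powersetCard.mp hT
  rw [v_multiset_prod hv0 hvmul (fun y hy => hA y (Multiset.mem_of_le hTle hy))]
  exact WithTop.coe_le_coe.mpr (hc T hTle hTcard)

omit hv0 hvmul hvadd in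
/-- the sum of the `w`-values of any size-`n` sub-multiset is at least the sum of the `n`
smallest values -/
lemma min_take (M : Multiset K) (T : Multiset K) (hT : T ≤ M) :
    SS ((M.map (w v)).sort (· ≤ ·)) (Multiset.card T) ≤ ((T.map (w v)).sum) := by
  set l := (M.map (w v)).sort (· ≤ ·) with hldef
  have hls : l.Pairwise (· ≤ ·) := Multiset.pairwise_sort _ _
  have hle : (T.map (w v)) ≤ ↑l := by
    rw [hldef, Multiset.sort_eq]
    exact Multiset.map_le_map hT
  rw [← Multiset.coe_toList (T.map (w v)), Multiset.coe_le] at hle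
  obtain ⟨u, hperm, hsub⟩ := hle
  have h1 := take_sum_le_sublist hsub hls
  have h2 : u.length = Multiset.card T := by
    rw [hperm.length_eq, Multiset.length_toList, Multiset.card_map]
  have h3 : u.sum = (T.map (w v)).sum := by
    rw [hperm.sum_eq, ← Multiset.sum_coe, Multiset.coe_toList]
  rw [h2, h3] at h1
  exact h1

omit hv0 hvmul hvadd in
lemma esymm_card_eq_prod (A : Multiset K) : A.esymm (Multiset.card A) = A.prod := by
  have hcard : Multiset.card (A.powersetCard (Multiset.card A)) = 1 := by
    rw [Multiset.card_powersetCard, Nat.choose_self]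
  obtain ⟨B, hB⟩ := Multiset.card_eq_one.mp hcard
  have hAB : A = B := by
    have : A ∈ A.powersetCard (Multiset.card A) :=
      Multiset.mem_powersetCard.mpr ⟨le_refl A, rfl⟩
    rw [hB, Multiset.mem_singleton] at this
    exact this
  rw [Multiset.esymm, hB, ← hAB]
  simp

omit hv0 hvmul hvadd in
lemma natDegree_prod_X_add_C (A : Multiset K) :
    ((A.map fun r => X + C r).prod).natDegree = Multiset.card A := by
  rw [Polynomial.natDegree_multiset_prod_of_monic _ (by
    intro f hf
    obtain ⟨r, _, rfl⟩ := Multiset.mem_map.mp hf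
    exact monic_X_add_C r)]
  rw [Multiset.map_map]
  rw [show ((fun p : K[X] => p.natDegree) ∘ fun r : K => X + C r) = fun _ => 1 by
    funext r; simp [natDegree_X_add_C]]
  simp [Multiset.map_const']

omit hv0 hvmul hvadd in
lemma filter_sorted_take {l : List ℝ} (hl : l.Pairwise (· ≤ ·)) {n : ℕ} (hn : n < l.length)
    (hn0 : 0 < n) (gap : l.getD (n - 1) 0 < l.getD n 0) :
    l.filter (fun x => decide (x ≤ l.getD (n - 1) 0)) = l.take n := by
  set c := l.getD (n - 1) 0 with hc
  conv_lhs => rw [← List.take_append_drop n l]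
  rw [List.filter_append]
  have h1 : (l.take n).filter (fun x => decide (x ≤ c)) = l.take n := by
    refine List.filter_eq_self.mpr ?_
    intro x hx
    simp only [decide_eq_true_eq]
    obtain ⟨i, hi, hx⟩ := List.mem_iff_getElem.mp hx
    have hi' : i < n := by simp at hi; omega
    have hi'' : i < l.length := by simp at hi; omega
    rw [← hx, List.getElem_take]
    have h5 := getD_mono hl (show i ≤ n - 1 by omega) (show n - 1 < l.length by omega)
    rwa [List.getD_eq_getElem l 0 hi''] at h5
  have h2 : (l.drop n).filter (fun x => decide (x ≤ c)) = [] := by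
    rw [List.filter_eq_nil_iff]
    intro x hx
    obtain ⟨i, hi, hx⟩ := List.mem_iff_getElem.mp hx
    have hi' : n + i < l.length := by simp at hi; omega
    have g1 : c < l.getD (n + i) 0 := lt_of_lt_of_le gap (getD_mono hl (by omega) hi')
    rw [List.getD_eq_getElem l 0 hi'] at g1
    simp only [decide_eq_true_eq, not_le]
    rw [← hx, List.getElem_drop]
    exact g1
  rw [h1, h2, List.append_nil]


include hvadd in
/-- at a vertex of the Newton polygon, the valuation of the elementary symmetric function
equals the sum of the smallest `n` valuations -/
lemma v_esymm_vertex (M : Multiset K) (hM : ∀ x ∈ M, x ≠ 0) {n : ℕ}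
    (hn0 : 0 < n) (hnm : n < Multiset.card M)
    (gap : ((M.map (w v)).sort (· ≤ ·)).getD (n - 1) 0 < ((M.map (w v)).sort (· ≤ ·)).getD n 0) :
    v (M.esymm n) = ((SS ((M.map (w v)).sort (· ≤ ·)) n : ℝ) : WithTop ℝ) := by
  classical
  set l := (M.map (w v)).sort (· ≤ ·) with hldef
  have hls : l.Pairwise (· ≤ ·) := Multiset.pairwise_sort _ _
  have hlen : l.length = Multiset.card M := by
    rw [hldef, Multiset.length_sort, Multiset.card_map]
  set m := Multiset.card M with hm
  set c := l.getD (n - 1) 0 with hc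
  set A := M.filter (fun x => w v x ≤ c) with hA
  set B := M.filter (fun x => ¬ (w v x ≤ c)) with hB
  have hMAB : A + B = M := Multiset.filter_add_not _ M
  have hAle : A ≤ M := Multiset.filter_le _ M
  have hBle : B ≤ M := Multiset.filter_le _ M
  have hAne : ∀ x ∈ A, x ≠ 0 := fun x hx => hM x (Multiset.mem_of_le hAle hx)
  have hBne : ∀ x ∈ B, x ≠ 0 := fun x hx => hM x (Multiset.mem_of_le hBle hx)
  -- A's w-values are the n smallest
  have hAmap : A.map (w v) = (↑(l.take n) : Multiset ℝ) := by
    have h1 : A.map (w v) = (M.map (w v)).filter (fun y => y ≤ c) := by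
      rw [hA, Multiset.filter_map]
      rfl
    have h2 : M.map (w v) = (↑l : Multiset ℝ) := (Multiset.sort_eq _ _).symm
    rw [h1, h2]
    have h3 := filter_sorted_take hls (by omega) hn0 gap
    rw [← hc] at h3
    rw [show (Multiset.filter (fun y => y ≤ c) ↑l : Multiset ℝ)
        = ↑(l.filter (fun y => decide (y ≤ c))) from rfl, h3]
  have hAcard : Multiset.card A = n := by
    have := congrArg Multiset.card hAmap
    rw [Multiset.card_map, Multiset.coe_card, List.length_take] at this
    omega
  have hAsum : (A.map (w v)).sum = SS l n := by
    rw [hAmap, Multiset.sum_coe, SS]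
  have hBcard : Multiset.card B = m - n := by
    have := congrArg Multiset.card hMAB
    rw [Multiset.card_add] at this
    omega
  have hBval : ∀ x ∈ B, l.getD n 0 ≤ w v x := by
    intro x hx
    have hxM : x ∈ M := Multiset.mem_of_le hBle hx
    have hnle : ¬ (w v x ≤ c) := (Multiset.mem_filter.mp hx).2
    have hmem : w v x ∈ l := by
      rw [← Multiset.mem_coe, Multiset.sort_eq]
      exact Multiset.mem_map_of_mem _ hxM
    obtain ⟨i, hi, hix⟩ := List.mem_iff_getElem.mp hmem
    rcases lt_or_ge i n with hin | hin
    · exfalso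
      apply hnle
      have h5 := getD_mono hls (show i ≤ n - 1 by omega) (show n - 1 < l.length by omega)
      rw [List.getD_eq_getElem l 0 hi, hix] at h5
      exact h5
    · have h5 := getD_mono hls hin hi
      rwa [List.getD_eq_getElem l 0 hi, hix] at h5
  -- the convolution identity
  have hconv : M.esymm n = A.prod +
      ∑ i ∈ Finset.range (m - n),
        ((A.map fun r => X + C r).prod.coeff (i + 1)) *
        ((B.map fun r => X + C r).prod.coeff (m - n - (i + 1))) := by
    have h0 : M.esymm n = ((M.map fun r => X + C r).prod).coeff (m - n) := by
      rw [Multiset.prod_X_add_C_coeff M (by omega : m - n ≤ Multiset.card M)]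
      congr 1
      omega
    have h1 : (M.map fun r => X + C r).prod
        = (A.map fun r => X + C r).prod * (B.map fun r => X + C r).prod := by
      rw [← hMAB, Multiset.map_add, Multiset.prod_add]
    rw [h0, h1, Polynomial.coeff_mul]
    rw [Finset.Nat.sum_antidiagonal_eq_sum_range_succ_mk]
    rw [Finset.sum_range_succ']
    have hfirst : ((A.map fun r => X + C r).prod.coeff 0) *
        ((B.map fun r => X + C r).prod.coeff (m - n - 0)) = A.prod := by
      rw [Multiset.prod_X_add_C_coeff A (by omega : 0 ≤ Multiset.card A),
        Multiset.prod_X_add_C_coeff B (by rw [hBcard]; omega : m - n - 0 ≤ Multiset.card B)]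
      rw [hAcard, hBcard]
      rw [show n - 0 = n by omega, show m - n - (m - n - 0) = 0 by omega]
      rw [← hAcard, esymm_card_eq_prod]
      simp [Multiset.esymm, Multiset.powersetCard_zero_left]
    rw [hfirst, add_comm]
  -- each nontrivial term has strictly bigger valuation
  have hdelta : (0 : ℝ) < l.getD n 0 - c := by
    rw [hc]; linarith [gap]
  have hterm : ∀ i ∈ Finset.range (m - n),
      ((SS l n + (l.getD n 0 - c) : ℝ) : WithTop ℝ) ≤
      v (((A.map fun r => X + C r).prod.coeff (i + 1)) *
        ((B.map fun r => X + C r).prod.coeff (m - n - (i + 1)))) := by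
    intro i hi
    rw [Finset.mem_range] at hi
    set j := i + 1 with hj
    have hj1 : 1 ≤ j := by omega
    have hjmn : j ≤ m - n := by omega
    rcases le_or_gt j n with hjn | hjn
    · -- main case:  esymm A (n - j) * esymm B j
      rw [Multiset.prod_X_add_C_coeff A (show j ≤ Multiset.card A by omega),
        Multiset.prod_X_add_C_coeff B (show m - n - j ≤ Multiset.card B by omega)]
      rw [hAcard, hBcard, show m - n - (m - n - j) = j by omega]
      rw [hvmul]
      have hA1 : ((SS l (n - j) : ℝ) : WithTop ℝ) ≤ v (A.esymm (n - j)) := by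
        refine v_esymm_lb hv0 hvmul hvadd A hAne _ _ ?_
        intro T hT hTc
        have := min_take (v := v) M T (le_trans hT hAle)
        rw [hTc] at this
        rw [← hldef] at this
        exact this
      have hB1 : (((j : ℝ) * l.getD n 0 : ℝ) : WithTop ℝ) ≤ v (B.esymm j) := by
        refine v_esymm_lb hv0 hvmul hvadd B hBne _ _ ?_
        intro T hT hTc
        have hbd : ∀ y ∈ T.map (w v), l.getD n 0 ≤ y := by
          intro y hy
          obtain ⟨x, hx, rfl⟩ := Multiset.mem_map.mp hy
          exact hBval x (Multiset.mem_of_le hT hx)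
        have := Multiset.card_nsmul_le_sum hbd
        rw [Multiset.card_map, hTc, nsmul_eq_mul] at this
        exact this
      calc ((SS l n + (l.getD n 0 - c) : ℝ) : WithTop ℝ)
          ≤ ((SS l (n - j) + (j : ℝ) * l.getD n 0 : ℝ) : WithTop ℝ) := by
            rw [WithTop.coe_le_coe]
            -- real inequality
            have hsl := slice_upper hls (n - j) j (by omega)
            rw [show n - j + j = n by omega, ← hc] at hsl
            have hj' : (1 : ℝ) ≤ (j : ℝ) := by exact_mod_cast hj1
            nlinarith [hdelta, mul_le_mul_of_nonneg_right hj' (le_of_lt hdelta)]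
        _ ≤ v (A.esymm (n - j)) + v (B.esymm j) := by
            rw [show ((SS l (n - j) + (j : ℝ) * l.getD n 0 : ℝ) : WithTop ℝ)
              = ((SS l (n - j) : ℝ) : WithTop ℝ) + (((j : ℝ) * l.getD n 0 : ℝ) : WithTop ℝ) from
              (WithTop.coe_add _ _)]
            exact add_le_add hA1 hB1
    · -- degenerate case: coefficient of A-part vanishes
      have hdeg : ((A.map fun r => X + C r).prod).natDegree < j := by
        rw [natDegree_prod_X_add_C, hAcard]; omega
      rw [Polynomial.coeff_eq_zero_of_natDegree_lt hdeg, zero_mul]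
      rw [(hv0 0).mpr rfl]
      exact le_top
  -- put it together
  have hrest : ((SS l n + (l.getD n 0 - c) : ℝ) : WithTop ℝ) ≤
      v (∑ i ∈ Finset.range (m - n),
        ((A.map fun r => X + C r).prod.coeff (i + 1)) *
        ((B.map fun r => X + C r).prod.coeff (m - n - (i + 1)))) :=
    v_finset_sum_le hv0 hvmul hvadd hterm
  have hAprod : v A.prod = ((SS l n : ℝ) : WithTop ℝ) := by
    rw [v_multiset_prod hv0 hvmul hAne, hAsum]
  rw [hconv]
  rw [v_add_eq_left hv0 hvmul hvadd (lt_of_lt_of_le (by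
    rw [hAprod, WithTop.coe_lt_coe]; linarith [hdelta]) hrest)]
  exact hAprod

/-- Main Newton-polygon lemma: equal coefficient valuations imply equal root-valuation
multisets. -/
theorem newton_eq (M N : Multiset K) (hM : ∀ x ∈ M, x ≠ 0) (hN : ∀ x ∈ N, x ≠ 0)
    (hcard : Multiset.card M = Multiset.card N)
    (h : ∀ n : ℕ, v (((M.map fun r => X - C r).prod).coeff n)
      = v (((N.map fun r => X - C r).prod).coeff n)) :
    M.map (w v) = N.map (w v) := by
  classical
  have hm : Multiset.card M = Multiset.card M := rfl
  set m := Multiset.card M with hm'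
  -- valuations of esymm agree
  have hsign : ∀ (k : ℕ) (y : K), v ((-1) ^ k * y) = v y := by
    intro k y
    rw [hvmul]
    have hv1 : v ((-1 : K) ^ k) = 0 := by
      rcases Nat.even_or_odd k with hk | hk
      · rw [hk.neg_one_pow]; exact v_one hv0 hvmul
      · rw [hk.neg_one_pow, show (-1 : K) = -(1 : K) from rfl, v_neg hv0 hvmul]
        exact v_one hv0 hvmul
    rw [hv1, zero_add]
  have hesymm : ∀ n, n ≤ m → v (M.esymm n) = v (N.esymm n) := by
    intro n hn
    have h1 := h (m - n)
    rw [Multiset.prod_X_sub_C_coeff M (show m - n ≤ Multiset.card M by omega),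
      Multiset.prod_X_sub_C_coeff N (show m - n ≤ Multiset.card N by omega)] at h1
    rw [show Multiset.card M - (m - n) = n by omega,
      show Multiset.card N - (m - n) = n by omega] at h1
    rw [hsign, hsign] at h1
    exact h1
  -- set up both sorted lists and apply the reconstruction
  set lM := (M.map (w v)).sort (· ≤ ·) with hlM
  set lN := (N.map (w v)).sort (· ≤ ·) with hlN
  have hsM : lM.Pairwise (· ≤ ·) := Multiset.pairwise_sort _ _
  have hsN : lN.Pairwise (· ≤ ·) := Multiset.pairwise_sort _ _
  have hlenM : lM.length = m := by rw [hlM, Multiset.length_sort, Multiset.card_map]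
  have hlenN : lN.length = m := by
    rw [hlN, Multiset.length_sort, Multiset.card_map]; omega
  have hcoeM : (↑lM : Multiset ℝ) = M.map (w v) := Multiset.sort_eq _ _
  have hcoeN : (↑lN : Multiset ℝ) = N.map (w v) := Multiset.sort_eq _ _
  -- reconstruction hypotheses for a general multiset
  have recon_all : ∀ (P : Multiset K) (hP : ∀ x ∈ P, x ≠ 0),
      ∀ n ≤ Multiset.card P,
      TT (fun i => v (P.esymm i)) (Multiset.card P) n
        = ((SS ((P.map (w v)).sort (· ≤ ·)) n : ℝ) : WithTop ℝ) := by
    intro P hP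
    set lP := (P.map (w v)).sort (· ≤ ·) with hlP
    have hsP : lP.Pairwise (· ≤ ·) := Multiset.pairwise_sort _ _
    have hlenP : lP.length = Multiset.card P := by
      rw [hlP, Multiset.length_sort, Multiset.card_map]
    have hres := recon lP hsP (fun i => v (P.esymm i)) ?_ ?_ ?_ ?_
    · intro n hn
      rw [← hlenP] at hn ⊢
      rw [← hres n hn, hlenP]
    · -- LB
      intro n hn
      refine v_esymm_lb hv0 hvmul hvadd P hP n (SS lP n) ?_
      intro T hT hTc
      have := min_take (v := v) P T hT
      rwa [hTc, ← hlP] at this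
    · -- V 0
      have h9 : P.esymm 0 = 1 := by simp [Multiset.esymm, Multiset.powersetCard_zero_left]
      show v (P.esymm 0) = _
      rw [h9, v_one hv0 hvmul]
      simp [SS]
    · -- V m
      show v (P.esymm lP.length) = _
      rw [hlenP, esymm_card_eq_prod, v_multiset_prod hv0 hvmul hP]
      congr 1
      rw [SS, ← hlenP, List.take_length, ← Multiset.sum_coe, hlP, Multiset.sort_eq]
    · -- vertices
      intro n hn0 hnm gap
      rw [hlenP] at hnm
      exact v_esymm_vertex hv0 hvmul hvadd P hP hn0 hnm gap
  have hSS : ∀ n, n ≤ m → SS lM n = SS lN n := by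
    intro n hn
    have h1 := recon_all M hM n (by omega)
    have h2 := recon_all N hN n (by omega)
    rw [← hcard] at h2
    have h3 : TT (fun i => v (M.esymm i)) m n = TT (fun i => v (N.esymm i)) m n :=
      TT_congr hn hesymm
    exact WithTop.coe_injective (h1.symm.trans (h3.trans h2))
  -- conclude the sorted lists are equal
  have hlists : lM = lN := by
    apply List.ext_getElem (by omega)
    intro i h1 h2
    have hi : i < m := by omega
    have e1 : SS lM (i + 1) = SS lM i + lM[i] := by
      have := SS_succ (l := lM) (n := i) (by omega)
      rwa [List.getD_eq_getElem lM 0 (by omega)] at this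
    have e2 : SS lN (i + 1) = SS lN i + lN[i] := by
      have := SS_succ (l := lN) (n := i) (by omega)
      rwa [List.getD_eq_getElem lN 0 (by omega)] at this
    have q1 := hSS i (by omega)
    have q2 := hSS (i + 1) (by omega)
    rw [e1, e2] at q2
    linarith
  rw [← hcoeM, ← hcoeN, hlists]


omit hv0 hvmul hvadd in
lemma coe_finset_sum {ι : Type*} (s : Finset ι) (g : ι → ℝ) :
    ((∑ i ∈ s, g i : ℝ) : WithTop ℝ) = ∑ i ∈ s, ((g i : ℝ) : WithTop ℝ) := by
  classical
  induction s using Finset.cons_induction with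
  | empty => simp
  | cons a s ha ih => rw [Finset.sum_cons, Finset.sum_cons, WithTop.coe_add, ih]

lemma v_finset_prod_pow {ι : Type*} (s : Finset ι) (f : ι → K) (e : ι → ℕ)
    (hf : ∀ i ∈ s, f i ≠ 0) :
    v (∏ i ∈ s, f i ^ e i) = ((∑ i ∈ s, (e i : ℝ) * w v (f i) : ℝ) : WithTop ℝ) := by
  classical
  induction s using Finset.cons_induction with
  | empty => simpa using v_one hv0 hvmul
  | cons a s ha ih =>
      rw [Finset.prod_cons, Finset.sum_cons, hvmul,
        ih (fun i hi => hf i (Finset.mem_cons_of_mem hi)),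
        v_pow_coe hv0 hvmul (hf a (Finset.mem_cons_self a s)), ← WithTop.coe_add]

omit hv0 hvmul hvadd in
lemma esymm_map_ringHom {R S : Type*} [CommSemiring R] [CommSemiring S] (f : R →+* S)
    (s : Multiset R) (n : ℕ) : (s.map f).esymm n = f (s.esymm n) := by
  rw [Multiset.esymm, Multiset.esymm, Multiset.powersetCard_map, Multiset.map_map,
    map_multiset_sum, Multiset.map_map]
  congr 1
  apply Multiset.map_congr rfl
  intro T hT
  simp [map_multiset_prod]

omit hv0 hvmul hvadd in
lemma natDegree_msum_le {R : Type*} [CommSemiring R] (l : Multiset (Polynomial R)) (D : ℕ)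
    (h : ∀ q ∈ l, q.natDegree ≤ D) : l.sum.natDegree ≤ D := by
  induction l using Multiset.induction with
  | empty => simp
  | cons a s ih =>
      rw [Multiset.sum_cons]
      refine le_trans (Polynomial.natDegree_add_le _ _) ?_
      exact max_le (h a (Multiset.mem_cons_self a s))
        (ih fun q hq => h q (Multiset.mem_cons_of_mem hq))

omit hv0 hvmul hvadd in
lemma enc_inj {d : ℕ} {p q : Fin d × Fin d}
    (h : p.1.val * d + p.2.val = q.1.val * d + q.2.val) : p = q := by
  have hp2 : p.2.val < d := p.2.isLt
  have hq2 : q.2.val < d := q.2.isLt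
  have h2 : p.2.val = q.2.val := by
    have e1 : (p.1.val * d + p.2.val) % d = p.2.val := by
      simp [Nat.mul_add_mod', Nat.mod_eq_of_lt hp2]
    have e2 : (q.1.val * d + q.2.val) % d = q.2.val := by
      simp [Nat.mul_add_mod', Nat.mod_eq_of_lt hq2]
    rw [← e1, ← e2, h]
  have h1 : p.1.val = q.1.val := by
    have h' := h
    rw [h2] at h'
    exact Nat.eq_of_mul_eq_mul_right (by omega) (Nat.add_right_cancel h')
  exact Prod.ext (Fin.ext h1) (Fin.ext h2)

end Newton

end TropNewton


namespace TropNewton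

/-- degree of a product of monic linear factors over a commutative ring -/
lemma natDegree_prod_X_sub_C' {R : Type*} [CommRing R] [Nontrivial R] (A : Multiset R) :
    ((A.map fun r => X - C r).prod).natDegree = Multiset.card A := by
  rw [Polynomial.natDegree_multiset_prod_of_monic _ (by
    intro f hf
    obtain ⟨r, _, rfl⟩ := Multiset.mem_map.mp hf
    exact monic_X_sub_C r)]
  rw [Multiset.map_map]
  rw [show ((fun p : R[X] => p.natDegree) ∘ fun r : R => X - C r) = fun _ => 1 by
    funext r; simp [natDegree_X_sub_C]]
  simp [Multiset.map_const']

end TropNewton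

/-- For a field `K` with an additive ultrametric valuation `v` and a fixed
degree `d ≥ 1`, there is a *finite* set `W` of weight functions such that the tropical
invariants attached to the weights in `W` determine the marked tree filtration of the roots
of any separable degree-`d` polynomial splitting over `K`: finitely many edge-weighted
graphs suffice. -/
theorem finitely_many_weights_determine_tree
    {K : Type*} [Field K] (v : K → WithTop ℝ)
    (hv0 : ∀ x : K, v x = ⊤ ↔ x = 0)
    (hvmul : ∀ x y : K, v (x * y) = v x + v y)
    (hvadd : ∀ x y : K, min (v x) (v y) ≤ v (x + y))
    (d : ℕ) (hd : 1 ≤ d) :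
    ∃ W : Finset (Fin d → Fin d → ℕ),
      ∀ α β : Fin d → K, Function.Injective α → Function.Injective β →
        (∀ k ∈ W, ∀ n : ℕ,
          v ((∏ σ : Equiv.Perm (Fin d),
                (X - C (∏ p ∈ univ.filter (fun p : Fin d × Fin d => p.1 < p.2),
                  (α (σ p.1) - α (σ p.2)) ^ (2 * k p.1 p.2)))).coeff n)
            = v ((∏ σ : Equiv.Perm (Fin d),
                (X - C (∏ p ∈ univ.filter (fun p : Fin d × Fin d => p.1 < p.2),
                  (β (σ p.1) - β (σ p.2)) ^ (2 * k p.1 p.2)))).coeff n)) →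
        ∃ σ : Equiv.Perm (Fin d), ∀ i j : Fin d,
          v (α i - α j) = v (β (σ i) - β (σ j)) := by
  classical
  set P : Finset (Fin d × Fin d) := univ.filter (fun p : Fin d × Fin d => p.1 < p.2) with hPdef
  set m : ℕ := Fintype.card (Equiv.Perm (Fin d)) with hmdef
  set De : ℕ := d * d with hDedef
  refine ⟨(Finset.range (m * De + 1)).image
    (fun c => fun i j : Fin d => c ^ (i.val * d + j.val)), ?_⟩
  intro α β hα hβ hcoeff
  have hdiff : ∀ (γ : Fin d → K), Function.Injective γ → ∀ (σ : Equiv.Perm (Fin d)),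
      ∀ p ∈ P, γ (σ p.1) - γ (σ p.2) ≠ 0 := by
    intro γ hγ σ p hp
    have hlt : p.1 < p.2 := (Finset.mem_filter.mp hp).2
    exact sub_ne_zero_of_ne fun hEq => absurd (σ.injective (hγ hEq)) (ne_of_lt hlt)
  set Q : (Fin d → K) → Equiv.Perm (Fin d) → Polynomial ℝ := fun γ σ =>
    ∑ p ∈ P, Polynomial.C (2 * TropNewton.w v (γ (σ p.1) - γ (σ p.2)))
      * Polynomial.X ^ (p.1.val * d + p.2.val) with hQ
  have hencb : ∀ p : Fin d × Fin d, p.1.val * d + p.2.val ≤ De := by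
    intro p
    have h2 : p.1.val * d + p.2.val < (p.1.val + 1) * d := by
      have := p.2.isLt
      rw [add_mul, one_mul]
      omega
    have h3 : (p.1.val + 1) * d ≤ d * d :=
      Nat.mul_le_mul_right d (Nat.succ_le_of_lt p.1.isLt)
    rw [hDedef]
    omega
  have hQdeg : ∀ γ σ, (Q γ σ).natDegree ≤ De := by
    intro γ σ
    rw [hQ]
    refine Polynomial.natDegree_sum_le_of_forall_le _ _ ?_
    intro p hp
    refine le_trans (Polynomial.natDegree_C_mul_le _ _) ?_
    rw [Polynomial.natDegree_X_pow]
    exact hencb p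
  -- step 1: multiset equality of evaluations at each integer point
  have key : ∀ c : ℕ, c ∈ Finset.range (m * De + 1) →
      Multiset.map (fun σ : Equiv.Perm (Fin d) => (Q α σ).eval (c : ℝ)) Finset.univ.val
      = Multiset.map (fun σ : Equiv.Perm (Fin d) => (Q β σ).eval (c : ℝ)) Finset.univ.val := by
    intro c hc
    set k : Fin d → Fin d → ℕ := fun i j => c ^ (i.val * d + j.val) with hkdef
    have hkW : k ∈ (Finset.range (m * De + 1)).image
        (fun c => fun i j : Fin d => c ^ (i.val * d + j.val)) :=
      Finset.mem_image_of_mem _ hc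
    have hco := hcoeff k hkW
    have hnew := TropNewton.newton_eq hv0 hvmul hvadd
      (Multiset.map (fun σ : Equiv.Perm (Fin d) =>
        ∏ p ∈ P, (α (σ p.1) - α (σ p.2)) ^ (2 * k p.1 p.2)) Finset.univ.val)
      (Multiset.map (fun σ : Equiv.Perm (Fin d) =>
        ∏ p ∈ P, (β (σ p.1) - β (σ p.2)) ^ (2 * k p.1 p.2)) Finset.univ.val)
      ?_ ?_ (by simp) ?_
    · -- convert w-values to evaluations
      have hwI : ∀ (γ : Fin d → K), Function.Injective γ →
          Multiset.map (TropNewton.w v) (Multiset.map (fun σ : Equiv.Perm (Fin d) =>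
            ∏ p ∈ P, (γ (σ p.1) - γ (σ p.2)) ^ (2 * k p.1 p.2)) Finset.univ.val)
          = Multiset.map (fun σ : Equiv.Perm (Fin d) => (Q γ σ).eval (c : ℝ))
              Finset.univ.val := by
        intro γ hγ
        rw [Multiset.map_map]
        apply Multiset.map_congr rfl
        intro σ _
        show TropNewton.w v (∏ p ∈ P, (γ (σ p.1) - γ (σ p.2)) ^ (2 * k p.1 p.2)) = _
        have hvI := TropNewton.v_finset_prod_pow hv0 hvmul hvadd P
          (fun p => γ (σ p.1) - γ (σ p.2)) (fun p => 2 * k p.1 p.2) (hdiff γ hγ σ)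
        rw [TropNewton.w, hvI, WithTop.untopD_coe, hQ]
        rw [Polynomial.eval_finset_sum]
        refine Finset.sum_congr rfl ?_
        intro p hp
        rw [Polynomial.eval_mul, Polynomial.eval_C, Polynomial.eval_pow, Polynomial.eval_X]
        simp only [hkdef]
        push_cast
        ring
      rw [← hwI α hα, ← hwI β hβ, hnew]
    · intro x hx
      obtain ⟨σ, -, rfl⟩ := Multiset.mem_map.mp hx
      exact Finset.prod_ne_zero_iff.mpr fun p hp => pow_ne_zero _ (hdiff α hα σ p hp)
    · intro x hx
      obtain ⟨σ, -, rfl⟩ := Multiset.mem_map.mp hx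
      exact Finset.prod_ne_zero_iff.mpr fun p hp => pow_ne_zero _ (hdiff β hβ σ p hp)
    · intro n
      have e1 : ∀ (γ : Fin d → K),
          (Multiset.map (fun r : K => X - C r) (Multiset.map (fun σ : Equiv.Perm (Fin d) =>
            ∏ p ∈ P, (γ (σ p.1) - γ (σ p.2)) ^ (2 * k p.1 p.2)) Finset.univ.val)).prod
          = ∏ σ : Equiv.Perm (Fin d),
              (X - C (∏ p ∈ P, (γ (σ p.1) - γ (σ p.2)) ^ (2 * k p.1 p.2))) := by
        intro γ
        rw [Multiset.map_map, Finset.prod_eq_multiset_prod]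
        rfl
      rw [e1, e1]
      exact hco n
  -- step 2: esymm polynomials agree
  have hesymm : ∀ n : ℕ,
      (Multiset.map (Q α) Finset.univ.val).esymm n
        = (Multiset.map (Q β) Finset.univ.val).esymm n := by
    intro n
    have hdegE : ∀ γ : Fin d → K,
        ((Multiset.map (Q γ) Finset.univ.val).esymm n).natDegree ≤ m * De := by
      intro γ
      rw [Multiset.esymm]
      refine TropNewton.natDegree_msum_le _ _ ?_
      intro q hq
      obtain ⟨T, hT, rfl⟩ := Multiset.mem_map.mp hq
      obtain ⟨hTle, hTcard⟩ := Multiset.mem_powersetCard.mp hT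
      refine le_trans (Polynomial.natDegree_multiset_prod_le _) ?_
      have hb : ∀ x ∈ T.map Polynomial.natDegree, x ≤ De := by
        intro x hx
        obtain ⟨qq, hqq, rfl⟩ := Multiset.mem_map.mp hx
        obtain ⟨σ, -, rfl⟩ := Multiset.mem_map.mp (Multiset.mem_of_le hTle hqq)
        exact hQdeg γ σ
      have hcardle : Multiset.card T ≤ m := by
        have h5 := Multiset.card_le_card hTle
        rw [Multiset.card_map] at h5
        simpa using h5
      calc (Multiset.map Polynomial.natDegree T).sum
          ≤ Multiset.card (Multiset.map Polynomial.natDegree T) • De :=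
            Multiset.sum_le_card_nsmul _ _ hb
        _ = Multiset.card T * De := by rw [Multiset.card_map, smul_eq_mul]
        _ ≤ m * De := Nat.mul_le_mul_right _ hcardle
    have hsub := Polynomial.eq_zero_of_natDegree_lt_card_of_eval_eq_zero
      ((Multiset.map (Q α) Finset.univ.val).esymm n
        - (Multiset.map (Q β) Finset.univ.val).esymm n)
      (f := fun i : Fin (m * De + 1) => ((i : ℕ) : ℝ))
      (fun i j hij => Fin.ext (Nat.cast_injective hij)) ?_ ?_
    · exact sub_eq_zero.mp hsub
    · intro i
      rw [Polynomial.eval_sub]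
      have h1 : ∀ γ : Fin d → K,
          (((Multiset.map (Q γ) Finset.univ.val).esymm n)).eval ((i : ℕ) : ℝ)
          = (Multiset.map (fun σ : Equiv.Perm (Fin d) =>
              (Q γ σ).eval ((i : ℕ) : ℝ)) Finset.univ.val).esymm n := by
        intro γ
        rw [show (Multiset.map (fun σ : Equiv.Perm (Fin d) =>
            (Q γ σ).eval ((i : ℕ) : ℝ)) Finset.univ.val)
          = Multiset.map (Polynomial.evalRingHom ((i : ℕ) : ℝ))
              (Multiset.map (Q γ) Finset.univ.val) by
            rw [Multiset.map_map]; rfl]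
        rw [TropNewton.esymm_map_ringHom]
        rfl
      rw [h1, h1, key (i : ℕ) (Finset.mem_range.mpr i.isLt), sub_self]
    · rw [Fintype.card_fin]
      refine lt_of_le_of_lt (Polynomial.natDegree_sub_le _ _) ?_
      have := hdegE α
      have := hdegE β
      omega
  -- step 3: the multisets of polynomials agree
  have hcards : ∀ γ : Fin d → K, Multiset.card (Multiset.map (Q γ) Finset.univ.val) = m := by
    intro γ
    simp [hmdef]
  have hprod :
      (Multiset.map (fun q : Polynomial ℝ => (X : Polynomial (Polynomial ℝ)) - C q)
        (Multiset.map (Q α) Finset.univ.val)).prod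
      = (Multiset.map (fun q : Polynomial ℝ => (X : Polynomial (Polynomial ℝ)) - C q)
        (Multiset.map (Q β) Finset.univ.val)).prod := by
    apply Polynomial.ext
    intro nn
    rcases le_or_gt nn m with hnn | hnn
    · rw [Multiset.prod_X_sub_C_coeff _ (by rw [hcards α]; exact hnn),
        Multiset.prod_X_sub_C_coeff _ (by rw [hcards β]; exact hnn)]
      rw [hcards α, hcards β, hesymm]
    · rw [Polynomial.coeff_eq_zero_of_natDegree_lt (by
          rw [TropNewton.natDegree_prod_X_sub_C', hcards α]; exact hnn),
        Polynomial.coeff_eq_zero_of_natDegree_lt (by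
          rw [TropNewton.natDegree_prod_X_sub_C', hcards β]; exact hnn)]
  have hroots := congrArg Polynomial.roots hprod
  rw [Polynomial.roots_multiset_prod_X_sub_C, Polynomial.roots_multiset_prod_X_sub_C] at hroots
  have hmem : Q α 1 ∈ Multiset.map (Q β) Finset.univ.val := by
    rw [← hroots]
    exact Multiset.mem_map_of_mem _ (Finset.mem_univ_val _)
  obtain ⟨τ, -, hτ⟩ := Multiset.mem_map.mp hmem
  refine ⟨τ, ?_⟩
  -- coefficient extraction
  have hcoefQ : ∀ (γ : Fin d → K) (σ : Equiv.Perm (Fin d)) (p : Fin d × Fin d), p ∈ P →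
      (Q γ σ).coeff (p.1.val * d + p.2.val)
        = 2 * TropNewton.w v (γ (σ p.1) - γ (σ p.2)) := by
    intro γ σ p hp
    rw [hQ]
    rw [Polynomial.finset_sum_coeff]
    rw [Finset.sum_eq_single_of_mem p hp]
    · rw [Polynomial.coeff_C_mul, Polynomial.coeff_X_pow, if_pos rfl, mul_one]
    · intro q hq hqp
      rw [Polynomial.coeff_C_mul, Polynomial.coeff_X_pow, if_neg, mul_zero]
      intro hEq
      exact hqp (TropNewton.enc_inj hEq).symm
  have hw : ∀ p : Fin d × Fin d, p ∈ P →
      TropNewton.w v (α p.1 - α p.2) = TropNewton.w v (β (τ p.1) - β (τ p.2)) := by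
    intro p hp
    have hcα := hcoefQ α 1 p hp
    have hcβ := hcoefQ β τ p hp
    simp only [Equiv.Perm.coe_one, id_eq] at hcα
    rw [hτ] at hcβ
    rw [hcα] at hcβ
    linarith
  -- conclusion
  intro i j
  rcases lt_trichotomy i j with hij | rfl | hij
  · have hp : (i, j) ∈ P := Finset.mem_filter.mpr ⟨Finset.mem_univ _, hij⟩
    have h1 := hw (i, j) hp
    have hne1 : α i - α j ≠ 0 :=
      sub_ne_zero_of_ne fun hEq => absurd (hα hEq) (ne_of_lt hij)
    have hne2 : β (τ i) - β (τ j) ≠ 0 :=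
      sub_ne_zero_of_ne fun hEq => absurd (τ.injective (hβ hEq)) (ne_of_lt hij)
    rw [← TropNewton.v_coe_w hv0 hne1, ← TropNewton.v_coe_w hv0 hne2]
    exact WithTop.coe_inj.mpr h1
  · rw [sub_self, sub_self]
  · have hp : (j, i) ∈ P := Finset.mem_filter.mpr ⟨Finset.mem_univ _, hij⟩
    have h1 := hw (j, i) hp
    have hne1 : α j - α i ≠ 0 :=
      sub_ne_zero_of_ne fun hEq => absurd (hα hEq) (ne_of_lt hij)
    have hne2 : β (τ j) - β (τ i) ≠ 0 :=
      sub_ne_zero_of_ne fun hEq => absurd (τ.injective (hβ hEq)) (ne_of_lt hij)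
    have e1 : v (α i - α j) = v (α j - α i) := by
      rw [show α i - α j = -(α j - α i) by ring, TropNewton.v_neg hv0 hvmul]
    have e2 : v (β (τ i) - β (τ j)) = v (β (τ j) - β (τ i)) := by
      rw [show β (τ i) - β (τ j) = -(β (τ j) - β (τ i)) by ring, TropNewton.v_neg hv0 hvmul]
    rw [e1, e2, ← TropNewton.v_coe_w hv0 hne1, ← TropNewton.v_coe_w hv0 hne2]
    exact WithTop.coe_inj.mpr h1
end

section
/- With the subtree setup below (L a maximal subtree of the tree of α with branch heights a₀ < … < a_m, recursively defined edge weights k, and β a family whose tree is isomorphic to that of α up to height a_m via L' and ρ), set M := Σ over unordered pairs {x,y} of distinct elements of L of k({x,y})·v(α x − α y). Then for EVERY injective map τ : L → Fin d one has Σ over unordered pairs {x,y} of distinct elements of L of k({x,y})·v(β(τ x) − β(τ y)) ≥ M. (Equivalently, every slope of the Newton polygon of the generating polynomial of the edge-weighted graph (G_c,k_c), evaluated on β, is at least the minimizing value M.) -/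
open Finset

section ValAux
variable {K : Type*} [Field K] (v : K → WithTop ℝ)

theorem val_one_aux (hv0 : ∀ x : K, v x = ⊤ ↔ x = 0)
    (hvmul : ∀ x y : K, v (x * y) = v x + v y) : v 1 = 0 := by
  have h := hvmul 1 1
  rw [one_mul] at h
  cases hc : v (1 : K) with
  | top => exact absurd ((hv0 1).mp hc) one_ne_zero
  | coe r =>
    rw [hc, ← WithTop.coe_add, WithTop.coe_eq_coe] at h
    have : r = 0 := by linarith
    exact_mod_cast this

theorem val_neg_aux (hv0 : ∀ x : K, v x = ⊤ ↔ x = 0)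
    (hvmul : ∀ x y : K, v (x * y) = v x + v y) (x : K) : v (-x) = v x := by
  have h1 : v (-1 : K) = 0 := by
    have h := hvmul (-1) (-1)
    rw [neg_one_mul, neg_neg, val_one_aux v hv0 hvmul] at h
    cases hc : v (-1 : K) with
    | top => exact absurd ((hv0 (-1)).mp hc) (by norm_num)
    | coe r =>
      rw [hc, ← WithTop.coe_add] at h
      have : r = 0 := by
        have := WithTop.coe_eq_coe.mp h.symm
        linarith
      exact_mod_cast this
  have := hvmul (-1) x
  rw [neg_one_mul, h1, zero_add] at this
  exact this

theorem val_sub_comm_aux (hv0 : ∀ x : K, v x = ⊤ ↔ x = 0)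
    (hvmul : ∀ x y : K, v (x * y) = v x + v y) (x y : K) :
    v (x - y) = v (y - x) := by
  rw [← neg_sub y x, val_neg_aux v hv0 hvmul]

theorem val_add_eq_aux (hv0 : ∀ x : K, v x = ⊤ ↔ x = 0)
    (hvmul : ∀ x y : K, v (x * y) = v x + v y)
    (hvadd : ∀ x y : K, min (v x) (v y) ≤ v (x + y))
    {x y : K} (h : v y < v x) : v (x + y) = v y := by
  refine le_antisymm ?_ (le_trans (by simp [min_le_right, h.le]) (hvadd x y))
  by_contra hc
  push_neg at hc
  have h2 : v y = v ((x + y) + (-x)) := by congr 1; ring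
  have h3 : min (v (x + y)) (v (-x)) ≤ v ((x + y) + (-x)) := hvadd _ _
  rw [← h2, val_neg_aux v hv0 hvmul] at h3
  have : v y < min (v (x + y)) (v x) := lt_min hc h
  exact absurd h3 (not_le.mpr this)

theorem nsmul_coe_aux (n : ℕ) (r : ℝ) :
    n • ((r : WithTop ℝ)) = ((n * r : ℝ) : WithTop ℝ) := by
  induction n with
  | zero => simp
  | succ k ih =>
    rw [succ_nsmul, ih, ← WithTop.coe_add, WithTop.coe_eq_coe]
    push_cast
    ring

end ValAux

/-- With the subtree setup (`L` a maximal subtree of the tree of `α` with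
branch heights `a 0 < … < a m`, recursively defined edge weights `k e = C (ι e + 1) + 1`,
and `β` a family whose tree is isomorphic to that of `α` up to height `a m` via `L'` and
`ρ`), set `M := Σ_{pairs {x,y} of L} k({x,y}) • v (α x - α y)`.  Then for every injective
map `τ : L → Fin d` one has
`Σ_{pairs {x,y} of L} k({x,y}) • v (β (τ x) - β (τ y)) ≥ M`:
every slope of the Newton polygon of the generating polynomial of the edge-weighted graph
`(G_c, k_c)`, evaluated on `β`, is at least the minimizing value `M`. -/
theorem newton_slopes_ge_minimizing_value
    {K : Type*} [Field K] (v : K → WithTop ℝ)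
    (hv0 : ∀ x : K, v x = ⊤ ↔ x = 0)
    (hvmul : ∀ x y : K, v (x * y) = v x + v y)
    (hvadd : ∀ x y : K, min (v x) (v y) ≤ v (x + y))
    (d : ℕ) (hd : 2 ≤ d)
    (α β : Fin d → K)
    (hα : Function.Injective α) (hβ : Function.Injective β)
    (m : ℕ) (a : ℕ → ℝ)
    (ha : ∀ i j : ℕ, i < j → j ≤ m → a i < a j)
    (L : Finset (Fin d))
    (ι : Fin d × Fin d → ℕ)
    -- (i) every pairwise valuation on L is one of the branch heights a 0, …, a m
    (hι : ∀ p ∈ (L ×ˢ L).filter (fun p : Fin d × Fin d => p.1 < p.2),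
      ι p ≤ m ∧ v (α p.1 - α p.2) = (a (ι p) : WithTop ℝ))
    -- (ii) every branch height is attained
    (hsurj : ∀ i ≤ m, ∃ p ∈ (L ×ˢ L).filter (fun p : Fin d × Fin d => p.1 < p.2), ι p = i)
    -- (iii) L is a maximal c-trivial subtree of the tree of α, for c slightly above a m
    (hmaxα : ∀ j : Fin d, ∃ x ∈ L, (a m : WithTop ℝ) < v (α j - α x))
    -- the recursively constructed weights
    (C : ℕ → ℕ)
    (hC0 : ∀ i : ℕ, m < i → C i = 0)
    (hCrec : ∀ i ≤ m, C i =
      ∑ p ∈ ((L ×ˢ L).filter (fun p : Fin d × Fin d => p.1 < p.2)).filter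
          (fun p => i ≤ ι p), (C (ι p + 1) + 1))
    -- the tree of β is isomorphic to that of α up to height a m, via L' and ρ
    (L' : Finset (Fin d)) (ρ : Fin d → Fin d)
    (hρbij : Set.BijOn ρ ↑L' ↑L)
    (hρval : ∀ x ∈ L', ∀ y ∈ L', v (β x - β y) = v (α (ρ x) - α (ρ y)))
    (hmaxβ : ∀ j : Fin d, ∃ x ∈ L', (a m : WithTop ℝ) < v (β j - β x))
    -- an arbitrary injective placement τ of L
    (τ : Fin d → Fin d) (hτ : Set.InjOn τ ↑L) :
    (∑ p ∈ (L ×ˢ L).filter (fun p : Fin d × Fin d => p.1 < p.2),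
        (C (ι p + 1) + 1) • v (α p.1 - α p.2))
      ≤ ∑ p ∈ (L ×ˢ L).filter (fun p : Fin d × Fin d => p.1 < p.2),
          (C (ι p + 1) + 1) • v (β (τ p.1) - β (τ p.2)) := by
  classical
  have hvsymm : ∀ x y : K, v (x - y) = v (y - x) := val_sub_comm_aux v hv0 hvmul
  set P := (L ×ˢ L).filter (fun p : Fin d × Fin d => p.1 < p.2) with hPdef
  have hmemP : ∀ p : Fin d × Fin d, p ∈ P ↔ p.1 ∈ L ∧ p.2 ∈ L ∧ p.1 < p.2 := by
    intro p
    simp [hPdef, Finset.mem_filter, Finset.mem_product, and_assoc]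
  -- monotonicity of the branch heights
  have hamono : ∀ i j : ℕ, i ≤ j → j ≤ m → a i ≤ a j := by
    intro i j hij hj
    rcases eq_or_lt_of_le hij with h | h
    · rw [h]
    · exact (ha i j h hj).le
  have haarev : ∀ i j : ℕ, i ≤ m → j ≤ m → a i ≤ a j → i ≤ j := by
    intro i j hi hj hle
    by_contra hcc
    push_neg at hcc
    exact absurd hle (not_le.mpr (ha j i hcc hi))
  -- the symmetrized level function on L
  set iv : Fin d → Fin d → ℕ := fun x y => if x < y then ι (x, y) else ι (y, x) with hivdef
  have hiv : ∀ x ∈ L, ∀ y ∈ L, x ≠ y →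
      iv x y ≤ m ∧ v (α x - α y) = (a (iv x y) : WithTop ℝ) := by
    intro x hx y hy hxy
    rcases lt_or_gt_of_ne hxy with h | h
    · have hp : (x, y) ∈ P := (hmemP _).mpr ⟨hx, hy, h⟩
      obtain ⟨h1, h2⟩ := hι (x, y) hp
      have hivxy : iv x y = ι (x, y) := by rw [hivdef]; simp [h]
      rw [hivxy]
      exact ⟨h1, h2⟩
    · have hp : (y, x) ∈ P := (hmemP _).mpr ⟨hy, hx, h⟩
      obtain ⟨h1, h2⟩ := hι (y, x) hp
      have hivxy : iv x y = ι (y, x) := by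
        rw [hivdef]; simp [not_lt.mpr h.le]
      rw [hivxy, hvsymm]
      exact ⟨h1, h2⟩
  have hvle : ∀ x ∈ L, ∀ y ∈ L, x ≠ y → v (α x - α y) ≤ (a m : WithTop ℝ) := by
    intro x hx y hy hxy
    obtain ⟨h1, h2⟩ := hiv x hx y hy hxy
    rw [h2]
    exact WithTop.coe_le_coe.mpr (hamono _ m h1 le_rfl)
  -- the nearest-point map σ into L'
  have hσex : ∀ j : Fin d, ∃ x, x ∈ L' ∧ (a m : WithTop ℝ) < v (β j - β x) := by
    intro j
    obtain ⟨x, hx1, hx2⟩ := hmaxβ j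
    exact ⟨x, hx1, hx2⟩
  set σ : Fin d → Fin d := fun j => (hσex j).choose with hσdef
  have hσL : ∀ j, σ j ∈ L' := fun j => (hσex j).choose_spec.1
  have hσv : ∀ j, (a m : WithTop ℝ) < v (β j - β (σ j)) := fun j => (hσex j).choose_spec.2
  set π : Fin d → Fin d := fun x => ρ (σ (τ x)) with hπdef
  have hπL : ∀ x, π x ∈ L := fun x => hρbij.mapsTo (hσL (τ x))
  -- key comparison of β-valuations with α-valuations
  have hkey1 : ∀ x y : Fin d, π x = π y → (a m : WithTop ℝ) < v (β (τ x) - β (τ y)) := by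
    intro x y hxy
    have hs : σ (τ x) = σ (τ y) := hρbij.injOn (hσL (τ x)) (hσL (τ y)) hxy
    have heq : β (τ x) - β (τ y)
        = (β (τ x) - β (σ (τ x))) + (-(β (τ y) - β (σ (τ x)))) := by ring
    rw [heq]
    refine lt_of_lt_of_le (lt_min (hσv (τ x)) ?_) (hvadd _ _)
    rw [val_neg_aux v hv0 hvmul, hs]
    exact hσv (τ y)
  have hkey2 : ∀ x y : Fin d, π x ≠ π y →
      v (β (τ x) - β (τ y)) = v (α (π x) - α (π y)) := by
    intro x y hxy
    have hs : σ (τ x) ≠ σ (τ y) := by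
      intro h
      exact hxy (by rw [hπdef]; simp only; rw [h])
    have hBm : v (β (σ (τ x)) - β (σ (τ y))) = v (α (π x) - α (π y)) :=
      hρval _ (hσL (τ x)) _ (hσL (τ y))
    have hBmle : v (β (σ (τ x)) - β (σ (τ y))) ≤ (a m : WithTop ℝ) := by
      rw [hBm]
      exact hvle _ (hπL x) _ (hπL y) hxy
    have e1 : v ((β (σ (τ x)) - β (σ (τ y))) + (β (σ (τ y)) - β (τ y)))
        = v (β (σ (τ x)) - β (σ (τ y))) := by
      rw [add_comm]
      refine val_add_eq_aux v hv0 hvmul hvadd (lt_of_le_of_lt hBmle ?_)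
      rw [hvsymm]
      exact hσv (τ y)
    have e2 : β (τ x) - β (τ y)
        = (β (τ x) - β (σ (τ x)))
          + ((β (σ (τ x)) - β (σ (τ y))) + (β (σ (τ y)) - β (τ y))) := by ring
    rw [e2, val_add_eq_aux v hv0 hvmul hvadd (by rw [e1]; exact lt_of_le_of_lt hBmle (hσv (τ x))),
      e1, hBm]
  -- the image level function N
  set N : Fin d × Fin d → ℕ := fun p =>
    if π p.1 = π p.2 then m else iv (π p.1) (π p.2) with hNdef
  have hNfact : ∀ p ∈ P, N p ≤ m ∧ ((a (N p) : WithTop ℝ) ≤ v (β (τ p.1) - β (τ p.2))) ∧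
      ∀ t, t ≤ m → (t ≤ N p ↔ (a t : WithTop ℝ) ≤ v (α (π p.1) - α (π p.2))) := by
    intro p hp
    by_cases hpi : π p.1 = π p.2
    · have hNp : N p = m := by rw [hNdef]; simp [hpi]
      refine ⟨le_of_eq hNp, ?_, ?_⟩
      · rw [hNp]; exact (hkey1 p.1 p.2 hpi).le
      · intro t htm
        have hvv : v (α (π p.1) - α (π p.2)) = ⊤ := by
          rw [hpi, sub_self]; exact (hv0 0).mpr rfl
        rw [hNp, hvv]
        exact ⟨fun _ => le_top, fun _ => htm⟩
    · obtain ⟨hivm, hivv⟩ := hiv (π p.1) (hπL p.1) (π p.2) (hπL p.2) hpi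
      have hNp : N p = iv (π p.1) (π p.2) := by rw [hNdef]; simp [hpi]
      refine ⟨hNp ▸ hivm, ?_, ?_⟩
      · rw [hNp, hkey2 p.1 p.2 hpi, hivv]
      · intro t htm
        rw [hNp, hivv, WithTop.coe_le_coe]
        exact ⟨fun h => hamono t _ h hivm, fun h => haarev t _ htm hivm h⟩
  have hNle : ∀ p ∈ P, N p ≤ m := fun p hp => (hNfact p hp).1
  have hNval : ∀ p ∈ P, (a (N p) : WithTop ℝ) ≤ v (β (τ p.1) - β (τ p.2)) :=
    fun p hp => (hNfact p hp).2.1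
  have hNiff : ∀ p ∈ P, ∀ t, t ≤ m →
      (t ≤ N p ↔ (a t : WithTop ℝ) ≤ v (α (π p.1) - α (π p.2))) :=
    fun p hp => (hNfact p hp).2.2
  have hιiff : ∀ p ∈ P, ∀ t, t ≤ m →
      (t ≤ ι p ↔ (a t : WithTop ℝ) ≤ v (α p.1 - α p.2)) := by
    intro p hp t htm
    obtain ⟨h1, h2⟩ := hι p hp
    rw [h2, WithTop.coe_le_coe]
    exact ⟨fun h => hamono t _ h h1, fun h => haarev t _ htm h1 h⟩
  -- antitonicity of C
  have hCmono : ∀ i j : ℕ, i ≤ j → C j ≤ C i := by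
    intro i j hij
    by_cases hj : j ≤ m
    · rw [hCrec i (le_trans hij hj), hCrec j hj]
      apply Finset.sum_le_sum_of_subset
      intro p hp
      rw [Finset.mem_filter] at hp ⊢
      exact ⟨hp.1, le_trans hij hp.2⟩
    · rw [hC0 j (not_le.mp hj)]
      exact Nat.zero_le _
  -- Claim A: the weighted pigeonhole bound at each level
  have hA : ∀ t, 1 ≤ t → t ≤ m →
      C t ≤ ∑ p ∈ P.filter (fun p => t ≤ N p), (C (ι p + 1) + 1) := by
    intro t ht1 htm
    by_cases hcase : ∃ p ∈ P, t ≤ N p ∧ ι p < t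
    · obtain ⟨p, hp, hNp, hιp⟩ := hcase
      have h1 : C t ≤ C (ι p + 1) := hCmono _ _ hιp
      have h2 : C (ι p + 1) + 1 ≤ ∑ p ∈ P.filter (fun p => t ≤ N p), (C (ι p + 1) + 1) :=
        Finset.single_le_sum (f := fun p => C (ι p + 1) + 1) (fun _ _ => Nat.zero_le _)
          (Finset.mem_filter.mpr ⟨hp, hNp⟩)
      omega
    · push_neg at hcase
      -- hcase : ∀ p ∈ P, t ≤ N p → t ≤ ι p
      set el : Fin d → Fin d → Prop :=
        fun x y => (a t : WithTop ℝ) ≤ v (α x - α y) with heldef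
      have hel_refl : ∀ x, el x x := by
        intro x
        show (a t : WithTop ℝ) ≤ v (α x - α x)
        rw [sub_self, (hv0 0).mpr rfl]
        exact le_top
      have hel_symm : ∀ x y, el x y → el y x := by
        intro x y h
        show (a t : WithTop ℝ) ≤ v (α y - α x)
        rw [hvsymm]
        exact h
      have hel_trans : ∀ x y z, el x y → el y z → el x z := by
        intro x y z h1 h2
        show (a t : WithTop ℝ) ≤ v (α x - α z)
        have heq : α x - α z = (α x - α y) + (α y - α z) := by ring
        rw [heq]
        exact le_trans (le_min h1 h2) (hvadd _ _)
      have hne : ∀ x ∈ L, (L.filter (fun z => el z x)).Nonempty := fun x hx =>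
        ⟨x, Finset.mem_filter.mpr ⟨hx, hel_refl x⟩⟩
      set rep : Fin d → Fin d := fun x =>
        if hx : x ∈ L then (L.filter (fun z => el z x)).min' (hne x hx) else x with hrepdef
      have hrep_eq : ∀ x (hx : x ∈ L),
          rep x = (L.filter (fun z => el z x)).min' (hne x hx) := by
        intro x hx
        simp only [hrepdef]
        exact dif_pos hx
      have hrep_mem : ∀ x ∈ L, rep x ∈ L ∧ el (rep x) x := by
        intro x hx
        have h := Finset.min'_mem (L.filter (fun z => el z x)) (hne x hx)
        rw [Finset.mem_filter] at h
        rw [hrep_eq x hx]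
        exact h
      have hmin'_congr : ∀ (S T : Finset (Fin d)) (hS : S.Nonempty) (hT : T.Nonempty),
          S = T → S.min' hS = T.min' hT := by
        rintro S T hS hT rfl
        rfl
      have hrep_congr : ∀ x ∈ L, ∀ y ∈ L, el x y → rep x = rep y := by
        intro x hx y hy hxy
        have hset : L.filter (fun z => el z x) = L.filter (fun z => el z y) := by
          ext z
          simp only [Finset.mem_filter, and_congr_right_iff]
          intro _
          exact ⟨fun h => hel_trans z x y h hxy,
            fun h => hel_trans z y x h (hel_symm x y hxy)⟩
        rw [hrep_eq x hx, hrep_eq y hy]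
        exact hmin'_congr _ _ _ _ hset
      have hrep_rel : ∀ x ∈ L, ∀ y ∈ L, rep x = rep y → el x y := by
        intro x hx y hy h
        have h1 := (hrep_mem x hx).2
        have h2 := (hrep_mem y hy).2
        exact hel_trans _ _ _ (h ▸ hel_symm _ _ h1) h2
      -- the hypothesis of the non-collapsing case, in relation form
      have hHel : ∀ x ∈ L, ∀ y ∈ L, el (π x) (π y) → el x y := by
        intro x hx y hy hπxy
        rcases eq_or_ne x y with rfl | hxy
        · exact hel_refl x
        rcases lt_or_gt_of_ne hxy with h | h
        · have hp : (x, y) ∈ P := (hmemP _).mpr ⟨hx, hy, h⟩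
          have hN : t ≤ N (x, y) := (hNiff (x, y) hp t htm).mpr hπxy
          exact (hιiff (x, y) hp t htm).mp (hcase _ hp hN)
        · have hp : (y, x) ∈ P := (hmemP _).mpr ⟨hy, hx, h⟩
          have hN : t ≤ N (y, x) := (hNiff (y, x) hp t htm).mpr (hel_symm _ _ hπxy)
          exact hel_symm _ _ ((hιiff (y, x) hp t htm).mp (hcase _ hp hN))
      set ψ : Fin d → Fin d := fun u =>
        if h : ∃ x, x ∈ L ∧ rep (π x) = u then rep h.choose else u with hψdef
      have hψg : ∀ x ∈ L, ψ (rep (π x)) = rep x := by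
        intro x hx
        have hex : ∃ z, z ∈ L ∧ rep (π z) = rep (π x) := ⟨x, hx, rfl⟩
        simp only [hψdef]
        rw [dif_pos hex]
        obtain ⟨hz1, hz2⟩ := hex.choose_spec
        have h1 : el (π hex.choose) (π x) := hrep_rel _ (hπL _) _ (hπL _) hz2
        exact hrep_congr _ hz1 _ hx (hHel _ hz1 _ hx h1)
      have hFsub : L.image (fun x => rep (π x)) ⊆ L.image rep := by
        intro u hu
        obtain ⟨x, hx, rfl⟩ := Finset.mem_image.mp hu
        exact Finset.mem_image.mpr ⟨π x, hπL x, rfl⟩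
      have hRsub : L.image rep ⊆ (L.image (fun x => rep (π x))).image ψ := by
        intro u hu
        obtain ⟨z, hz, rfl⟩ := Finset.mem_image.mp hu
        exact Finset.mem_image.mpr ⟨rep (π z), Finset.mem_image.mpr ⟨z, hz, rfl⟩, hψg z hz⟩
      have hcard : ((L.image (fun x => rep (π x))).image ψ).card
          = (L.image (fun x => rep (π x))).card := by
        have h1 := Finset.card_le_card hRsub
        have h2 := Finset.card_image_le (s := L.image (fun x => rep (π x))) (f := ψ)
        have h3 := Finset.card_le_card hFsub
        omega
      have hinj : Set.InjOn ψ ↑(L.image (fun x => rep (π x))) :=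
        Finset.injOn_of_card_image_eq hcard
      have hmain : ∀ p ∈ P, t ≤ ι p → t ≤ N p := by
        intro p hp hιp
        obtain ⟨h1, h2, hlt⟩ := (hmemP p).mp hp
        have help : el p.1 p.2 := (hιiff p hp t htm).mp hιp
        have hr : rep p.1 = rep p.2 := hrep_congr _ h1 _ h2 help
        have hg1 : rep (π p.1) ∈ L.image (fun x => rep (π x)) :=
          Finset.mem_image.mpr ⟨p.1, h1, rfl⟩
        have hg2 : rep (π p.2) ∈ L.image (fun x => rep (π x)) :=
          Finset.mem_image.mpr ⟨p.2, h2, rfl⟩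
        have hψeq : ψ (rep (π p.1)) = ψ (rep (π p.2)) := by
          rw [hψg _ h1, hψg _ h2, hr]
        have hgeq : rep (π p.1) = rep (π p.2) :=
          hinj (Finset.mem_coe.mpr hg1) (Finset.mem_coe.mpr hg2) hψeq
        exact (hNiff p hp t htm).mpr (hrep_rel _ (hπL _) _ (hπL _) hgeq)
      rw [hCrec t htm]
      apply Finset.sum_le_sum_of_subset
      intro p hp
      rw [Finset.mem_filter] at hp ⊢
      exact ⟨hp.1, hmain p hp.1 hp.2⟩
  -- layer (telescoping) expansion of the heights
  have hlayer : ∀ n, n ≤ m →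
      a n = a 0 + ∑ t ∈ Finset.range m, (if t + 1 ≤ n then a (t + 1) - a t else 0) := by
    intro n hn
    have h1 : (∑ t ∈ Finset.range m, (if t + 1 ≤ n then a (t + 1) - a t else 0))
        = ∑ t ∈ (Finset.range m).filter (fun t => t + 1 ≤ n), (a (t + 1) - a t) :=
      (Finset.sum_filter _ _).symm
    have h2 : (Finset.range m).filter (fun t => t + 1 ≤ n) = Finset.range n := by
      ext i
      simp only [Finset.mem_filter, Finset.mem_range]
      omega
    rw [h1, h2, Finset.sum_range_sub (f := a)]
    ring
  -- the expansion of a weighted sum of heights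
  have expand : ∀ (M : Fin d × Fin d → ℕ), (∀ p ∈ P, M p ≤ m) →
      (∑ p ∈ P, ((C (ι p + 1) + 1 : ℕ) : ℝ) * a (M p))
      = (∑ p ∈ P, ((C (ι p + 1) + 1 : ℕ) : ℝ) * a 0)
        + ∑ t ∈ Finset.range m,
            ((∑ p ∈ P.filter (fun p => t + 1 ≤ M p), (C (ι p + 1) + 1) : ℕ) : ℝ)
              * (a (t + 1) - a t) := by
    intro M hM
    have h1 : ∀ p ∈ P, ((C (ι p + 1) + 1 : ℕ) : ℝ) * a (M p)
        = ((C (ι p + 1) + 1 : ℕ) : ℝ) * a 0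
          + ∑ t ∈ Finset.range m,
              (if t + 1 ≤ M p then ((C (ι p + 1) + 1 : ℕ) : ℝ) * (a (t + 1) - a t) else 0) := by
      intro p hp
      rw [hlayer (M p) (hM p hp), mul_add, Finset.mul_sum]
      congr 1
      apply Finset.sum_congr rfl
      intro t _
      rw [mul_ite, mul_zero]
    rw [Finset.sum_congr rfl h1, Finset.sum_add_distrib]
    congr 1
    rw [Finset.sum_comm]
    apply Finset.sum_congr rfl
    intro t _
    rw [← Finset.sum_filter, Nat.cast_sum, Finset.sum_mul]
  -- the real inequality
  have hreal : (∑ p ∈ P, ((C (ι p + 1) + 1 : ℕ) : ℝ) * a (ι p))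
      ≤ ∑ p ∈ P, ((C (ι p + 1) + 1 : ℕ) : ℝ) * a (N p) := by
    have e1 := expand (fun p => ι p) (fun p hp => (hι p hp).1)
    have e2 := expand N hNle
    rw [e1, e2]
    apply add_le_add le_rfl
    apply Finset.sum_le_sum
    intro t ht
    have htm : t + 1 ≤ m := Finset.mem_range.mp ht
    have hδ : 0 ≤ a (t + 1) - a t := by
      have := ha t (t + 1) (Nat.lt_succ_self t) htm
      linarith
    apply mul_le_mul_of_nonneg_right _ hδ
    have hl : (∑ p ∈ P.filter (fun p => t + 1 ≤ ι p), (C (ι p + 1) + 1)) = C (t + 1) :=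
      (hCrec (t + 1) htm).symm
    rw [hl]
    exact_mod_cast hA (t + 1) (Nat.succ_le_succ (Nat.zero_le t)) htm
  -- assemble, lifting to WithTop ℝ
  have hLHS : (∑ p ∈ P, (C (ι p + 1) + 1) • v (α p.1 - α p.2))
      = (((∑ p ∈ P, ((C (ι p + 1) + 1 : ℕ) : ℝ) * a (ι p)) : ℝ) : WithTop ℝ) := by
    rw [WithTop.coe_sum]
    apply Finset.sum_congr rfl
    intro p hp
    rw [(hι p hp).2, nsmul_coe_aux]
  have hRHSge : (((∑ p ∈ P, ((C (ι p + 1) + 1 : ℕ) : ℝ) * a (N p)) : ℝ) : WithTop ℝ)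
      ≤ ∑ p ∈ P, (C (ι p + 1) + 1) • v (β (τ p.1) - β (τ p.2)) := by
    rw [WithTop.coe_sum]
    apply Finset.sum_le_sum
    intro p hp
    rw [← nsmul_coe_aux]
    exact nsmul_le_nsmul_right (hNval p hp) _
  calc (∑ p ∈ P, (C (ι p + 1) + 1) • v (α p.1 - α p.2))
      = (((∑ p ∈ P, ((C (ι p + 1) + 1 : ℕ) : ℝ) * a (ι p)) : ℝ) : WithTop ℝ) := hLHS
    _ ≤ (((∑ p ∈ P, ((C (ι p + 1) + 1 : ℕ) : ℝ) * a (N p)) : ℝ) : WithTop ℝ) :=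
        WithTop.coe_le_coe.mpr hreal
    _ ≤ _ := hRHSge
end

section
/- With the subtree setup below and M := Σ over unordered pairs {x,y} of distinct elements of L of k({x,y})·v(α x − α y): for every injective map τ : L → Fin d, the equality Σ over unordered pairs {x,y} of distinct elements of L of k({x,y})·v(β(τ x) − β(τ y)) = M holds if and only if v(β(τ x) − β(τ y)) = v(α x − α y) for all x, y ∈ L. In particular, the tree of β contains a subtree isomorphic to the maximal c-trivial subtree L of the tree of α if and only if the minimizing value M is attained. -/
open Finset

private lemma coe_sum_withTop {P : Type*} (s : Finset P) (f : P → ℝ) :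
    ((∑ p ∈ s, f p : ℝ) : WithTop ℝ) = ∑ p ∈ s, ((f p : ℝ) : WithTop ℝ) := by
  classical
  induction s using Finset.cons_induction with
  | empty => simp
  | cons p s hp ih => simp [Finset.sum_cons, WithTop.coe_add, ih]

private lemma nsmul_coe_withTop (n : ℕ) (r : ℝ) :
    n • ((r : ℝ) : WithTop ℝ) = (((n : ℝ) * r : ℝ) : WithTop ℝ) := by
  induction n with
  | zero => simp
  | succ k ih =>
    rw [succ_nsmul, ih, ← WithTop.coe_add]
    congr 1
    push_cast
    ring

private lemma pigeon {γ T : Type*} [DecidableEq T] (L : Finset γ) (c g : γ → T)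
    (himg : ∀ x ∈ L, ∃ y ∈ L, c y = g x)
    (h2 : ∀ x ∈ L, ∀ y ∈ L, g x = g y → c x = c y) :
    ∀ x ∈ L, ∀ y ∈ L, c x = c y → g x = g y := by
  classical
  have hf : ∃ f : T → T, ∀ x ∈ L, f (g x) = c x := by
    refine ⟨fun P => if h : ∃ x ∈ L, g x = P then c h.choose else P, ?_⟩
    intro x hx
    have hex : ∃ y ∈ L, g y = g x := ⟨x, hx, rfl⟩
    dsimp only
    rw [dif_pos hex]
    exact h2 _ hex.choose_spec.1 _ hx hex.choose_spec.2
  obtain ⟨f, hfg⟩ := hf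
  set A := L.image c with hA
  set B := L.image g with hB
  have hBA : B ⊆ A := by
    intro P hP
    simp only [hB, Finset.mem_image] at hP
    obtain ⟨x, hx, rfl⟩ := hP
    obtain ⟨y, hy, hyx⟩ := himg x hx
    exact Finset.mem_image.mpr ⟨y, hy, hyx⟩
  have hAsub : A ⊆ B.image f := by
    intro Q hQ
    simp only [hA, Finset.mem_image] at hQ
    obtain ⟨x, hx, rfl⟩ := hQ
    exact Finset.mem_image.mpr ⟨g x, Finset.mem_image.mpr ⟨x, hx, rfl⟩, hfg x hx⟩
  have hcard : (B.image f).card = B.card :=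
    le_antisymm Finset.card_image_le
      (le_trans (Finset.card_le_card hBA) (Finset.card_le_card hAsub))
  have hinj := Finset.injOn_of_card_image_eq hcard
  intro x hx y hy hcxy
  have h1 : f (g x) = f (g y) := by rw [hfg x hx, hfg y hy, hcxy]
  exact hinj (Finset.mem_coe.mpr (Finset.mem_image.mpr ⟨x, hx, rfl⟩))
    (Finset.mem_coe.mpr (Finset.mem_image.mpr ⟨y, hy, rfl⟩)) h1

private lemma core_sum {P : Type*} [DecidableEq P] (E : Finset P) (m : ℕ) (a : ℕ → ℝ)
    (ha : ∀ i j : ℕ, i < j → j ≤ m → a i < a j)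
    (ι jj k : P → ℕ) (b : P → ℝ) (C : ℕ → ℕ)
    (hk : ∀ p ∈ E, k p = C (ι p + 1) + 1)
    (hιm : ∀ p ∈ E, ι p ≤ m)
    (hjm : ∀ p ∈ E, jj p ≤ m)
    (hbj : ∀ p ∈ E, a (jj p) ≤ b p)
    (hCt : ∀ t, 1 ≤ t → t ≤ m → C t = ∑ p ∈ E.filter (fun p => t ≤ ι p), k p)
    (hanti : ∀ s t : ℕ, s ≤ t → t ≤ m → C t ≤ C s)
    (hlevel : ∀ t, 1 ≤ t → t ≤ m →
      (∃ p ∈ E, t ≤ jj p ∧ ι p + 1 ≤ t) ∨ (∀ p ∈ E, t ≤ jj p ↔ t ≤ ι p)) :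
    ((∑ p ∈ E, (k p : ℝ) * b p) = ∑ p ∈ E, (k p : ℝ) * a (ι p)) ↔
      ∀ p ∈ E, b p = a (ι p) := by
  classical
  constructor
  case mpr => exact fun h => Finset.sum_congr rfl fun p hp => by rw [h p hp]
  intro heq
  -- A t ≥ C t, with equality characterization
  have hmain : ∀ t, 1 ≤ t → t ≤ m →
      C t ≤ (∑ p ∈ E.filter (fun p => t ≤ jj p), k p) ∧
        ((∑ p ∈ E.filter (fun p => t ≤ jj p), k p) = C t →
          ∀ p ∈ E, (t ≤ jj p ↔ t ≤ ι p)) := by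
    intro t ht1 htm
    rcases hlevel t ht1 htm with ⟨p₀, hp₀E, hp₀j, hp₀ι⟩ | hcase2
    · set S := ∑ p ∈ (E.filter (fun p => t ≤ ι p)).filter (fun p => t ≤ jj p), k p with hS
      set D := ∑ p ∈ (E.filter (fun p => t ≤ ι p)).filter (fun p => ¬ t ≤ jj p), k p with hD
      have hsplit : S + D = C t := by
        rw [hCt t ht1 htm]
        exact Finset.sum_filter_add_sum_filter_not _ _ _
      have hp₀notin : p₀ ∉ (E.filter (fun p => t ≤ ι p)).filter (fun p => t ≤ jj p) := by
        intro hmem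
        have := (Finset.mem_filter.mp ((Finset.mem_filter.mp hmem).1)).2
        omega
      have hsub : insert p₀ ((E.filter (fun p => t ≤ ι p)).filter (fun p => t ≤ jj p))
          ⊆ E.filter (fun p => t ≤ jj p) := by
        intro q hq
        rcases Finset.mem_insert.mp hq with rfl | hq
        · exact Finset.mem_filter.mpr ⟨hp₀E, hp₀j⟩
        · have h' := Finset.mem_filter.mp hq
          exact Finset.mem_filter.mpr ⟨(Finset.mem_filter.mp h'.1).1, h'.2⟩
      have hins : k p₀ + S ≤ ∑ p ∈ E.filter (fun p => t ≤ jj p), k p := by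
        calc k p₀ + S
            = ∑ p ∈ insert p₀ ((E.filter (fun p => t ≤ ι p)).filter (fun p => t ≤ jj p)), k p :=
              (Finset.sum_insert hp₀notin).symm
          _ ≤ _ := Finset.sum_le_sum_of_subset hsub
      have hkp₀ : C t + 1 ≤ k p₀ := by
        rw [hk p₀ hp₀E]
        have := hanti (ι p₀ + 1) t hp₀ι htm
        omega
      constructor
      · omega
      · intro hAC
        omega
    · have hfe : E.filter (fun p => t ≤ jj p) = E.filter (fun p => t ≤ ι p) :=
        Finset.filter_congr (fun p hp => by
          constructor
          · exact (hcase2 p hp).mp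
          · exact (hcase2 p hp).mpr)
      have hAC : (∑ p ∈ E.filter (fun p => t ≤ jj p), k p) = C t := by
        rw [hfe, hCt t ht1 htm]
      exact ⟨le_of_eq hAC.symm, fun _ => hcase2⟩
  -- telescoping
  have tele : ∀ n, n ≤ m →
      a n = a 0 + ∑ i ∈ Finset.range m, (if i < n then a (i + 1) - a i else 0) := by
    intro n hn
    have h1 : ∑ i ∈ Finset.range m, (if i < n then a (i + 1) - a i else 0)
        = ∑ i ∈ Finset.range n, (a (i + 1) - a i) := by
      rw [← Finset.sum_filter]
      congr 1
      ext i
      simp only [Finset.mem_filter, Finset.mem_range]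
      omega
    rw [h1, Finset.sum_range_sub (fun i => a i)]
    ring
  have gpos : ∀ i ∈ Finset.range m, 0 < a (i + 1) - a i := by
    intro i hi
    have := ha i (i + 1) (Nat.lt_succ_self i) (Finset.mem_range.mp hi)
    linarith
  have hpull : ∀ (f : P → ℕ), ∀ i ∈ Finset.range m,
      (∑ p ∈ E, (if i < f p then (k p : ℝ) * (a (i + 1) - a i) else 0))
        = ((∑ p ∈ E.filter (fun p => i + 1 ≤ f p), k p : ℕ) : ℝ) * (a (i + 1) - a i) := by
    intro f i hi
    rw [← Finset.sum_filter]
    have hfc : E.filter (fun p => i < f p) = E.filter (fun p => i + 1 ≤ f p) :=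
      Finset.filter_congr (fun p hp => by omega)
    rw [hfc, Nat.cast_sum, Finset.sum_mul]
  -- key identity
  have key : (∑ p ∈ E, (k p : ℝ) * b p)
      = (∑ p ∈ E, (k p : ℝ) * a (ι p)) + (∑ p ∈ E, (k p : ℝ) * (b p - a (jj p)))
        + ∑ i ∈ Finset.range m,
            (((∑ p ∈ E.filter (fun p => i + 1 ≤ jj p), k p : ℕ) : ℝ) - ((C (i + 1) : ℕ) : ℝ))
              * (a (i + 1) - a i) := by
    have hstep : ∀ p ∈ E, (k p : ℝ) * (a (jj p) - a (ι p))
        = ∑ i ∈ Finset.range m, ((if i < jj p then (k p : ℝ) * (a (i + 1) - a i) else 0)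
            - (if i < ι p then (k p : ℝ) * (a (i + 1) - a i) else 0)) := by
      intro p hp
      have hite : ∀ (c : Prop) (inst : Decidable c) (x : ℝ),
          (if c then (k p : ℝ) * x else 0) = (k p : ℝ) * (if c then x else 0) := by
        intro c inst x
        split <;> simp
      simp only [hite]
      rw [Finset.sum_sub_distrib, ← Finset.mul_sum, ← Finset.mul_sum]
      rw [tele (jj p) (hjm p hp), tele (ι p) (hιm p hp)]
      ring
    have hmid : (∑ p ∈ E, (k p : ℝ) * (a (jj p) - a (ι p)))
        = ∑ i ∈ Finset.range m,
            (((∑ p ∈ E.filter (fun p => i + 1 ≤ jj p), k p : ℕ) : ℝ) - ((C (i + 1) : ℕ) : ℝ))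
              * (a (i + 1) - a i) := by
      rw [Finset.sum_congr rfl hstep, Finset.sum_comm]
      refine Finset.sum_congr rfl ?_
      intro i hi
      rw [Finset.sum_sub_distrib, hpull jj i hi, hpull ι i hi,
        ← hCt (i + 1) (by omega) (by have := Finset.mem_range.mp hi; omega)]
      ring
    calc ∑ p ∈ E, (k p : ℝ) * b p
        = ∑ p ∈ E, ((k p : ℝ) * a (ι p) + (k p : ℝ) * (b p - a (jj p))
            + (k p : ℝ) * (a (jj p) - a (ι p))) := by
          refine Finset.sum_congr rfl ?_
          intro p hp
          ring
      _ = (∑ p ∈ E, (k p : ℝ) * a (ι p)) + (∑ p ∈ E, (k p : ℝ) * (b p - a (jj p)))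
            + ∑ p ∈ E, (k p : ℝ) * (a (jj p) - a (ι p)) := by
          rw [Finset.sum_add_distrib, Finset.sum_add_distrib]
      _ = _ := by rw [hmid]
  -- nonnegativity
  have hXterm : ∀ p ∈ E, (0 : ℝ) ≤ (k p : ℝ) * (b p - a (jj p)) := fun p hp =>
    mul_nonneg (Nat.cast_nonneg _) (by linarith [hbj p hp])
  have hYterm : ∀ i ∈ Finset.range m, (0 : ℝ) ≤
      (((∑ p ∈ E.filter (fun p => i + 1 ≤ jj p), k p : ℕ) : ℝ) - ((C (i + 1) : ℕ) : ℝ))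
        * (a (i + 1) - a i) := by
    intro i hi
    have h1 := (hmain (i + 1) (by omega) (by have := Finset.mem_range.mp hi; omega)).1
    have h2 : ((C (i + 1) : ℕ) : ℝ) ≤ ((∑ p ∈ E.filter (fun p => i + 1 ≤ jj p), k p : ℕ) : ℝ) :=
      Nat.cast_le.mpr h1
    exact mul_nonneg (by linarith) (le_of_lt (gpos i hi))
  have hXnn : (0 : ℝ) ≤ ∑ p ∈ E, (k p : ℝ) * (b p - a (jj p)) := Finset.sum_nonneg hXterm
  have hYnn : (0 : ℝ) ≤ ∑ i ∈ Finset.range m,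
      (((∑ p ∈ E.filter (fun p => i + 1 ≤ jj p), k p : ℕ) : ℝ) - ((C (i + 1) : ℕ) : ℝ))
        * (a (i + 1) - a i) := Finset.sum_nonneg hYterm
  rw [heq] at key
  have hX0 : (∑ p ∈ E, (k p : ℝ) * (b p - a (jj p))) = 0 := by linarith
  have hY0 : (∑ i ∈ Finset.range m,
      (((∑ p ∈ E.filter (fun p => i + 1 ≤ jj p), k p : ℕ) : ℝ) - ((C (i + 1) : ℕ) : ℝ))
        * (a (i + 1) - a i)) = 0 := by linarith
  have hX := (Finset.sum_eq_zero_iff_of_nonneg hXterm).mp hX0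
  have hY := (Finset.sum_eq_zero_iff_of_nonneg hYterm).mp hY0
  have hiff : ∀ i ∈ Finset.range m, ∀ q ∈ E, (i + 1 ≤ jj q ↔ i + 1 ≤ ι q) := by
    intro i hi
    have h0 := hY i hi
    have hgpos := gpos i hi
    have hAC : ((∑ p ∈ E.filter (fun p => i + 1 ≤ jj p), k p : ℕ) : ℝ) = ((C (i + 1) : ℕ) : ℝ) := by
      rcases mul_eq_zero.mp h0 with h | h
      · linarith
      · linarith
    have hACn : (∑ p ∈ E.filter (fun p => i + 1 ≤ jj p), k p) = C (i + 1) := Nat.cast_inj.mp hAC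
    exact (hmain (i + 1) (by omega) (by have := Finset.mem_range.mp hi; omega)).2 hACn
  intro p hp
  have hb0 : b p = a (jj p) := by
    have h0 := hX p hp
    have hkpos : (0 : ℝ) < (k p : ℝ) := by
      rw [hk p hp]
      exact_mod_cast Nat.succ_pos _
    rcases mul_eq_zero.mp h0 with h | h
    · linarith
    · linarith
  have hj := hjm p hp
  have hι' := hιm p hp
  have hje : jj p = ι p := by
    by_contra hne
    rcases Nat.lt_or_ge (jj p) (ι p) with h | h
    · have := hiff (jj p) (Finset.mem_range.mpr (by omega)) p hp
      omega
    · have h' : ι p < jj p := by omega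
      have := hiff (ι p) (Finset.mem_range.mpr (by omega)) p hp
      omega
  rw [hb0, hje]
open Finset

/-- With the subtree setup and
`M := Σ_{pairs {x,y} of L} k({x,y}) • v (α x - α y)`: for every injective map
`τ : L → Fin d`, the equality
`Σ_{pairs {x,y} of L} k({x,y}) • v (β (τ x) - β (τ y)) = M` holds if and only if
`v (β (τ x) - β (τ y)) = v (α x - α y)` for all `x, y ∈ L`.  In particular, the tree of `β`
contains a subtree isomorphic to the maximal c-trivial subtree `L` of the tree of `α` if and
only if the minimizing value `M` is attained. -/
theorem minimizing_value_attained_iff_isomorphic_subtree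
    {K : Type*} [Field K] (v : K → WithTop ℝ)
    (hv0 : ∀ x : K, v x = ⊤ ↔ x = 0)
    (hvmul : ∀ x y : K, v (x * y) = v x + v y)
    (hvadd : ∀ x y : K, min (v x) (v y) ≤ v (x + y))
    (d : ℕ) (hd : 2 ≤ d)
    (α β : Fin d → K)
    (hα : Function.Injective α) (hβ : Function.Injective β)
    (m : ℕ) (a : ℕ → ℝ)
    (ha : ∀ i j : ℕ, i < j → j ≤ m → a i < a j)
    (L : Finset (Fin d))
    (ι : Fin d × Fin d → ℕ)
    -- (i) every pairwise valuation on L is one of the branch heights a 0, …, a m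
    (hι : ∀ p ∈ (L ×ˢ L).filter (fun p : Fin d × Fin d => p.1 < p.2),
      ι p ≤ m ∧ v (α p.1 - α p.2) = (a (ι p) : WithTop ℝ))
    -- (ii) every branch height is attained
    (hsurj : ∀ i ≤ m, ∃ p ∈ (L ×ˢ L).filter (fun p : Fin d × Fin d => p.1 < p.2), ι p = i)
    -- (iii) L is a maximal c-trivial subtree of the tree of α, for c slightly above a m
    (hmaxα : ∀ j : Fin d, ∃ x ∈ L, (a m : WithTop ℝ) < v (α j - α x))
    -- the recursively constructed weights
    (C : ℕ → ℕ)
    (hC0 : ∀ i : ℕ, m < i → C i = 0)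
    (hCrec : ∀ i ≤ m, C i =
      ∑ p ∈ ((L ×ˢ L).filter (fun p : Fin d × Fin d => p.1 < p.2)).filter
          (fun p => i ≤ ι p), (C (ι p + 1) + 1))
    -- the tree of β is isomorphic to that of α up to height a m, via L' and ρ
    (L' : Finset (Fin d)) (ρ : Fin d → Fin d)
    (hρbij : Set.BijOn ρ ↑L' ↑L)
    (hρval : ∀ x ∈ L', ∀ y ∈ L', v (β x - β y) = v (α (ρ x) - α (ρ y)))
    (hmaxβ : ∀ j : Fin d, ∃ x ∈ L', (a m : WithTop ℝ) < v (β j - β x))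
    -- an arbitrary injective placement τ of L
    (τ : Fin d → Fin d) (hτ : Set.InjOn τ ↑L) :
    ((∑ p ∈ (L ×ˢ L).filter (fun p : Fin d × Fin d => p.1 < p.2),
        (C (ι p + 1) + 1) • v (β (τ p.1) - β (τ p.2)))
      = ∑ p ∈ (L ×ˢ L).filter (fun p : Fin d × Fin d => p.1 < p.2),
          (C (ι p + 1) + 1) • v (α p.1 - α p.2))
      ↔ ∀ x ∈ L, ∀ y ∈ L, v (β (τ x) - β (τ y)) = v (α x - α y) := by
  classical
  set E := (L ×ˢ L).filter (fun p : Fin d × Fin d => p.1 < p.2) with hEdef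
  have memE : ∀ {p : Fin d × Fin d}, p ∈ E ↔ p.1 ∈ L ∧ p.2 ∈ L ∧ p.1 < p.2 := by
    intro p
    simp [hEdef, Finset.mem_filter, Finset.mem_product, and_assoc]
  -- basic valuation facts
  have hv1 : v 1 = 0 := by
    have h := hvmul 1 1
    rw [one_mul] at h
    have hne : v 1 ≠ ⊤ := fun h' => one_ne_zero ((hv0 1).mp h')
    obtain ⟨r, hr⟩ := WithTop.ne_top_iff_exists.mp hne
    rw [← hr] at h ⊢
    have hrr : r = r + r := by exact_mod_cast h
    have hr0 : r = 0 := by linarith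
    exact_mod_cast hr0
  have hvm1 : v (-1 : K) = 0 := by
    have h := hvmul (-1 : K) (-1)
    rw [neg_mul_neg, one_mul, hv1] at h
    have hne : v (-1 : K) ≠ ⊤ := fun h' => by simp [h'] at h
    obtain ⟨r, hr⟩ := WithTop.ne_top_iff_exists.mp hne
    rw [← hr] at h ⊢
    have hrr : (0 : ℝ) = r + r := by exact_mod_cast h
    have hr0 : r = 0 := by linarith
    exact_mod_cast hr0
  have vneg : ∀ x : K, v (-x) = v x := by
    intro x
    have h := hvmul (-1 : K) x
    rw [neg_one_mul] at h
    rw [h, hvm1, zero_add]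
  have vsubc : ∀ x y : K, v (x - y) = v (y - x) := by
    intro x y
    rw [show x - y = -(y - x) by ring, vneg]
  have vaddeq : ∀ u w : K, v u < v w → v (u + w) = v u := by
    intro u w hlt
    refine le_antisymm ?_ ?_
    · have h2 := hvadd (u + w) (-w)
      rw [show u + w + -w = u by ring, vneg] at h2
      rcases min_le_iff.mp h2 with h3 | h3
      · exact h3
      · exact absurd hlt (not_lt.mpr h3)
    · have h2 := hvadd u w
      rwa [min_eq_left hlt.le] at h2
  -- the nearest-point map σ and φ = ρ ∘ σ ∘ τ
  choose σ hσL' hσv using hmaxβ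
  set φ : Fin d → Fin d := fun x => ρ (σ (τ x)) with hφdef
  have hφL : ∀ x : Fin d, φ x ∈ L := by
    intro x
    have := hρbij.mapsTo (Finset.mem_coe.mpr (hσL' (τ x)))
    exact Finset.mem_coe.mp this
  -- monotonicity of a
  have amono : ∀ i j : ℕ, i ≤ j → j ≤ m → a i ≤ a j := by
    intro i j hij hjm
    rcases eq_or_lt_of_le hij with rfl | h
    · exact le_rfl
    · exact (ha i j h hjm).le
  have alt : ∀ i j : ℕ, i ≤ m → j ≤ m → (a i ≤ a j ↔ i ≤ j) := by
    intro i j him hjm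
    constructor
    · intro h
      by_contra hc
      push_neg at hc
      exact absurd h (not_le.mpr (ha j i hc him))
    · intro h
      exact amono i j h hjm
  -- ordered pairs
  set pr : Fin d → Fin d → Fin d × Fin d := fun x y => if x < y then (x, y) else (y, x) with hprdef
  have hprcases : ∀ x y : Fin d, x ≠ y → (pr x y = (x, y) ∨ pr x y = (y, x)) := by
    intro x y hne
    simp only [hprdef]
    rcases lt_or_gt_of_ne hne with h | h
    · exact Or.inl (if_pos h)
    · exact Or.inr (if_neg (not_lt.mpr h.le))
  have hprE : ∀ x ∈ L, ∀ y ∈ L, x ≠ y → (pr x y ∈ E ∧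
      v (α x - α y) = ((a (ι (pr x y)) : ℝ) : WithTop ℝ) ∧ ι (pr x y) ≤ m) := by
    intro x hx y hy hne
    rcases lt_or_gt_of_ne hne with h | h
    · have hpe : pr x y = (x, y) := by simp only [hprdef]; exact if_pos h
      have hmem : (x, y) ∈ E := memE.mpr ⟨hx, hy, h⟩
      obtain ⟨h1, h2⟩ := hι (x, y) hmem
      rw [hpe]
      exact ⟨hmem, h2, h1⟩
    · have hpe : pr x y = (y, x) := by simp only [hprdef]; exact if_neg (not_lt.mpr h.le)
      have hmem : (y, x) ∈ E := memE.mpr ⟨hy, hx, h⟩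
      obtain ⟨h1, h2⟩ := hι (y, x) hmem
      rw [hpe, vsubc]
      exact ⟨hmem, h2, h1⟩
  -- real values of the β-side valuations
  set rb : Fin d × Fin d → ℝ := fun p => WithTop.untopD 0 (v (β (τ p.1) - β (τ p.2))) with hrbdef
  have hrb : ∀ p ∈ E, v (β (τ p.1) - β (τ p.2)) = ((rb p : ℝ) : WithTop ℝ) := by
    intro p hp
    obtain ⟨h1, h2, h3⟩ := memE.mp hp
    have hne : β (τ p.1) - β (τ p.2) ≠ 0 := by
      intro h
      have hττ : τ p.1 = τ p.2 := hβ (sub_eq_zero.mp h)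
      exact (ne_of_lt h3) (hτ (Finset.mem_coe.mpr h1) (Finset.mem_coe.mpr h2) hττ)
    have hvne : v (β (τ p.1) - β (τ p.2)) ≠ ⊤ := fun h => hne ((hv0 _).mp h)
    obtain ⟨r, hr⟩ := WithTop.ne_top_iff_exists.mp hvne
    simp only [hrbdef]
    rw [← hr]
    rfl
  -- index of β-side pairs
  set jj : Fin d × Fin d → ℕ :=
    fun p => if φ p.1 = φ p.2 then m else ι (pr (φ p.1) (φ p.2)) with hjjdef
  -- collapsed pairs have large valuation
  have hcol : ∀ p ∈ E, φ p.1 = φ p.2 → (a m : WithTop ℝ) < v (β (τ p.1) - β (τ p.2)) := by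
    intro p hp hφeq
    simp only [hφdef] at hφeq
    have hσeq : σ (τ p.1) = σ (τ p.2) :=
      hρbij.injOn (Finset.mem_coe.mpr (hσL' (τ p.1))) (Finset.mem_coe.mpr (hσL' (τ p.2))) hφeq
    have hdecomp : β (τ p.1) - β (τ p.2)
        = (β (τ p.1) - β (σ (τ p.1))) + -(β (τ p.2) - β (σ (τ p.2))) := by
      rw [hσeq]; ring
    rw [hdecomp]
    refine lt_of_lt_of_le (lt_min (hσv (τ p.1)) ?_) (hvadd _ _)
    rw [vneg]
    exact hσv (τ p.2)
  -- non-collapsed pairs take the α-side valuation of the image pair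
  have hncol : ∀ p ∈ E, φ p.1 ≠ φ p.2 →
      v (β (τ p.1) - β (τ p.2)) = v (α (φ p.1) - α (φ p.2)) := by
    intro p hp hφne
    have hval : v (β (σ (τ p.1)) - β (σ (τ p.2))) = v (α (φ p.1) - α (φ p.2)) :=
      hρval _ (hσL' _) _ (hσL' _)
    obtain ⟨hq, hqv, hqm⟩ := hprE (φ p.1) (hφL p.1) (φ p.2) (hφL p.2) hφne
    have hle : v (α (φ p.1) - α (φ p.2)) ≤ ((a m : ℝ) : WithTop ℝ) := by
      rw [hqv]
      exact_mod_cast amono _ m hqm le_rfl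
    have hw : v (β (σ (τ p.1)) - β (σ (τ p.2)))
        < v ((β (τ p.1) - β (σ (τ p.1))) + -(β (τ p.2) - β (σ (τ p.2)))) := by
      rw [hval]
      refine lt_of_le_of_lt hle ?_
      refine lt_of_lt_of_le (lt_min (hσv (τ p.1)) ?_) (hvadd _ _)
      rw [vneg]
      exact hσv (τ p.2)
    have hdecomp : β (τ p.1) - β (τ p.2)
        = (β (σ (τ p.1)) - β (σ (τ p.2)))
          + ((β (τ p.1) - β (σ (τ p.1))) + -(β (τ p.2) - β (σ (τ p.2)))) := by ring
    rw [hdecomp, vaddeq _ _ hw, hval]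
  -- basic facts about jj
  have hjm' : ∀ p ∈ E, jj p ≤ m := by
    intro p hp
    simp only [hjjdef]
    split_ifs with hc
    · exact le_rfl
    · exact (hprE _ (hφL p.1) _ (hφL p.2) hc).2.2
  have hbj' : ∀ p ∈ E, a (jj p) ≤ rb p := by
    intro p hp
    have hh : ((a (jj p) : ℝ) : WithTop ℝ) ≤ ((rb p : ℝ) : WithTop ℝ) := by
      rw [← hrb p hp]
      simp only [hjjdef]
      split_ifs with hc
      · exact (hcol p hp hc).le
      · obtain ⟨hq, hqv, hqm⟩ := hprE (φ p.1) (hφL p.1) (φ p.2) (hφL p.2) hc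
        rw [hncol p hp hc, hqv]
    exact_mod_cast hh
  -- level characterization for jj
  have hjlev : ∀ t, 1 ≤ t → t ≤ m → ∀ p ∈ E,
      (t ≤ jj p ↔ ((a t : ℝ) : WithTop ℝ) ≤ v (β (τ p.1) - β (τ p.2))) := by
    intro t ht1 htm p hp
    simp only [hjjdef]
    split_ifs with hc
    · constructor
      · intro _
        refine le_of_lt (lt_of_le_of_lt ?_ (hcol p hp hc))
        exact_mod_cast amono t m htm le_rfl
      · intro _
        exact htm
    · obtain ⟨hq, hqv, hqm⟩ := hprE (φ p.1) (hφL p.1) (φ p.2) (hφL p.2) hc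
      rw [hncol p hp hc, hqv, WithTop.coe_le_coe]
      exact (alt t _ htm hqm).symm
  have hιlev : ∀ t, t ≤ m → ∀ p ∈ E,
      (t ≤ ι p ↔ ((a t : ℝ) : WithTop ℝ) ≤ v (α p.1 - α p.2)) := by
    intro t htm p hp
    obtain ⟨hιm', hv'⟩ := hι p hp
    rw [hv', WithTop.coe_le_coe]
    exact (alt t (ι p) htm hιm').symm
  -- the level disjunction (case 1 / case 2 with pigeonhole)
  have hlevel : ∀ t, 1 ≤ t → t ≤ m →
      ((∃ p ∈ E, t ≤ jj p ∧ ι p + 1 ≤ t) ∨ (∀ p ∈ E, t ≤ jj p ↔ t ≤ ι p)) := by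
    intro t ht1 htm
    by_cases hcase : ∃ p ∈ E, t ≤ jj p ∧ ι p + 1 ≤ t
    · exact Or.inl hcase
    · right
      push_neg at hcase
      have hc2 : ∀ p ∈ E, t ≤ jj p → t ≤ ι p := by
        intro p hp hj
        have := hcase p hp hj
        omega
      set Rel : Fin d → Fin d → Prop :=
        fun x y => x = y ∨ ((a t : ℝ) : WithTop ℝ) ≤ v (α x - α y) with hRel
      have hRsymm : ∀ x y, Rel x y → Rel y x := by
        intro x y h
        rcases h with rfl | h
        · exact Or.inl rfl
        · exact Or.inr (by rwa [vsubc])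
      have hRtrans : ∀ x y z, Rel x y → Rel y z → Rel x z := by
        intro x y z h1 h2
        rcases h1 with rfl | h1
        · exact h2
        rcases h2 with rfl | h2
        · exact Or.inr h1
        rcases eq_or_ne x z with rfl | hxz
        · exact Or.inl rfl
        refine Or.inr ?_
        rw [show α x - α z = (α x - α y) + (α y - α z) by ring]
        exact le_trans (le_min h1 h2) (hvadd _ _)
      set c : Fin d → Finset (Fin d) := fun x => L.filter (fun y => Rel x y) with hcdef
      have hcrel : ∀ x ∈ L, ∀ y ∈ L, (Rel x y ↔ c x = c y) := by
        intro x hx y hy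
        constructor
        · intro h
          simp only [hcdef]
          ext z
          simp only [Finset.mem_filter]
          constructor
          · rintro ⟨hz, hxz⟩
            exact ⟨hz, hRtrans y x z (hRsymm x y h) hxz⟩
          · rintro ⟨hz, hyz⟩
            exact ⟨hz, hRtrans x y z h hyz⟩
        · intro h
          have hy' : y ∈ c x := by
            rw [h]
            exact Finset.mem_filter.mpr ⟨hy, Or.inl rfl⟩
          exact (Finset.mem_filter.mp hy').2
      have hRjj : ∀ p ∈ E, (Rel (φ p.1) (φ p.2) ↔ t ≤ jj p) := by
        intro p hp
        rw [hjlev t ht1 htm p hp]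
        by_cases hc : φ p.1 = φ p.2
        · constructor
          · intro _
            refine le_of_lt (lt_of_le_of_lt ?_ (hcol p hp hc))
            exact_mod_cast amono t m htm le_rfl
          · intro _
            exact Or.inl hc
        · rw [hncol p hp hc]
          exact or_iff_right hc
      have hRι : ∀ p ∈ E, (Rel p.1 p.2 ↔ t ≤ ι p) := by
        intro p hp
        obtain ⟨h1, h2, h3⟩ := memE.mp hp
        rw [hιlev t htm p hp]
        exact or_iff_right (ne_of_lt h3)
      have himg : ∀ x ∈ L, ∃ y ∈ L, c y = c (φ x) := by
        intro x hx
        exact ⟨φ x, hφL x, rfl⟩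
      have h2pig : ∀ x ∈ L, ∀ y ∈ L, c (φ x) = c (φ y) → c x = c y := by
        intro x hx y hy hcc
        rcases eq_or_ne x y with rfl | hxy
        · rfl
        have hRφ : Rel (φ x) (φ y) := (hcrel (φ x) (hφL x) (φ y) (hφL y)).mpr hcc
        rcases hprcases x y hxy with hq | hq
        · have hqE : (x, y) ∈ E := by
            have := (hprE x hx y hy hxy).1
            rwa [hq] at this
          have hjjq : t ≤ jj (x, y) := (hRjj (x, y) hqE).mp hRφ
          have hιq : t ≤ ι (x, y) := hc2 _ hqE hjjq
          have hRxy : Rel x y := (hRι (x, y) hqE).mpr hιq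
          exact (hcrel x hx y hy).mp hRxy
        · have hqE : (y, x) ∈ E := by
            have := (hprE x hx y hy hxy).1
            rwa [hq] at this
          have hjjq : t ≤ jj (y, x) := (hRjj (y, x) hqE).mp (hRsymm _ _ hRφ)
          have hιq : t ≤ ι (y, x) := hc2 _ hqE hjjq
          have hRxy : Rel y x := (hRι (y, x) hqE).mpr hιq
          exact ((hcrel y hy x hx).mp hRxy).symm
      have hpig := pigeon L c (fun x => c (φ x)) himg h2pig
      intro p hp
      constructor
      · exact hc2 p hp
      · intro hιp
        obtain ⟨h1, h2', h3⟩ := memE.mp hp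
        have hRxy : Rel p.1 p.2 := (hRι p hp).mpr hιp
        have hcc : c p.1 = c p.2 := (hcrel _ h1 _ h2').mp hRxy
        have hccφ := hpig p.1 h1 p.2 h2' hcc
        have hRφ : Rel (φ p.1) (φ p.2) := (hcrel _ (hφL _) _ (hφL _)).mpr hccφ
        exact (hRjj p hp).mp hRφ
  -- C facts
  have hCt : ∀ t, 1 ≤ t → t ≤ m →
      C t = ∑ p ∈ E.filter (fun p => t ≤ ι p), (C (ι p + 1) + 1) := by
    intro t _ htm
    exact hCrec t htm
  have hanti : ∀ s t : ℕ, s ≤ t → t ≤ m → C t ≤ C s := by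
    intro s t hst htm
    rcases eq_or_lt_of_le hst with rfl | h
    · exact le_rfl
    rw [hCrec t htm, hCrec s (le_trans hst htm)]
    apply Finset.sum_le_sum_of_subset
    intro p hp
    simp only [Finset.mem_filter] at hp ⊢
    exact ⟨hp.1, by omega⟩
  -- apply the core lemma
  have hcore := core_sum E m a ha ι jj (fun p => C (ι p + 1) + 1) rb C
    (fun p _ => rfl) (fun p hp => (hι p hp).1) hjm' hbj' hCt hanti hlevel
  -- transfer the WithTop sums to real sums
  have hL : (∑ p ∈ E, (C (ι p + 1) + 1) • v (β (τ p.1) - β (τ p.2)))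
      = (((∑ p ∈ E, ((C (ι p + 1) + 1 : ℕ) : ℝ) * rb p) : ℝ) : WithTop ℝ) := by
    rw [coe_sum_withTop]
    refine Finset.sum_congr rfl ?_
    intro p hp
    rw [hrb p hp, nsmul_coe_withTop]
  have hR : (∑ p ∈ E, (C (ι p + 1) + 1) • v (α p.1 - α p.2))
      = (((∑ p ∈ E, ((C (ι p + 1) + 1 : ℕ) : ℝ) * a (ι p)) : ℝ) : WithTop ℝ) := by
    rw [coe_sum_withTop]
    refine Finset.sum_congr rfl ?_
    intro p hp
    rw [(hι p hp).2, nsmul_coe_withTop]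
  rw [hL, hR, WithTop.coe_eq_coe, hcore]
  constructor
  · intro h x hx y hy
    rcases eq_or_ne x y with rfl | hxy
    · rw [sub_self, sub_self]
    rcases lt_or_gt_of_ne hxy with hlt | hgt
    · have hpE : (x, y) ∈ E := memE.mpr ⟨hx, hy, hlt⟩
      have h1 := hrb (x, y) hpE
      have h2 := (hι (x, y) hpE).2
      have h3 := h (x, y) hpE
      exact h1.trans (by rw [h3]; exact h2.symm)
    · have hpE : (y, x) ∈ E := memE.mpr ⟨hy, hx, hgt⟩
      have h1 := hrb (y, x) hpE
      have h2 := (hι (y, x) hpE).2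
      have h3 := h (y, x) hpE
      rw [vsubc (β (τ x)) (β (τ y)), vsubc (α x) (α y)]
      exact h1.trans (by rw [h3]; exact h2.symm)
  · intro h p hp
    obtain ⟨h1, h2', h3⟩ := memE.mp hp
    have hh := h p.1 h1 p.2 h2'
    rw [hrb p hp, (hι p hp).2] at hh
    exact_mod_cast hh
end

section
/- Let K be a field with an additive ultrametric valuation v, let d ≥ 2, let α : Fin d → K be injective, set N := d(d−1)/2, and let F := ∏_{i<j} (X − (α i − α j)²) ∈ K[X], a monic polynomial of degree N. Then all the pairwise valuations v(α i − α j) for i ≠ j are equal (the phylogenetic type of the tree associated to α is trivial, i.e., the configuration has 'tree of good reduction') if and only if for every n ≤ N one has N · v(F.coeff n) ≥ (N − n) · v(F.coeff 0), where the inequality is in ℝ ∪ {∞}. (This says the point (0, v(F.coeff 0)), …, (N, 0) Newton polygon of F is a single line segment, i.e., trop(f) lies in the Newton half-space I(P₀, P_N).) -/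
open Polynomial Finset

section Aux

variable {K : Type*} [Field K]

private lemma val_one (v : K → WithTop ℝ) (hv0 : ∀ x : K, v x = ⊤ ↔ x = 0)
    (hvmul : ∀ x y : K, v (x * y) = v x + v y) : v 1 = 0 := by
  have h1 : v 1 ≠ ⊤ := by simp [hv0]
  obtain ⟨a, ha⟩ := WithTop.ne_top_iff_exists.mp h1
  have h := hvmul 1 1
  rw [mul_one, ← ha] at h
  have h' : a = a + a := by exact_mod_cast h
  have h0 : a = 0 := by linarith
  rw [← ha, h0]
  exact WithTop.coe_zero

private lemma val_neg (v : K → WithTop ℝ) (hv0 : ∀ x : K, v x = ⊤ ↔ x = 0)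
    (hvmul : ∀ x y : K, v (x * y) = v x + v y) (x : K) : v (-x) = v x := by
  have hm : v (-1 : K) = 0 := by
    have h1 : v (-1 : K) ≠ ⊤ := by simp [hv0]
    obtain ⟨a, ha⟩ := WithTop.ne_top_iff_exists.mp h1
    have h := hvmul (-1) (-1)
    rw [neg_mul_neg, one_mul, val_one v hv0 hvmul, ← ha] at h
    have h' : (0 : ℝ) = a + a := by exact_mod_cast h
    have h0 : a = 0 := by linarith
    rw [← ha, h0]
    exact WithTop.coe_zero
  have h := hvmul (-1) x
  rwa [neg_one_mul, hm, zero_add] at h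

private lemma val_add_eq (v : K → WithTop ℝ) (hv0 : ∀ x : K, v x = ⊤ ↔ x = 0)
    (hvmul : ∀ x y : K, v (x * y) = v x + v y)
    (hvadd : ∀ x y : K, min (v x) (v y) ≤ v (x + y))
    {x y : K} (h : v x < v y) : v (x + y) = v x := by
  refine le_antisymm ?_ ?_
  · by_contra hlt
    push_neg at hlt
    have hxy : (x + y) + (-y) = x := by ring
    have h2 := hvadd (x + y) (-y)
    rw [hxy, val_neg v hv0 hvmul] at h2
    exact absurd h2 (not_le.mpr (lt_min hlt h))
  · have h2 := hvadd x y
    rwa [min_eq_left h.le] at h2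

private lemma val_sum_lt {ι : Type*} (v : K → WithTop ℝ)
    (hv0 : ∀ x : K, v x = ⊤ ↔ x = 0)
    (hvadd : ∀ x y : K, min (v x) (v y) ≤ v (x + y))
    (s : Finset ι) (f : ι → K) {r : WithTop ℝ} (hr : r ≠ ⊤) :
    (∀ a ∈ s, r < v (f a)) → r < v (∑ a ∈ s, f a) := by
  classical
  induction s using Finset.induction with
  | empty =>
    intro _
    rw [Finset.sum_empty, (hv0 0).2 rfl]
    exact hr.lt_top
  | @insert a s ha ih =>
    intro h
    rw [Finset.sum_insert ha]
    exact lt_of_lt_of_le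
      (lt_min (h _ (Finset.mem_insert_self _ _))
        (ih fun a has => h a (Finset.mem_insert_of_mem has))) (hvadd _ _)

private lemma val_sum_eq {ι : Type*} [DecidableEq ι] (v : K → WithTop ℝ)
    (hv0 : ∀ x : K, v x = ⊤ ↔ x = 0)
    (hvmul : ∀ x y : K, v (x * y) = v x + v y)
    (hvadd : ∀ x y : K, min (v x) (v y) ≤ v (x + y))
    (s : Finset ι) (f : ι → K) {b : ι} (hb : b ∈ s) (hne : v (f b) ≠ ⊤)
    (h : ∀ a ∈ s, a ≠ b → v (f b) < v (f a)) :
    v (∑ a ∈ s, f a) = v (f b) := by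
  rw [← Finset.add_sum_erase s f hb]
  exact val_add_eq v hv0 hvmul hvadd
    (val_sum_lt v hv0 hvadd _ f hne fun a haa =>
      h a (Finset.mem_of_mem_erase haa) (Finset.ne_of_mem_erase haa))

private lemma val_prod (v : K → WithTop ℝ) (hv0 : ∀ x : K, v x = ⊤ ↔ x = 0)
    (hvmul : ∀ x y : K, v (x * y) = v x + v y) (t : Multiset K) :
    v t.prod = (t.map v).sum := by
  induction t using Multiset.induction with
  | empty => simpa using val_one v hv0 hvmul
  | cons x t ih => simp [hvmul, ih]

private lemma card_nsmul_le_sum_map (v : K → WithTop ℝ) (t : Multiset K)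
    {r : WithTop ℝ} : (∀ x ∈ t, r ≤ v x) → Multiset.card t • r ≤ (t.map v).sum := by
  induction t using Multiset.induction with
  | empty => intro _; simp
  | cons x t ih =>
    intro h
    rw [Multiset.map_cons, Multiset.sum_cons, Multiset.card_cons, succ_nsmul,
      add_comm (Multiset.card t • r) r]
    exact add_le_add (h x (Multiset.mem_cons_self x t))
      (ih fun y hy => h y (Multiset.mem_cons_of_mem hy))

private lemma monic_aux (t : Multiset K) : ((t.map fun x => X - C x).prod).Monic :=
  monic_multiset_prod_of_monic _ _ fun _ _ => monic_X_sub_C _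

private lemma natDegree_aux (t : Multiset K) :
    ((t.map fun x => X - C x).prod).natDegree = Multiset.card t := by
  rw [natDegree_multiset_prod_of_monic]
  · simp [Multiset.map_map, Function.comp, natDegree_X_sub_C]
  · intro f hf
    obtain ⟨x, _, rfl⟩ := Multiset.mem_map.mp hf
    exact monic_X_sub_C _

private lemma val_coeff_zero (v : K → WithTop ℝ) (hv0 : ∀ x : K, v x = ⊤ ↔ x = 0)
    (hvmul : ∀ x y : K, v (x * y) = v x + v y) (t : Multiset K) :
    v (((t.map fun x => X - C x).prod).coeff 0) = (t.map v).sum := by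
  rw [coeff_zero_multiset_prod, Multiset.map_map, val_prod v hv0 hvmul, Multiset.map_map]
  apply congrArg
  apply Multiset.map_congr rfl
  intro x _
  have h1 : (X - C x).coeff 0 = -x := by simp
  simp only [Function.comp_apply, h1, val_neg v hv0 hvmul]

private lemma val_coeff_le (v : K → WithTop ℝ) (hv0 : ∀ x : K, v x = ⊤ ↔ x = 0)
    (hvmul : ∀ x y : K, v (x * y) = v x + v y)
    (hvadd : ∀ x y : K, min (v x) (v y) ≤ v (x + y))
    (t : Multiset K) {r : WithTop ℝ} :
    (∀ x ∈ t, r ≤ v x) → ∀ i : ℕ,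
      (Multiset.card t - i) • r ≤ v (((t.map fun x => X - C x).prod).coeff i) := by
  induction t using Multiset.induction with
  | empty =>
    intro _ i
    simp only [Multiset.map_zero, Multiset.prod_zero, Multiset.card_zero, Nat.zero_sub,
      zero_nsmul]
    rcases Nat.eq_zero_or_pos i with rfl | hi
    · rw [coeff_one_zero, val_one v hv0 hvmul]
    · have h1 : (1 : K[X]).coeff i = 0 := by
        rw [coeff_one]
        simp [Nat.pos_iff_ne_zero.mp hi]
      rw [h1, (hv0 0).2 rfl]
      exact le_top
  | cons a t ih =>
    intro h i
    have hQm := monic_aux (K := K) t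
    have hQd := natDegree_aux (K := K) t
    have hprod : ((a ::ₘ t).map fun x => X - C x).prod
        = (X - C a) * (t.map fun x => X - C x).prod := by
      rw [Multiset.map_cons, Multiset.prod_cons]
    set Q := (t.map fun x => X - C x).prod with hQ
    rw [hprod, Multiset.card_cons]
    have ha : r ≤ v a := h a (Multiset.mem_cons_self a t)
    have ht : ∀ x ∈ t, r ≤ v x := fun x hx => h x (Multiset.mem_cons_of_mem hx)
    rcases i with _ | k
    · rw [mul_coeff_zero]
      have hc0 : (X - C a).coeff 0 = -a := by simp
      rw [hc0, hvmul, val_neg v hv0 hvmul, Nat.sub_zero, succ_nsmul,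
        add_comm (Multiset.card t • r) r]
      exact add_le_add ha (by simpa using ih ht 0)
    · have hexp : ((X - C a) * Q).coeff (k + 1) = Q.coeff k + (-(a * Q.coeff (k + 1))) := by
        rw [sub_mul, coeff_sub, coeff_X_mul, coeff_C_mul, sub_eq_add_neg]
      rcases lt_or_ge k (Multiset.card t) with hk | hk
      · have harith : Multiset.card t + 1 - (k + 1) = Multiset.card t - k := by omega
        rw [harith, hexp]
        refine le_trans (le_min ?_ ?_) (hvadd _ _)
        · exact ih ht k
        · rw [val_neg v hv0 hvmul, hvmul]
          have h2 := ih ht (k + 1)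
          have harith2 : Multiset.card t - k = (Multiset.card t - (k + 1)) + 1 := by omega
          rw [harith2, succ_nsmul, add_comm ((Multiset.card t - (k + 1)) • r) r]
          exact add_le_add ha h2
      · have hz : Multiset.card t + 1 - (k + 1) = 0 := by omega
        rw [hz, zero_nsmul]
        have hPm : ((X - C a) * Q).Monic := (monic_X_sub_C a).mul hQm
        have hPd : ((X - C a) * Q).natDegree = Multiset.card t + 1 := by
          rw [Monic.natDegree_mul (monic_X_sub_C a) hQm, natDegree_X_sub_C, hQd, add_comm]
        rcases eq_or_lt_of_le hk with heq | hlt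
        · have hk1 : k + 1 = ((X - C a) * Q).natDegree := by rw [hPd]; omega
          rw [hk1, hPm.coeff_natDegree, val_one v hv0 hvmul]
        · have hc : ((X - C a) * Q).coeff (k + 1) = 0 :=
            coeff_eq_zero_of_natDegree_lt (by rw [hPd]; omega)
          rw [hc, (hv0 0).2 rfl]
          exact le_top

private lemma nsmul_top' {n : ℕ} (hn : n ≠ 0) : n • (⊤ : WithTop ℝ) = ⊤ := by
  cases n with
  | zero => exact absurd rfl hn
  | succ k => rw [succ_nsmul]; exact add_top _

private lemma card_pairs (d : ℕ) :
    (univ.filter fun p : Fin d × Fin d => p.1 < p.2).card = d * (d - 1) / 2 := by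
  classical
  rw [Finset.card_eq_sum_card_fiberwise (f := Prod.fst) (t := univ)
    (fun x _ => Finset.mem_univ _)]
  have h1 : ∀ i : Fin d,
      ((univ.filter fun p : Fin d × Fin d => p.1 < p.2).filter fun p => p.1 = i).card
        = (Finset.Ioi i).card := by
    intro i
    apply Finset.card_bij (fun p _ => p.2)
    · intro p hp
      simp only [Finset.mem_filter, Finset.mem_univ, true_and] at hp
      rw [Finset.mem_Ioi, ← hp.2]
      exact hp.1
    · intro p hp q hq hpq
      simp only [Finset.mem_filter, Finset.mem_univ, true_and] at hp hq
      exact Prod.ext (hp.2.trans hq.2.symm) hpq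
    · intro j hj
      exact ⟨(i, j), by simp [Finset.mem_Ioi.mp hj], rfl⟩
  simp_rw [h1, Fin.card_Ioi]
  rw [Fin.sum_univ_eq_sum_range (fun i => d - 1 - i)]
  rw [show (∑ i ∈ Finset.range d, (d - 1 - i)) = ∑ i ∈ Finset.range d, i from
    Finset.sum_range_reflect (fun i => i) d]
  exact Finset.sum_range_id d

end Aux

/-- Let `v` be an additive ultrametric valuation on a field `K`, `d ≥ 2`,
`α : Fin d → K` injective, `N = d(d-1)/2`, and `F = ∏_{i<j} (X - (α i - α j)²)`, a monic
polynomial of degree `N`.  Then all pairwise valuations `v (α i - α j)` (for `i ≠ j`) are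
equal — the tree of `α` is phylogenetically trivial ("tree of good reduction") — if and
only if for every `n ≤ N` one has `N • v (F.coeff n) ≥ (N - n) • v (F.coeff 0)`, i.e. the
Newton polygon of `F` is a single line segment (`trop f` lies in the Newton half-space
`I(P₀, P_N)`). -/
theorem trivial_tree_iff_single_newton_segment
    {K : Type*} [Field K] (v : K → WithTop ℝ)
    (hv0 : ∀ x : K, v x = ⊤ ↔ x = 0)
    (hvmul : ∀ x y : K, v (x * y) = v x + v y)
    (hvadd : ∀ x y : K, min (v x) (v y) ≤ v (x + y))
    (d : ℕ) (hd : 2 ≤ d)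
    (α : Fin d → K) (hα : Function.Injective α)
    (N : ℕ) (hN : N = d * (d - 1) / 2)
    (F : Polynomial K)
    (hF : F = ∏ p ∈ univ.filter (fun p : Fin d × Fin d => p.1 < p.2),
      (X - C ((α p.1 - α p.2) ^ 2))) :
    (∀ i j : Fin d, i ≠ j → ∀ i' j' : Fin d, i' ≠ j' →
        v (α i - α j) = v (α i' - α j'))
      ↔ ∀ n : ℕ, n ≤ N → (N - n) • v (F.coeff 0) ≤ N • v (F.coeff n) := by
  classical
  set P : Finset (Fin d × Fin d) := univ.filter (fun p : Fin d × Fin d => p.1 < p.2)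
    with hPdef
  set s : Multiset K := P.val.map (fun p => (α p.1 - α p.2) ^ 2) with hsdef
  have hFs : F = (s.map fun x => X - C x).prod := by
    rw [hF, Finset.prod_eq_multiset_prod, hsdef, Multiset.map_map]
    rfl
  have hcards : Multiset.card s = N := by
    rw [hsdef, Multiset.card_map, hN]
    exact card_pairs d
  have hsne : ∀ x ∈ s, x ≠ 0 := by
    intro x hx
    obtain ⟨p, hp, rfl⟩ := Multiset.mem_map.mp hx
    have hp' : p.1 < p.2 := by
      have := Finset.mem_val.mp hp
      rw [hPdef, Finset.mem_filter] at this
      exact this.2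
    have hne : α p.1 ≠ α p.2 := fun hc => absurd (hα hc) (ne_of_lt hp')
    exact pow_ne_zero _ (sub_ne_zero.mpr hne)
  have hsv : ∀ x ∈ s, v x ≠ ⊤ := fun x hx hc => hsne x hx ((hv0 x).mp hc)
  constructor
  · -- forward
    intro h n hn
    have h0d : 0 < d := by omega
    have h1d : 1 < d := by omega
    set i₀ : Fin d := ⟨0, h0d⟩
    set i₁ : Fin d := ⟨1, h1d⟩
    have h01 : i₀ ≠ i₁ := by simp [i₀, i₁, Fin.ext_iff]
    set c := v (α i₀ - α i₁) with hc
    have hall : ∀ x ∈ s, v x = c + c := by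
      intro x hx
      obtain ⟨p, hp, rfl⟩ := Multiset.mem_map.mp hx
      have hp' : p.1 < p.2 := by
        have := Finset.mem_val.mp hp
        rw [hPdef, Finset.mem_filter] at this
        exact this.2
      show v ((α p.1 - α p.2) ^ 2) = c + c
      rw [sq, hvmul, h p.1 p.2 (fun hc => absurd (Fin.val_eq_of_eq hc) (ne_of_lt hp'))
        i₀ i₁ h01]
    set c2 := c + c with hc2
    have hco : v (F.coeff 0) = N • c2 := by
      rw [hFs, val_coeff_zero v hv0 hvmul]
      have hrep : s.map v = Multiset.replicate N c2 :=
        Multiset.eq_replicate.mpr ⟨by rw [Multiset.card_map, hcards],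
          fun b hb => by
            obtain ⟨x, hx, rfl⟩ := Multiset.mem_map.mp hb
            exact hall x hx⟩
      rw [hrep, Multiset.sum_replicate]
    have hcn : (N - n) • c2 ≤ v (F.coeff n) := by
      rw [hFs]
      have := val_coeff_le v hv0 hvmul hvadd s (fun x hx => (hall x hx).ge) n
      rwa [hcards] at this
    rw [hco]
    calc (N - n) • (N • c2) = (N * (N - n)) • c2 := (mul_nsmul c2 N (N - n)).symm
      _ = ((N - n) * N) • c2 := by rw [mul_comm]
      _ = N • ((N - n) • c2) := mul_nsmul c2 (N - n) N
      _ ≤ N • v (F.coeff n) := nsmul_le_nsmul_right hcn N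
  · -- backward
    intro hnew i j hij i' j' hij'
    by_contra hvne
    have norm : ∀ (a b : Fin d), a ≠ b → ∃ p ∈ P,
        v ((α p.1 - α p.2) ^ 2) = v (α a - α b) + v (α a - α b) := by
      intro a b hab
      rcases lt_or_gt_of_ne hab with hlt | hgt
      · refine ⟨(a, b), ?_, by rw [sq, hvmul]⟩
        rw [hPdef, Finset.mem_filter]
        exact ⟨Finset.mem_univ _, hlt⟩
      · refine ⟨(b, a), ?_, ?_⟩
        · rw [hPdef, Finset.mem_filter]
          exact ⟨Finset.mem_univ _, hgt⟩
        · show v ((α b - α a) ^ 2) = _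
          rw [sq, hvmul, show α b - α a = -(α a - α b) by ring, val_neg v hv0 hvmul]
    obtain ⟨p, hpP, hpv⟩ := norm i j hij
    obtain ⟨p', hp'P, hp'v⟩ := norm i' j' hij'
    obtain ⟨p₀, hp₀P, hp₀min⟩ := P.exists_min_image
      (fun q => v ((α q.1 - α q.2) ^ 2)) ⟨p, hpP⟩
    set c := v ((α p₀.1 - α p₀.2) ^ 2) with hcdef
    have hsmem : ∀ q ∈ P, (α q.1 - α q.2) ^ 2 ∈ s := fun q hq =>
      Multiset.mem_map_of_mem _ (Finset.mem_val.mpr hq)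
    have hsmin : ∀ x ∈ s, c ≤ v x := by
      intro x hx
      obtain ⟨q, hq, rfl⟩ := Multiset.mem_map.mp hx
      exact hp₀min q (Finset.mem_val.mp hq)
    obtain ⟨r₀, hr₀⟩ := WithTop.ne_top_iff_exists.mp (hsv _ (hsmem p₀ hp₀P))
    rw [← hcdef] at hr₀
    have hfin1 : v (α i - α j) ≠ ⊤ := fun hc =>
      hij (hα (sub_eq_zero.mp ((hv0 _).mp hc)))
    have hfin2 : v (α i' - α j') ≠ ⊤ := fun hc =>
      hij' (hα (sub_eq_zero.mp ((hv0 _).mp hc)))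
    have hvpne : v ((α p.1 - α p.2) ^ 2) ≠ v ((α p'.1 - α p'.2) ^ 2) := by
      rw [hpv, hp'v]
      intro hcc
      apply hvne
      obtain ⟨a, ha⟩ := WithTop.ne_top_iff_exists.mp hfin1
      obtain ⟨b, hb⟩ := WithTop.ne_top_iff_exists.mp hfin2
      rw [← ha, ← hb] at hcc ⊢
      have h2 : a + a = b + b := by exact_mod_cast hcc
      have h3 : a = b := by linarith
      rw [h3]
    have hq : ∃ q ∈ P, c < v ((α q.1 - α q.2) ^ 2) := by
      rcases eq_or_lt_of_le (hp₀min p hpP) with he | hl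
      · exact ⟨p', hp'P, lt_of_le_of_ne (hp₀min p' hp'P)
          (fun hcx => hvpne (by rw [← he, ← hcx]))⟩
      · exact ⟨p, hpP, hl⟩
    obtain ⟨q, hqP, hqv⟩ := hq
    set t₀ := s.filter (fun x => v x = c) with ht₀def
    set t₁ := s.filter (fun x => ¬ v x = c) with ht₁def
    have hsplit : t₀ + t₁ = s := Multiset.filter_add_not _ s
    set m := Multiset.card t₀ with hmdef
    have ht₀mem : ∀ x ∈ t₀, v x = c := fun x hx => (Multiset.mem_filter.mp hx).2
    have ht₁mem : ∀ x ∈ t₁, c < v x := fun x hx =>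
      lt_of_le_of_ne (hsmin x (Multiset.mem_filter.mp hx).1)
        (Ne.symm (Multiset.mem_filter.mp hx).2)
    have hm1 : 1 ≤ m := by
      have hmem : (α p₀.1 - α p₀.2) ^ 2 ∈ t₀ :=
        Multiset.mem_filter.mpr ⟨hsmem p₀ hp₀P, rfl⟩
      exact Multiset.card_pos_iff_exists_mem.mpr ⟨_, hmem⟩
    have hcard01 : m + Multiset.card t₁ = N := by
      rw [hmdef, ← Multiset.card_add, hsplit, hcards]
    have ht₁card : 1 ≤ Multiset.card t₁ := by
      have hmem : (α q.1 - α q.2) ^ 2 ∈ t₁ :=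
        Multiset.mem_filter.mpr ⟨hsmem q hqP, ne_of_gt hqv⟩
      exact Multiset.card_pos_iff_exists_mem.mpr ⟨_, hmem⟩
    have ht₁ne : t₁ ≠ 0 := by
      intro hcz
      rw [hcz] at ht₁card
      simp at ht₁card
    obtain ⟨y, hy⟩ := Multiset.exists_mem_of_ne_zero ht₁ne
    obtain ⟨x₁, hx₁, hx₁min⟩ := (t₁.toFinset).exists_min_image v
      ⟨y, Multiset.mem_toFinset.mpr hy⟩
    set c₁ := v x₁ with hc₁def
    have hcc₁ : c < c₁ := ht₁mem x₁ (Multiset.mem_toFinset.mp hx₁)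
    have ht₁lb : ∀ x ∈ t₁, c₁ ≤ v x := fun x hx => hx₁min x (Multiset.mem_toFinset.mpr hx)
    set P₀ := (t₀.map fun x => X - C x).prod with hP₀
    set P₁ := (t₁.map fun x => X - C x).prod with hP₁
    have hFP : F = P₀ * P₁ := by
      rw [hFs, ← hsplit, Multiset.map_add, Multiset.prod_add]
    set n := N - m with hndef
    have hNn : N - n = m := by omega
    have hnt₁ : n = Multiset.card t₁ := by omega
    have hP₀deg : P₀.natDegree = m := by rw [hP₀]; exact natDegree_aux t₀
    have hP₁c : P₁.coeff n = 1 := by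
      rw [hP₁, hnt₁, ← natDegree_aux (K := K) t₁]
      exact (monic_aux t₁).coeff_natDegree
    have hvP₀0 : v (P₀.coeff 0) = m • c := by
      rw [hP₀, val_coeff_zero v hv0 hvmul]
      have hrep : t₀.map v = Multiset.replicate m c :=
        Multiset.eq_replicate.mpr ⟨by rw [Multiset.card_map],
          fun b hb => by
            obtain ⟨x, hx, rfl⟩ := Multiset.mem_map.mp hb
            exact ht₀mem x hx⟩
      rw [hrep, Multiset.sum_replicate]
    have hmc_ne : (m • c : WithTop ℝ) ≠ ⊤ := by
      rw [← hr₀, ← WithTop.coe_nsmul]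
      exact WithTop.coe_ne_top
    have hfb' : v (P₀.coeff 0 * P₁.coeff n) = m • c := by
      rw [hP₁c, mul_one, hvP₀0]
    have hothers : ∀ x ∈ Finset.HasAntidiagonal.antidiagonal n, x ≠ ((0 : ℕ), n) →
        v (P₀.coeff 0 * P₁.coeff n) < v (P₀.coeff x.1 * P₁.coeff x.2) := by
      rintro ⟨a, b⟩ hx hxne
      have hab : a + b = n := by simpa using hx
      have ha0 : a ≠ 0 := by
        rintro rfl
        have hbn : b = n := by omega
        subst hbn
        exact hxne rfl
      rw [hfb', hvmul]
      rcases lt_or_ge m a with hma | hma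
      · have hz : P₀.coeff a = 0 :=
          coeff_eq_zero_of_natDegree_lt (by rw [hP₀deg]; exact hma)
        rw [hz, (hv0 0).2 rfl, top_add]
        exact hmc_ne.lt_top
      · have h1 : (m - a) • c ≤ v (P₀.coeff a) := by
          have := val_coeff_le v hv0 hvmul hvadd t₀ (fun x hx => (ht₀mem x hx).ge) a
          rwa [← hmdef, ← hP₀] at this
        have h2 : a • c₁ ≤ v (P₁.coeff b) := by
          have := val_coeff_le v hv0 hvmul hvadd t₁ ht₁lb b
          have hcd : Multiset.card t₁ - b = a := by omega
          rwa [hcd, ← hP₁] at this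
        refine lt_of_lt_of_le ?_ (add_le_add h1 h2)
        have hmsplit : m • c = (m - a) • c + a • c := by
          rw [← add_nsmul]
          congr 1
          omega
        rw [hmsplit]
        apply WithTop.add_lt_add_left
        · rw [← hr₀, ← WithTop.coe_nsmul]
          exact WithTop.coe_ne_top
        · rcases eq_or_ne c₁ ⊤ with hT | hT
          · rw [hT, nsmul_top' ha0, ← hr₀, ← WithTop.coe_nsmul]
            exact WithTop.coe_lt_top _
          · obtain ⟨r₁, hr₁⟩ := WithTop.ne_top_iff_exists.mp hT
            have hrr : r₀ < r₁ := by
              rw [← WithTop.coe_lt_coe, hr₀, hr₁]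
              exact hcc₁
            rw [← hr₀, ← hr₁, ← WithTop.coe_nsmul, ← WithTop.coe_nsmul, WithTop.coe_lt_coe]
            simp only [nsmul_eq_mul]
            have hapos : (0 : ℝ) < a := by exact_mod_cast Nat.pos_of_ne_zero ha0
            exact mul_lt_mul_of_pos_left hrr hapos
    have hkey : v (F.coeff n) = m • c := by
      rw [hFP, coeff_mul]
      exact (val_sum_eq v hv0 hvmul hvadd (Finset.HasAntidiagonal.antidiagonal n)
        (fun x => P₀.coeff x.1 * P₁.coeff x.2)
        (b := ((0 : ℕ), n)) (by simp) (by rw [hfb']; exact hmc_ne) hothers).trans hfb'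
    have hvF0 : m • c + (Multiset.card t₁) • c₁ ≤ v (F.coeff 0) := by
      rw [hFs, val_coeff_zero v hv0 hvmul, ← hsplit, Multiset.map_add, Multiset.sum_add]
      refine add_le_add (le_of_eq ?_) (card_nsmul_le_sum_map v t₁ ht₁lb)
      have hrep : t₀.map v = Multiset.replicate m c :=
        Multiset.eq_replicate.mpr ⟨by rw [Multiset.card_map],
          fun b hb => by
            obtain ⟨x, hx, rfl⟩ := Multiset.mem_map.mp hb
            exact ht₀mem x hx⟩
      rw [hrep, Multiset.sum_replicate]
    have hfinal := hnew n (by omega)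
    rw [hNn, hkey] at hfinal
    have hle : m • (m • c + Multiset.card t₁ • c₁) ≤ m • v (F.coeff 0) :=
      nsmul_le_nsmul_right hvF0 m
    have hlt : N • (m • c) < m • (m • c + Multiset.card t₁ • c₁) := by
      rcases eq_or_ne c₁ ⊤ with hT | hT
      · rw [hT, nsmul_top' (by omega : Multiset.card t₁ ≠ 0), add_top,
          nsmul_top' (by omega : m ≠ 0), ← hr₀, ← WithTop.coe_nsmul, ← WithTop.coe_nsmul]
        exact WithTop.coe_lt_top _
      · obtain ⟨r₁, hr₁⟩ := WithTop.ne_top_iff_exists.mp hT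
        have hrr : r₀ < r₁ := by
          rw [← WithTop.coe_lt_coe, hr₀, hr₁]
          exact hcc₁
        rw [← hr₀, ← hr₁, ← WithTop.coe_nsmul, ← WithTop.coe_nsmul, ← WithTop.coe_nsmul,
          ← WithTop.coe_add, ← WithTop.coe_nsmul, WithTop.coe_lt_coe]
        simp only [nsmul_eq_mul]
        have h1 : (1 : ℝ) ≤ (m : ℝ) := by exact_mod_cast hm1
        have h2 : (1 : ℝ) ≤ (Multiset.card t₁ : ℝ) := by exact_mod_cast ht₁card
        have hNc : (N : ℝ) = (m : ℝ) + (Multiset.card t₁ : ℝ) := by exact_mod_cast hcard01.symm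
        rw [hNc]
        nlinarith [mul_pos (mul_pos (lt_of_lt_of_le zero_lt_one h1)
          (lt_of_lt_of_le zero_lt_one h2)) (sub_pos.mpr hrr)]
    exact absurd (lt_of_lt_of_le hlt hle) (not_lt.mpr hfinal)
end

section
/- Let d ≥ 2 and let k : Fin d → Fin d → ℕ be a symmetric weight function (k i j = k j i). In the multivariate polynomial ring ℤ[X₁,…,X_d] set I := ∏_{i<j} (X i − X j)^{2·(k i j)}. Then for every permutation σ of Fin d, the renaming automorphism induced by σ fixes I (i.e., rename σ I = I) if and only if k (σ i) (σ j) = k i j for all i ≠ j. In other words, the stabilizer of the pre-invariant I_{G,k} under the S_d-action equals the automorphism group of the edge-weighted graph (G,k) inside the complete graph K_d. -/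
open Finset MvPolynomial Polynomial

lemma lemA (d : ℕ) (m : Fin d → Fin d → ℕ) (hm : ∀ i j, m i j = m j i)
    (σ : Equiv.Perm (Fin d)) :
    MvPolynomial.rename (σ : Fin d → Fin d)
        (∏ p ∈ univ.filter (fun p : Fin d × Fin d => p.1 < p.2),
          (MvPolynomial.X p.1 - MvPolynomial.X p.2 : MvPolynomial (Fin d) ℤ) ^ (2 * m p.1 p.2))
      = ∏ p ∈ univ.filter (fun p : Fin d × Fin d => p.1 < p.2),
          (MvPolynomial.X p.1 - MvPolynomial.X p.2 : MvPolynomial (Fin d) ℤ)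
            ^ (2 * m (σ⁻¹ p.1) (σ⁻¹ p.2)) := by
  rw [map_prod]
  simp only [map_pow, map_sub, rename_X]
  refine Finset.prod_nbij'
    (fun p => if σ p.1 < σ p.2 then (σ p.1, σ p.2) else (σ p.2, σ p.1))
    (fun p => if σ⁻¹ p.1 < σ⁻¹ p.2 then (σ⁻¹ p.1, σ⁻¹ p.2) else (σ⁻¹ p.2, σ⁻¹ p.1))
    ?_ ?_ ?_ ?_ ?_
  · intro p hp
    simp only [mem_filter, mem_univ, true_and] at hp ⊢
    have hne : σ p.1 ≠ σ p.2 := fun he => hp.ne (σ.injective he)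
    split_ifs with h
    · exact h
    · exact hne.lt_or_gt.resolve_left h
  · intro p hp
    simp only [mem_filter, mem_univ, true_and] at hp ⊢
    have hne : σ⁻¹ p.1 ≠ σ⁻¹ p.2 := fun he => hp.ne (σ⁻¹.injective he)
    split_ifs with h
    · exact h
    · exact hne.lt_or_gt.resolve_left h
  · intro p hp
    simp only [mem_filter, mem_univ, true_and] at hp
    split_ifs with h <;>
      simp_all [Equiv.Perm.coe_inv, Equiv.symm_apply_apply, hp, hp.asymm, not_lt.2 hp.le]
  · intro p hp
    simp only [mem_filter, mem_univ, true_and] at hp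
    split_ifs with h <;>
      simp_all [Equiv.Perm.coe_inv, Equiv.apply_symm_apply, hp, hp.asymm, not_lt.2 hp.le]
  · intro p hp
    simp only [mem_filter, mem_univ, true_and] at hp
    split_ifs with h
    · simp [Equiv.Perm.coe_inv, Equiv.symm_apply_apply]
    · simp only [← Equiv.Perm.mul_apply, inv_mul_cancel, Equiv.Perm.one_apply]
      rw [hm p.2 p.1, show (X (σ p.2) - X (σ p.1) : MvPolynomial (Fin d) ℤ)
          = -(X (σ p.1) - X (σ p.2)) by ring, Even.neg_pow (even_two_mul _)]

lemma keyCount (d : ℕ) (m : Fin d → Fin d → ℕ) (hm : ∀ i j, m i j = m j i)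
    (a b : Fin d) (hab : a ≠ b) :
    Multiset.count ((b : ℤ))
      (Polynomial.roots ((MvPolynomial.aeval
          (fun l : Fin d => if l = a then (Polynomial.X : Polynomial ℤ) else Polynomial.C ((l : ℤ))))
        (∏ p ∈ univ.filter (fun p : Fin d × Fin d => p.1 < p.2),
          (MvPolynomial.X p.1 - MvPolynomial.X p.2 : MvPolynomial (Fin d) ℤ) ^ (m p.1 p.2))))
      = m a b := by
  set f : Fin d → Polynomial ℤ :=
    fun l => if l = a then (Polynomial.X : Polynomial ℤ) else Polynomial.C ((l : ℤ)) with hf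
  have hcoe : Function.Injective (fun l : Fin d => (l : ℤ)) := by
    intro x y h
    exact Fin.val_injective (by simpa using h)
  have hbase : ∀ p : Fin d × Fin d, p.1 ≠ p.2 → f p.1 - f p.2 ≠ 0 := by
    intro p hp
    by_cases h1 : p.1 = a <;> by_cases h2 : p.2 = a
    · exact absurd (h1.trans h2.symm) hp
    · simp only [hf, h1, if_pos rfl, if_neg h2]
      exact X_sub_C_ne_zero _
    · simp only [hf, if_neg h1, h2, if_pos rfl]
      intro h
      exact X_sub_C_ne_zero (p.1 : ℤ) (by linear_combination -h)
    · simp only [hf, if_neg h1, if_neg h2, ← Polynomial.C_sub]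
      rw [Ne, Polynomial.C_eq_zero, sub_eq_zero]
      exact fun h => hp (hcoe h)
  have hroots : ∀ p : Fin d × Fin d, p.1 ≠ p.2 →
      Multiset.count ((b : ℤ)) (f p.1 - f p.2).roots
        = if (p.1 = a ∧ p.2 = b) ∨ (p.2 = a ∧ p.1 = b) then 1 else 0 := by
    intro p hp
    by_cases h1 : p.1 = a <;> by_cases h2 : p.2 = a
    · exact absurd (h1.trans h2.symm) hp
    · simp only [hf, h1, if_pos rfl, if_neg h2, roots_X_sub_C]
      rw [Multiset.count_singleton]
      by_cases hb : p.2 = b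
      · simp [hb, h1]
      · have : ((b : ℤ)) ≠ (p.2 : ℤ) := fun h => hb (hcoe h.symm)
        simp [this, hb, h1, hab, fun h : p.1 = b => hab (h1.symm.trans h)]
    · have : f p.1 - f p.2 = -(Polynomial.X - Polynomial.C ((p.1 : ℤ))) := by
        simp only [hf, if_neg h1, h2, if_pos rfl]; ring
      rw [this, roots_neg, roots_X_sub_C, Multiset.count_singleton]
      by_cases hb : p.1 = b
      · simp [hb, h2]
      · have : ((b : ℤ)) ≠ (p.1 : ℤ) := fun h => hb (hcoe h.symm)
        simp [this, hb, h2, hab, fun h : p.2 = b => hab (h2.symm.trans h)]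
    · simp only [hf, if_neg h1, if_neg h2, ← Polynomial.C_sub]
      rw [Polynomial.roots_C]
      simp [h1, h2]
  -- push the aeval through
  rw [map_prod]
  simp only [map_pow, map_sub, MvPolynomial.aeval_X]
  have hne : ∀ p ∈ univ.filter (fun p : Fin d × Fin d => p.1 < p.2),
      (f p.1 - f p.2) ^ (m p.1 p.2) ≠ 0 := by
    intro p hp
    simp only [mem_filter, mem_univ, true_and] at hp
    exact pow_ne_zero _ (hbase p hp.ne)
  rw [Polynomial.roots_prod _ _ (Finset.prod_ne_zero_iff.2 hne)]
  rw [Multiset.count_bind]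
  show (∑ p ∈ univ.filter (fun p : Fin d × Fin d => p.1 < p.2),
      Multiset.count ((b : ℤ)) ((f p.1 - f p.2) ^ (m p.1 p.2)).roots) = m a b
  have : ∀ p ∈ univ.filter (fun p : Fin d × Fin d => p.1 < p.2),
      Multiset.count ((b : ℤ)) ((f p.1 - f p.2) ^ (m p.1 p.2)).roots
        = m p.1 p.2 * (if (p.1 = a ∧ p.2 = b) ∨ (p.2 = a ∧ p.1 = b) then 1 else 0) := by
    intro p hp
    simp only [mem_filter, mem_univ, true_and] at hp
    rw [Polynomial.roots_pow, Multiset.count_nsmul, hroots p hp.ne]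
  rw [Finset.sum_congr rfl this]
  rcases hab.lt_or_gt with h | h
  · rw [Finset.sum_eq_single_of_mem (a, b) (by simp [h])]
    · simp
    · intro q hq hq'
      simp only [mem_filter, mem_univ, true_and] at hq
      rw [if_neg, mul_zero]
      rintro (⟨rfl, rfl⟩ | ⟨rfl, rfl⟩)
      · exact hq' (Prod.ext rfl rfl)
      · exact absurd h (by simpa using hq.asymm)
  · rw [Finset.sum_eq_single_of_mem (b, a) (by simp [h])]
    · simp [hm a b]
    · intro q hq hq'
      simp only [mem_filter, mem_univ, true_and] at hq
      rw [if_neg, mul_zero]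
      rintro (⟨rfl, rfl⟩ | ⟨rfl, rfl⟩)
      · exact absurd h (by simpa using hq.asymm)
      · exact hq' (Prod.ext rfl rfl)

/-- Let `d ≥ 2` and let `k` be a symmetric weight function on `Fin d`.
In `ℤ[X₁,…,X_d]` set `I = ∏_{i<j} (X i - X j) ^ (2 k i j)`.  For every permutation `σ` of
`Fin d`, the renaming automorphism induced by `σ` fixes `I` if and only if
`k (σ i) (σ j) = k i j` for all `i ≠ j`: the stabilizer of the pre-invariant `I_{G,k}`
under the `S_d`-action is the automorphism group of the edge-weighted graph `(G,k)`. -/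
theorem stabilizer_of_preinvariant_eq_graph_automorphisms
    (d : ℕ) (hd : 2 ≤ d) (k : Fin d → Fin d → ℕ)
    (hk : ∀ i j : Fin d, k i j = k j i)
    (σ : Equiv.Perm (Fin d)) :
    MvPolynomial.rename (σ : Fin d → Fin d)
        (∏ p ∈ univ.filter (fun p : Fin d × Fin d => p.1 < p.2),
          (MvPolynomial.X p.1 - MvPolynomial.X p.2 : MvPolynomial (Fin d) ℤ)
            ^ (2 * k p.1 p.2))
      = ∏ p ∈ univ.filter (fun p : Fin d × Fin d => p.1 < p.2),
          (MvPolynomial.X p.1 - MvPolynomial.X p.2 : MvPolynomial (Fin d) ℤ)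
            ^ (2 * k p.1 p.2)
      ↔ ∀ i j : Fin d, i ≠ j → k (σ i) (σ j) = k i j := by
  constructor
  · intro h i j hij
    have hne : σ i ≠ σ j := fun he => hij (σ.injective he)
    have h' : (∏ p ∈ univ.filter (fun p : Fin d × Fin d => p.1 < p.2),
          (MvPolynomial.X p.1 - MvPolynomial.X p.2 : MvPolynomial (Fin d) ℤ)
            ^ (2 * k (σ⁻¹ p.1) (σ⁻¹ p.2)))
        = ∏ p ∈ univ.filter (fun p : Fin d × Fin d => p.1 < p.2),
          (MvPolynomial.X p.1 - MvPolynomial.X p.2 : MvPolynomial (Fin d) ℤ)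
            ^ (2 * k p.1 p.2) := (lemA d k hk σ).symm.trans h
    have key := congrArg (fun q => Multiset.count ((σ j : ℤ))
      (Polynomial.roots ((MvPolynomial.aeval (fun l : Fin d =>
        if l = σ i then (Polynomial.X : Polynomial ℤ) else Polynomial.C ((l : ℤ)))) q))) h'
    have hL := keyCount d (fun x y => 2 * k (σ⁻¹ x) (σ⁻¹ y))
      (fun x y => by rw [hk]) (σ i) (σ j) hne
    have hR := keyCount d (fun x y => 2 * k x y)
      (fun x y => by rw [hk]) (σ i) (σ j) hne
    simp only [← Equiv.Perm.mul_apply, inv_mul_cancel, Equiv.Perm.one_apply] at hL hR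
    rw [hL, hR] at key
    omega
  · intro h
    rw [lemA d k hk σ]
    refine Finset.prod_congr rfl fun p hp => ?_
    simp only [mem_filter, mem_univ, true_and] at hp
    have hne : σ⁻¹ p.1 ≠ σ⁻¹ p.2 := fun he => hp.ne (σ⁻¹.injective he)
    have := h (σ⁻¹ p.1) (σ⁻¹ p.2) hne
    simp only [← Equiv.Perm.mul_apply, mul_inv_cancel, Equiv.Perm.one_apply] at this
    rw [this]
end
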